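/- arXiv:2209.13708 — 5 statements merged into one kernel-verified Lean document; each statement's English description precedes it below -/
import Mathlib

section
/- In the data-model setting, assume 𝒴(η₀) is integrable. Then E[𝒴(η₀) | G(X) = i, S = 0] = τ_i and E[𝒴(η₀) | G(X) = i] = τ_i · π_g(i). -/
open MeasureTheory ProbabilityTheory Filter Topology

lemma aux_integral_mul_eq {Ω 𝒳 : Type*} [MeasurableSpace Ω] [MeasurableSpace 𝒳]
    (P : Measure Ω) [IsProbabilityMeasure P] (X : Ω → 𝒳) (hX : Measurable X)
    (φ : 𝒳 → ℝ) (hφ : Measurable φ) (c : ℝ) (hφb : ∀ x, ‖φ x‖ ≤ c)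
    (Z : Ω → ℝ) (hZ : Integrable Z P) (q : 𝒳 → ℝ)
    (hq : P[Z | MeasurableSpace.comap X inferInstance] =ᵐ[P] fun ω => q (X ω)) :
    ∫ ω, φ (X ω) * Z ω ∂P = ∫ ω, φ (X ω) * q (X ω) ∂P := by
  set m := MeasurableSpace.comap X inferInstance with hm_def
  have hm : m ≤ _ := hX.comap_le
  have hXm : Measurable[m] X := Measurable.of_comap_le le_rfl
  have hφX : StronglyMeasurable[m] (fun ω => φ (X ω)) := (hφ.comp hXm).stronglyMeasurable
  have hprod : Integrable (fun ω => φ (X ω) * Z ω) P :=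
    hZ.bdd_mul ((hφX.mono hm).aestronglyMeasurable) (Filter.Eventually.of_forall fun ω => hφb _)
  have h1 : P[(fun ω => φ (X ω)) * Z | m] =ᵐ[P] (fun ω => φ (X ω)) * P[Z | m] :=
    condExp_mul_of_stronglyMeasurable_left hφX hprod hZ
  have h2 : ∫ ω, ((fun ω => φ (X ω)) * Z) ω ∂P = ∫ ω, (P[(fun ω => φ (X ω)) * Z | m]) ω ∂P :=
    (integral_condExp hm).symm
  calc ∫ ω, φ (X ω) * Z ω ∂P = ∫ ω, (P[(fun ω => φ (X ω)) * Z | m]) ω ∂P := h2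
    _ = ∫ ω, φ (X ω) * q (X ω) ∂P := by
        refine integral_congr_ae (h1.trans ?_)
        filter_upwards [hq] with ω hω
        simp only [Pi.mul_apply, hω]

/-- Core vanishing lemma for the doubly-robust correction term. -/
lemma aux_zero {Ω 𝒳 : Type*} [MeasurableSpace Ω] [MeasurableSpace 𝒳]
    (P : Measure Ω) [IsProbabilityMeasure P] (X : Ω → 𝒳) (hX : Measurable X)
    (ind Y : Ω → ℝ) (hind : Measurable ind) (hindval : ∀ ω, ind ω = 0 ∨ ind ω = 1)
    (hindY : Integrable (fun ω => ind ω * Y ω) P)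
    (r γ w : 𝒳 → ℝ) (hγ : Measurable γ) (hw : Measurable w)
    (hwnn : ∀ x, 0 ≤ w x)
    (hcond1 : P[ind | MeasurableSpace.comap X inferInstance] =ᵐ[P] fun ω => r (X ω))
    (hcond2 : P[fun ω => ind ω * Y ω | MeasurableSpace.comap X inferInstance] =ᵐ[P]
      fun ω => r (X ω) * γ (X ω))
    (B : Set 𝒳) (hB : MeasurableSet B)
    (C : Ω → ℝ) (hC : ∀ ω, C ω = ind ω * (w (X ω) * (Y ω - γ (X ω))))
    (hCint : Integrable C P) :
    ∫ ω, B.indicator (fun _ => (1:ℝ)) (X ω) * C ω ∂P = 0 := by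
  classical
  have hindint : Integrable ind P := by
    refine (integrable_const (1:ℝ)).mono' hind.aestronglyMeasurable ?_
    refine Filter.Eventually.of_forall fun ω => ?_
    rcases hindval ω with h | h <;> simp [h]
  -- the truncation sets
  set E : ℕ → Set 𝒳 := fun n => {x | w x ≤ (n:ℝ) ∧ |γ x| ≤ (n:ℝ)} with hE
  have hEmeas : ∀ n, MeasurableSet (E n) := fun n =>
    ((hw (measurableSet_Iic)).inter (hγ.abs (measurableSet_Iic)))
  -- truncated integrands
  set f : ℕ → Ω → ℝ := fun n ω =>
    B.indicator (fun _ => (1:ℝ)) (X ω) * (E n).indicator (fun _ => (1:ℝ)) (X ω) * C ω with hf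
  -- each truncated integral vanishes
  have hzero : ∀ n, ∫ ω, f n ω ∂P = 0 := by
    intro n
    set φ : 𝒳 → ℝ := fun x =>
      B.indicator (fun _ => (1:ℝ)) x * (E n).indicator (fun _ => (1:ℝ)) x * w x with hφdef
    have hφm : Measurable φ := by
      exact ((measurable_one.indicator hB).mul (measurable_one.indicator (hEmeas n))).mul hw
    have hφb : ∀ x, ‖φ x‖ ≤ (n:ℝ) := by
      intro x
      rw [Real.norm_eq_abs, hφdef]
      by_cases hx : x ∈ E n
      · by_cases hxB : x ∈ B
        · simp only [Set.indicator_of_mem hx, Set.indicator_of_mem hxB, one_mul]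
          rw [abs_of_nonneg (hwnn x)]
          exact hx.1
        · simp [Set.indicator_of_notMem hxB, Nat.cast_nonneg]
      · simp [Set.indicator_of_notMem hx, Nat.cast_nonneg]
    set ψ : 𝒳 → ℝ := fun x => φ x * γ x with hψdef
    have hψm : Measurable ψ := hφm.mul hγ
    have hψb : ∀ x, ‖ψ x‖ ≤ (n:ℝ) * (n:ℝ) := by
      intro x
      rw [hψdef]
      by_cases hx : x ∈ E n
      · calc ‖φ x * γ x‖ = ‖φ x‖ * ‖γ x‖ := norm_mul _ _
          _ ≤ (n:ℝ) * (n:ℝ) := by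
              refine mul_le_mul (hφb x) ?_ (norm_nonneg _) (Nat.cast_nonneg n)
              rw [Real.norm_eq_abs]; exact hx.2
      · simp only [hφdef, Set.indicator_of_notMem hx, mul_zero, zero_mul, mul_zero,
          norm_zero]
        positivity
    -- rewrite f n pointwise as φ(X)·(ind·Y) − ψ(X)·ind
    have hpt : ∀ ω, f n ω = φ (X ω) * (ind ω * Y ω) - ψ (X ω) * ind ω := by
      intro ω
      simp only [hf, hC, hφdef, hψdef]
      ring
    have hint1 : Integrable (fun ω => φ (X ω) * (ind ω * Y ω)) P :=
      hindY.bdd_mul ((hφm.comp hX).aestronglyMeasurable) (Filter.Eventually.of_forall fun ω => hφb _)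
    have hint2 : Integrable (fun ω => ψ (X ω) * ind ω) P :=
      hindint.bdd_mul ((hψm.comp hX).aestronglyMeasurable) (Filter.Eventually.of_forall fun ω => hψb _)
    have e1 : ∫ ω, φ (X ω) * (ind ω * Y ω) ∂P = ∫ ω, φ (X ω) * (r (X ω) * γ (X ω)) ∂P :=
      aux_integral_mul_eq P X hX φ hφm (n:ℝ) hφb _ hindY (fun x => r x * γ x) hcond2
    have e2 : ∫ ω, ψ (X ω) * ind ω ∂P = ∫ ω, ψ (X ω) * r (X ω) ∂P :=
      aux_integral_mul_eq P X hX ψ hψm ((n:ℝ)*(n:ℝ)) hψb _ hindint r hcond1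
    calc ∫ ω, f n ω ∂P
        = ∫ ω, (φ (X ω) * (ind ω * Y ω) - ψ (X ω) * ind ω) ∂P :=
          integral_congr_ae (Filter.Eventually.of_forall hpt)
      _ = (∫ ω, φ (X ω) * (ind ω * Y ω) ∂P) - ∫ ω, ψ (X ω) * ind ω ∂P :=
          integral_sub hint1 hint2
      _ = 0 := by
          rw [e1, e2]
          rw [sub_eq_zero]
          refine integral_congr_ae (Filter.Eventually.of_forall fun ω => ?_)
          simp only [hψdef]; ring
  -- dominated convergence
  have hmeasf : ∀ n, AEStronglyMeasurable (f n) P := by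
    intro n
    exact ((((measurable_one.indicator hB).comp hX).mul
      ((measurable_one.indicator (hEmeas n)).comp hX)).aestronglyMeasurable).mul hCint.1
  have hbound : ∀ n, ∀ᵐ ω ∂P, ‖f n ω‖ ≤ |C ω| := by
    intro n
    refine Filter.Eventually.of_forall fun ω => ?_
    have h1 : |B.indicator (fun _ => (1:ℝ)) (X ω)| ≤ 1 := by
      by_cases h : X ω ∈ B <;> simp [h]
    have h2 : |(E n).indicator (fun _ => (1:ℝ)) (X ω)| ≤ 1 := by
      by_cases h : X ω ∈ E n <;> simp [h]
    calc ‖f n ω‖ = |B.indicator (fun _ => (1:ℝ)) (X ω)| *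
          |(E n).indicator (fun _ => (1:ℝ)) (X ω)| * |C ω| := by
            simp [hf, abs_mul]
      _ ≤ 1 * 1 * |C ω| := by
          have := mul_le_mul h1 h2 (abs_nonneg _) zero_le_one
          nlinarith [abs_nonneg (C ω)]
      _ = |C ω| := by ring
  have habs : Integrable (fun ω => |C ω|) P := hCint.abs
  have htend : ∀ᵐ ω ∂P, Tendsto (fun n => f n ω) atTop
      (𝓝 (B.indicator (fun _ => (1:ℝ)) (X ω) * C ω)) := by
    refine Filter.Eventually.of_forall fun ω => ?_
    obtain ⟨N, hN⟩ := exists_nat_ge (max (w (X ω)) |γ (X ω)|)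
    refine tendsto_const_nhds.congr' ?_
    filter_upwards [eventually_ge_atTop N] with n hn
    have hmem : X ω ∈ E n := by
      constructor
      · exact le_trans (le_trans (le_max_left _ _) hN) (by exact_mod_cast Nat.cast_le.mpr hn)
      · exact le_trans (le_trans (le_max_right _ _) hN) (by exact_mod_cast Nat.cast_le.mpr hn)
    simp only [hf, Set.indicator_of_mem hmem, mul_one]
  have hlim := tendsto_integral_of_dominated_convergence (fun ω => |C ω|) hmeasf habs hbound htend
  have hlim0 : Tendsto (fun n => ∫ ω, f n ω ∂P) atTop (𝓝 0) := by
    simp only [hzero]; exact tendsto_const_nhds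
  exact tendsto_nhds_unique hlim hlim0

/-- The unweighted transported doubly-robust signal 𝒴(η). -/
noncomputable def transportedSignal {Ω 𝒳 : Type*} (X : Ω → 𝒳) (S A Y : Ω → ℝ)
    (g₁ g₀ e₁ p : 𝒳 → ℝ) (ω : Ω) : ℝ :=
  (1 - S ω) * (g₁ (X ω) - g₀ (X ω)) +
    S ω * ((1 - p (X ω)) / p (X ω)) * (A ω - e₁ (X ω)) *
      (Y ω - (A ω * g₁ (X ω) + (1 - A ω) * g₀ (X ω))) / (e₁ (X ω) * (1 - e₁ (X ω)))

/-- Conditional means of the unweighted oracle signal: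
`E[𝒴(η₀) | G(X) = i, S = 0] = τ_i` and `E[𝒴(η₀) | G(X) = i] = τ_i · π_g(i)`. -/
theorem oracle_signal_conditional_mean
    {Ω : Type*} [MeasurableSpace Ω] (P : Measure Ω) [IsProbabilityMeasure P]
    {𝒳 : Type*} [MeasurableSpace 𝒳]
    (X : Ω → 𝒳) (S A Y : Ω → ℝ)
    (hX : Measurable X) (hS : Measurable S) (hA : Measurable A) (hY : Measurable Y)
    (hSval : ∀ ω, S ω = 0 ∨ S ω = 1) (hAval : ∀ ω, A ω = 0 ∨ A ω = 1)
    (hY2 : MemLp Y 2 P)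
    -- groups
    {d : ℕ} (G : 𝒳 → Fin d) (hG : Measurable G) (i : Fin d)
    (hGi : 0 < P {ω | G (X ω) = i})
    -- true nuisance functions
    (p₀ e₁₀ g₁₀ g₀₀ : 𝒳 → ℝ)
    (hp₀m : Measurable p₀) (he₁₀m : Measurable e₁₀)
    (hg₁₀m : Measurable g₁₀) (hg₀₀m : Measurable g₀₀)
    (hp₀val : ∀ x, p₀ x ∈ Set.Ioc (0 : ℝ) 1) (he₁₀val : ∀ x, e₁₀ x ∈ Set.Ioo (0 : ℝ) 1)
    (hp₀ : P[S | MeasurableSpace.comap X inferInstance] =ᵐ[P] fun ω => p₀ (X ω))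
    (he₁₀ : P[fun ω => S ω * A ω | MeasurableSpace.comap X inferInstance] =ᵐ[P]
      fun ω => p₀ (X ω) * e₁₀ (X ω))
    (hg₁₀ : P[fun ω => (if S ω = 1 ∧ A ω = 1 then (1 : ℝ) else 0) * Y ω |
        MeasurableSpace.comap X inferInstance] =ᵐ[P]
      fun ω => p₀ (X ω) * e₁₀ (X ω) * g₁₀ (X ω))
    (hg₀₀ : P[fun ω => (if S ω = 1 ∧ A ω = 0 then (1 : ℝ) else 0) * Y ω |
        MeasurableSpace.comap X inferInstance] =ᵐ[P]
      fun ω => p₀ (X ω) * (1 - e₁₀ (X ω)) * g₀₀ (X ω))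
    -- π_g(i) > 0 and the target GATE τ_i
    (πg : ℝ) (hπg : πg = (P[|{ω | G (X ω) = i}] {ω | S ω = 0}).toReal) (hπgpos : 0 < πg)
    (τi : ℝ)
    (hτi : τi = ∫ ω, (g₁₀ (X ω) - g₀₀ (X ω)) ∂(P[|{ω | G (X ω) = i ∧ S ω = 0}]))
    -- integrability of the oracle signal
    (hint : Integrable (transportedSignal X S A Y g₁₀ g₀₀ e₁₀ p₀) P) :
    (∫ ω, transportedSignal X S A Y g₁₀ g₀₀ e₁₀ p₀ ω
        ∂(P[|{ω | G (X ω) = i ∧ S ω = 0}]) = τi) ∧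
    (∫ ω, transportedSignal X S A Y g₁₀ g₀₀ e₁₀ p₀ ω
        ∂(P[|{ω | G (X ω) = i}]) = τi * πg) := by
  classical
  -- abbreviations
  have h𝒴 := transportedSignal X S A Y g₁₀ g₀₀ e₁₀ p₀
  set 𝒴 : Ω → ℝ := transportedSignal X S A Y g₁₀ g₀₀ e₁₀ p₀ with h𝒴def
  set B : Set Ω := {ω | G (X ω) = i} with hBdef
  set A₀ : Set Ω := {ω | G (X ω) = i ∧ S ω = 0} with hA₀def
  have hBmeas : MeasurableSet B := (hG.comp hX) (measurableSet_singleton i)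
  have hSmeas : MeasurableSet {ω | S ω = 0} := hS (measurableSet_singleton 0)
  have hA₀eq : A₀ = B ∩ {ω | S ω = 0} := by
    ext ω; simp [hA₀def, hBdef, Set.mem_setOf_eq]
  have hA₀meas : MeasurableSet A₀ := by rw [hA₀eq]; exact hBmeas.inter hSmeas
  -- basic numeric facts
  have hpne : ∀ x, p₀ x ≠ 0 := fun x => ne_of_gt (hp₀val x).1
  have hene : ∀ x, e₁₀ x ≠ 0 := fun x => ne_of_gt (he₁₀val x).1
  have hene' : ∀ x, (1:ℝ) - e₁₀ x ≠ 0 := fun x =>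
    sub_ne_zero.mpr (ne_of_lt (he₁₀val x).2).symm
  -- on {S = 0} the signal equals the regression difference
  have hS0 : ∀ ω, S ω = 0 → 𝒴 ω = g₁₀ (X ω) - g₀₀ (X ω) := by
    intro ω h
    simp [h𝒴def, transportedSignal, h]
  -- Part (a)
  have parta : ∫ ω, 𝒴 ω ∂(P[|A₀]) = τi := by
    rw [hτi]
    refine integral_congr_ae ?_
    rw [ProbabilityTheory.cond]
    refine Measure.ae_smul_measure ?_ _
    refine (ae_restrict_iff' hA₀meas).mpr (Filter.Eventually.of_forall fun ω hω => ?_)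
    exact hS0 ω hω.2
  refine ⟨parta, ?_⟩
  -- Part (b)
  -- measure-theoretic bookkeeping
  have hPBne : P B ≠ 0 := hGi.ne'
  have hπg' : πg = (P B)⁻¹.toReal * (P A₀).toReal := by
    rw [hπg, cond_apply hBmeas, ENNReal.toReal_mul, ← hA₀eq]
  have hPA₀ne : P A₀ ≠ 0 := by
    intro h
    rw [hπg', h] at hπgpos
    simp at hπgpos
  have hPA₀top : P A₀ ≠ ⊤ := measure_ne_top P A₀
  have hPA₀real : (P A₀).toReal ≠ 0 := (ENNReal.toReal_pos hPA₀ne hPA₀top).ne'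
  have condint : ∀ (s : Set Ω) (f : Ω → ℝ),
      ∫ ω, f ω ∂(P[|s]) = (P s)⁻¹.toReal * ∫ ω in s, f ω ∂P := by
    intro s f
    rw [ProbabilityTheory.cond, integral_smul_measure, smul_eq_mul]
  -- measurability of indicators and weights
  have hind11m : Measurable (fun ω => if S ω = 1 ∧ A ω = 1 then (1:ℝ) else 0) := by
    refine Measurable.ite ?_ measurable_const measurable_const
    exact (hS (measurableSet_singleton 1)).inter (hA (measurableSet_singleton 1))
  have hind10m : Measurable (fun ω => if S ω = 1 ∧ A ω = 0 then (1:ℝ) else 0) := by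
    refine Measurable.ite ?_ measurable_const measurable_const
    exact (hS (measurableSet_singleton 1)).inter (hA (measurableSet_singleton 0))
  have hind0m : Measurable (fun ω => if S ω = 0 then (1:ℝ) else 0) :=
    Measurable.ite (hS (measurableSet_singleton 0)) measurable_const measurable_const
  have hw1m : Measurable (fun x => (1 - p₀ x) / (p₀ x * e₁₀ x)) :=
    (measurable_const.sub hp₀m).div (hp₀m.mul he₁₀m)
  have hw0m : Measurable (fun x => (1 - p₀ x) / (p₀ x * (1 - e₁₀ x))) :=
    (measurable_const.sub hp₀m).div (hp₀m.mul (measurable_const.sub he₁₀m))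
  have hw1nn : ∀ x, 0 ≤ (1 - p₀ x) / (p₀ x * e₁₀ x) := fun x =>
    div_nonneg (sub_nonneg.mpr (hp₀val x).2) (le_of_lt (mul_pos (hp₀val x).1 (he₁₀val x).1))
  have hw0nn : ∀ x, 0 ≤ (1 - p₀ x) / (p₀ x * (1 - e₁₀ x)) := fun x =>
    div_nonneg (sub_nonneg.mpr (hp₀val x).2)
      (le_of_lt (mul_pos (hp₀val x).1 (sub_pos.mpr (he₁₀val x).2)))
  -- integrability of the building blocks
  have hYint : Integrable Y P := hY2.integrable one_le_two
  have hind11Y : Integrable (fun ω => (if S ω = 1 ∧ A ω = 1 then (1:ℝ) else 0) * Y ω) P :=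
    hYint.bdd_mul (c := 1) hind11m.aestronglyMeasurable
      (Filter.Eventually.of_forall fun ω => by by_cases h : S ω = 1 ∧ A ω = 1 <;> simp [h])
  have hind10Y : Integrable (fun ω => (if S ω = 1 ∧ A ω = 0 then (1:ℝ) else 0) * Y ω) P :=
    hYint.bdd_mul (c := 1) hind10m.aestronglyMeasurable
      (Filter.Eventually.of_forall fun ω => by by_cases h : S ω = 1 ∧ A ω = 0 <;> simp [h])
  have hSint : Integrable S P := by
    refine (integrable_const (1:ℝ)).mono' hS.aestronglyMeasurable ?_
    refine Filter.Eventually.of_forall fun ω => ?_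
    rcases hSval ω with h | h <;> simp [h]
  have hSAint : Integrable (fun ω => S ω * A ω) P := by
    refine (integrable_const (1:ℝ)).mono' (hS.mul hA).aestronglyMeasurable ?_
    refine Filter.Eventually.of_forall fun ω => ?_
    rcases hSval ω with h | h <;> rcases hAval ω with h' | h' <;> simp [h, h']
  -- conditional expectations of the indicators
  have hSAeq : (fun ω => S ω * A ω) = (fun ω => if S ω = 1 ∧ A ω = 1 then (1:ℝ) else 0) := by
    funext ω
    rcases hSval ω with hs | hs <;> rcases hAval ω with ha | ha <;> simp [hs, ha]
  have hcond11 : P[(fun ω => if S ω = 1 ∧ A ω = 1 then (1:ℝ) else 0) |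
      MeasurableSpace.comap X inferInstance] =ᵐ[P] fun ω => p₀ (X ω) * e₁₀ (X ω) := by
    rw [← hSAeq]; exact he₁₀
  have hind10eq : (fun ω => S ω - S ω * A ω)
      = (fun ω => if S ω = 1 ∧ A ω = 0 then (1:ℝ) else 0) := by
    funext ω
    rcases hSval ω with hs | hs <;> rcases hAval ω with ha | ha <;> simp [hs, ha]
  have hcond10 : P[(fun ω => if S ω = 1 ∧ A ω = 0 then (1:ℝ) else 0) |
      MeasurableSpace.comap X inferInstance] =ᵐ[P]
      fun ω => p₀ (X ω) * (1 - e₁₀ (X ω)) := by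
    rw [← hind10eq]
    have h1 : P[(S - fun ω => S ω * A ω) | MeasurableSpace.comap X inferInstance] =ᵐ[P]
        P[S | MeasurableSpace.comap X inferInstance]
        - P[(fun ω => S ω * A ω) | MeasurableSpace.comap X inferInstance] :=
      condExp_sub hSint hSAint _
    have h2 : P[(fun ω => S ω - S ω * A ω) | MeasurableSpace.comap X inferInstance] =ᵐ[P]
        P[S | MeasurableSpace.comap X inferInstance]
        - P[(fun ω => S ω * A ω) | MeasurableSpace.comap X inferInstance] := h1
    refine h2.trans ?_
    filter_upwards [hp₀, he₁₀] with ω hω1 hω2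
    simp only [Pi.sub_apply, hω1, hω2]
    ring
  -- the pointwise decomposition of the signal
  have key : ∀ ω, 𝒴 ω =
      (if S ω = 0 then (1:ℝ) else 0) * (g₁₀ (X ω) - g₀₀ (X ω))
      + (if S ω = 1 ∧ A ω = 1 then (1:ℝ) else 0) *
          ((1 - p₀ (X ω)) / (p₀ (X ω) * e₁₀ (X ω)) * (Y ω - g₁₀ (X ω)))
      - (if S ω = 1 ∧ A ω = 0 then (1:ℝ) else 0) *
          ((1 - p₀ (X ω)) / (p₀ (X ω) * (1 - e₁₀ (X ω))) * (Y ω - g₀₀ (X ω))) := by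
    intro ω
    have h1 := hpne (X ω)
    have h2 := hene (X ω)
    have h3 := hene' (X ω)
    rcases hSval ω with hs | hs <;> rcases hAval ω with ha | ha <;>
      simp only [h𝒴def, transportedSignal, hs, ha] <;> norm_num <;>
      (try field_simp) <;> (try ring)
  -- integrability of the three pieces
  have hT0int : Integrable
      (fun ω => (if S ω = 0 then (1:ℝ) else 0) * (g₁₀ (X ω) - g₀₀ (X ω))) P := by
    have h : Integrable (fun ω => (if S ω = 0 then (1:ℝ) else 0) * 𝒴 ω) P :=
      hint.bdd_mul (c := 1) hind0m.aestronglyMeasurable (Filter.Eventually.of_forall fun ω => by by_cases h : S ω = 0 <;> simp [h])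
    refine h.congr (Filter.Eventually.of_forall fun ω => ?_)
    by_cases hs : S ω = 0
    · simp [hs, hS0 ω hs]
    · simp [hs]
  have hC1int : Integrable (fun ω => (if S ω = 1 ∧ A ω = 1 then (1:ℝ) else 0) *
      ((1 - p₀ (X ω)) / (p₀ (X ω) * e₁₀ (X ω)) * (Y ω - g₁₀ (X ω)))) P := by
    have h : Integrable (fun ω => (if S ω = 1 ∧ A ω = 1 then (1:ℝ) else 0) * 𝒴 ω) P :=
      hint.bdd_mul (c := 1) hind11m.aestronglyMeasurable (Filter.Eventually.of_forall fun ω => by by_cases h : S ω = 1 ∧ A ω = 1 <;> simp [h])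
    refine h.congr (Filter.Eventually.of_forall fun ω => ?_)
    rcases hSval ω with hs | hs <;> rcases hAval ω with ha | ha <;> simp [key, hs, ha]
  have hC2int : Integrable (fun ω => (if S ω = 1 ∧ A ω = 0 then (1:ℝ) else 0) *
      ((1 - p₀ (X ω)) / (p₀ (X ω) * (1 - e₁₀ (X ω))) * (Y ω - g₀₀ (X ω)))) P := by
    have h : Integrable (fun ω => (if S ω = 1 ∧ A ω = 0 then (1:ℝ) else 0) * 𝒴 ω) P :=
      hint.bdd_mul (c := 1) hind10m.aestronglyMeasurable (Filter.Eventually.of_forall fun ω => by by_cases h : S ω = 1 ∧ A ω = 0 <;> simp [h])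
    refine (h.neg.congr (Filter.Eventually.of_forall fun ω => ?_))
    rcases hSval ω with hs | hs <;> rcases hAval ω with ha | ha <;> simp [key, hs, ha]
  -- split the set integral over B
  have hsplit : ∫ ω in B, 𝒴 ω ∂P =
      (∫ ω in B, (if S ω = 0 then (1:ℝ) else 0) * (g₁₀ (X ω) - g₀₀ (X ω)) ∂P)
      + (∫ ω in B, (if S ω = 1 ∧ A ω = 1 then (1:ℝ) else 0) *
          ((1 - p₀ (X ω)) / (p₀ (X ω) * e₁₀ (X ω)) * (Y ω - g₁₀ (X ω))) ∂P)
      - ∫ ω in B, (if S ω = 1 ∧ A ω = 0 then (1:ℝ) else 0) *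
          ((1 - p₀ (X ω)) / (p₀ (X ω) * (1 - e₁₀ (X ω))) * (Y ω - g₀₀ (X ω))) ∂P := by
    have hTC1int : Integrable (fun ω => (if S ω = 0 then (1:ℝ) else 0) * (g₁₀ (X ω) - g₀₀ (X ω))
        + (if S ω = 1 ∧ A ω = 1 then (1:ℝ) else 0) *
          ((1 - p₀ (X ω)) / (p₀ (X ω) * e₁₀ (X ω)) * (Y ω - g₁₀ (X ω)))) (P.restrict B) :=
      hT0int.integrableOn.add hC1int.integrableOn
    rw [integral_congr_ae (Filter.Eventually.of_forall fun ω => key ω),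
      integral_sub hTC1int hC2int.integrableOn,
      integral_add hT0int.integrableOn hC1int.integrableOn]
  -- the regression part collapses onto A₀
  have hT0B : ∫ ω in B, (if S ω = 0 then (1:ℝ) else 0) * (g₁₀ (X ω) - g₀₀ (X ω)) ∂P
      = ∫ ω in A₀, (g₁₀ (X ω) - g₀₀ (X ω)) ∂P := by
    rw [← integral_indicator hBmeas, ← integral_indicator hA₀meas]
    refine integral_congr_ae (Filter.Eventually.of_forall fun ω => ?_)
    by_cases hg : G (X ω) = i
    · by_cases hs : S ω = 0
      · simp only [Set.indicator_of_mem (show ω ∈ B from hg),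
          Set.indicator_of_mem (show ω ∈ A₀ from ⟨hg, hs⟩), if_pos hs, one_mul]
      · simp only [Set.indicator_of_mem (show ω ∈ B from hg),
          Set.indicator_of_notMem (show ω ∉ A₀ from fun hc => hs hc.2), if_neg hs, zero_mul]
    · simp only [Set.indicator_of_notMem (show ω ∉ B from hg),
        Set.indicator_of_notMem (show ω ∉ A₀ from fun hc => hg hc.1)]
  -- the correction parts vanish
  have hzeroC1 := aux_zero P X hX (fun ω => if S ω = 1 ∧ A ω = 1 then (1:ℝ) else 0) Y
    hind11m (fun ω => by by_cases h : S ω = 1 ∧ A ω = 1 <;> simp [h]) hind11Y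
    (fun x => p₀ x * e₁₀ x) g₁₀ (fun x => (1 - p₀ x) / (p₀ x * e₁₀ x))
    hg₁₀m hw1m hw1nn hcond11 hg₁₀ (G ⁻¹' {i}) (hG (measurableSet_singleton i))
    (fun ω => (if S ω = 1 ∧ A ω = 1 then (1:ℝ) else 0) *
      ((1 - p₀ (X ω)) / (p₀ (X ω) * e₁₀ (X ω)) * (Y ω - g₁₀ (X ω))))
    (fun ω => rfl) hC1int
  have hzeroC2 := aux_zero P X hX (fun ω => if S ω = 1 ∧ A ω = 0 then (1:ℝ) else 0) Y
    hind10m (fun ω => by by_cases h : S ω = 1 ∧ A ω = 0 <;> simp [h]) hind10Y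
    (fun x => p₀ x * (1 - e₁₀ x)) g₀₀ (fun x => (1 - p₀ x) / (p₀ x * (1 - e₁₀ x)))
    hg₀₀m hw0m hw0nn hcond10 hg₀₀ (G ⁻¹' {i}) (hG (measurableSet_singleton i))
    (fun ω => (if S ω = 1 ∧ A ω = 0 then (1:ℝ) else 0) *
      ((1 - p₀ (X ω)) / (p₀ (X ω) * (1 - e₁₀ (X ω))) * (Y ω - g₀₀ (X ω))))
    (fun ω => rfl) hC2int
  have hindB : ∀ (C : Ω → ℝ),
      (∫ ω, (G ⁻¹' {i}).indicator (fun _ => (1:ℝ)) (X ω) * C ω ∂P = 0) →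
      ∫ ω in B, C ω ∂P = 0 := by
    intro C hC0
    rw [← integral_indicator hBmeas, ← hC0]
    refine integral_congr_ae (Filter.Eventually.of_forall fun ω => ?_)
    by_cases hg : G (X ω) = i
    · simp only [Set.indicator_of_mem (show ω ∈ B from hg),
        Set.indicator_of_mem (show X ω ∈ G ⁻¹' {i} from hg), one_mul]
    · simp only [Set.indicator_of_notMem (show ω ∉ B from hg),
        Set.indicator_of_notMem (show X ω ∉ G ⁻¹' {i} from hg), zero_mul]
  have hC1B := hindB _ hzeroC1
  have hC2B := hindB _ hzeroC2
  -- assemble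
  have hBint : ∫ ω in B, 𝒴 ω ∂P = ∫ ω in A₀, (g₁₀ (X ω) - g₀₀ (X ω)) ∂P := by
    rw [hsplit, hC1B, hC2B, hT0B]; ring
  have hc : (P A₀)⁻¹.toReal * (P A₀).toReal = 1 := by
    rw [ENNReal.toReal_inv]; exact inv_mul_cancel₀ hPA₀real
  calc ∫ ω, 𝒴 ω ∂(P[|B]) = (P B)⁻¹.toReal * ∫ ω in B, 𝒴 ω ∂P := condint B 𝒴
    _ = (P B)⁻¹.toReal * ∫ ω in A₀, (g₁₀ (X ω) - g₀₀ (X ω)) ∂P := by rw [hBint]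
    _ = τi * πg := by
        rw [hτi, condint, hπg']
        calc (P B)⁻¹.toReal * ∫ ω in A₀, (g₁₀ (X ω) - g₀₀ (X ω)) ∂P
            = ((P A₀)⁻¹.toReal * (P A₀).toReal) *
              ((P B)⁻¹.toReal * ∫ ω in A₀, (g₁₀ (X ω) - g₀₀ (X ω)) ∂P) := by
                rw [hc, one_mul]
          _ = ((P A₀)⁻¹.toReal * ∫ ω in A₀, (g₁₀ (X ω) - g₀₀ (X ω)) ∂P) *
              ((P B)⁻¹.toReal * (P A₀).toReal) := by ring
end

section
/- In the data-model setting, assume 𝒴(η₀) is square-integrable and let σ_i² := Var(𝒴(η₀) | G(X) = i). Then E[1{G(X) = i}·(𝒴(η₀) − τ_i·1{S = 0})] = 0 and E[(1{G(X) = i}·(𝒴(η₀) − τ_i·1{S = 0}))²] = (σ_i² − τ_i²·π_g(i)·(1 − π_g(i)))·P(G(X) = i). -/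
open MeasureTheory ProbabilityTheory Filter Topology

/-- Pull-out property for set integrals: for a bounded `m`-measurable factor `φ`,
an integrable `W` with `P[W|m] =ᵐ V`, and an `m`-measurable set `s`,
`∫_s φ·W = ∫_s φ·V`. -/
lemma setIntegral_mul_condexp_eq {Ω : Type*} {m m0 : MeasurableSpace Ω} (hm : m ≤ m0)
    (P : Measure Ω) [IsProbabilityMeasure P] {φ W V : Ω → ℝ}
    (hφ : StronglyMeasurable[m] φ) (hφb : ∃ C, ∀ ω, ‖φ ω‖ ≤ C)
    (hW : Integrable W P) (hV : P[W|m] =ᵐ[P] V) {s : Set Ω} (hs : MeasurableSet[m] s) :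
    ∫ ω in s, φ ω * W ω ∂P = ∫ ω in s, φ ω * V ω ∂P := by
  have hφm0 : AEStronglyMeasurable φ P := (hφ.mono hm).aestronglyMeasurable
  have hint : Integrable (φ * W) P := hW.bdd_mul hφm0 (ae_of_all _ hφb.choose_spec)
  have h1 : ∫ ω in s, φ ω * W ω ∂P = ∫ ω in s, (P[φ * W|m]) ω ∂P :=
    (setIntegral_condExp hm hint hs).symm
  have h2 : P[φ * W|m] =ᵐ[P] fun ω => φ ω * V ω := by
    refine (condExp_mul_of_stronglyMeasurable_left hφ hint hW).trans ?_
    filter_upwards [hV] with ω hω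
    simp [hω]
  rw [h1, setIntegral_congr_ae (hm s hs) (h2.mono fun ω hω _ => hω)]

private lemma auxField1 (psR I c : ℝ) (hne : psR ≠ 0) :
    I = (psR⁻¹ * I - (psR⁻¹ * c) ^ 2) * psR + c ^ 2 / psR := by
  field_simp
  ring

private lemma auxField2 (σ τ π R : ℝ) (hR : R ≠ 0) :
    σ * R + (τ * (π * R)) ^ 2 / R - 2 * τ * (τ * (π * R)) + τ ^ 2 * (π * R)
      = (σ - τ ^ 2 * π * (1 - π)) * R := by
  field_simp
  ring



/-- The centered indicator-weighted oracle signal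
`1{G(X)=i}·(𝒴(η₀) − τ_i·1{S=0})` has mean zero and second moment
`(σ_i² − τ_i²·π_g(i)·(1 − π_g(i)))·P(G(X) = i)`. -/
theorem centered_oracle_signal_moments
    {Ω : Type*} [MeasurableSpace Ω] (P : Measure Ω) [IsProbabilityMeasure P]
    {𝒳 : Type*} [MeasurableSpace 𝒳]
    (X : Ω → 𝒳) (S A Y : Ω → ℝ)
    (hX : Measurable X) (hS : Measurable S) (hA : Measurable A) (hY : Measurable Y)
    (hSval : ∀ ω, S ω = 0 ∨ S ω = 1) (hAval : ∀ ω, A ω = 0 ∨ A ω = 1)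
    (hY2 : MemLp Y 2 P)
    -- groups
    {d : ℕ} (G : 𝒳 → Fin d) (hG : Measurable G) (i : Fin d)
    (hGi : 0 < P {ω | G (X ω) = i})
    -- true nuisance functions
    (p₀ e₁₀ g₁₀ g₀₀ : 𝒳 → ℝ)
    (hp₀m : Measurable p₀) (he₁₀m : Measurable e₁₀)
    (hg₁₀m : Measurable g₁₀) (hg₀₀m : Measurable g₀₀)
    (hp₀val : ∀ x, p₀ x ∈ Set.Ioc (0 : ℝ) 1) (he₁₀val : ∀ x, e₁₀ x ∈ Set.Ioo (0 : ℝ) 1)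
    (hp₀ : P[S | MeasurableSpace.comap X inferInstance] =ᵐ[P] fun ω => p₀ (X ω))
    (he₁₀ : P[fun ω => S ω * A ω | MeasurableSpace.comap X inferInstance] =ᵐ[P]
      fun ω => p₀ (X ω) * e₁₀ (X ω))
    (hg₁₀ : P[fun ω => (if S ω = 1 ∧ A ω = 1 then (1 : ℝ) else 0) * Y ω |
        MeasurableSpace.comap X inferInstance] =ᵐ[P]
      fun ω => p₀ (X ω) * e₁₀ (X ω) * g₁₀ (X ω))
    (hg₀₀ : P[fun ω => (if S ω = 1 ∧ A ω = 0 then (1 : ℝ) else 0) * Y ω |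
        MeasurableSpace.comap X inferInstance] =ᵐ[P]
      fun ω => p₀ (X ω) * (1 - e₁₀ (X ω)) * g₀₀ (X ω))
    -- π_g(i) > 0 and the target GATE τ_i
    (πg : ℝ) (hπg : πg = (P[|{ω | G (X ω) = i}] {ω | S ω = 0}).toReal) (hπgpos : 0 < πg)
    (τi : ℝ)
    (hτi : τi = ∫ ω, (g₁₀ (X ω) - g₀₀ (X ω)) ∂(P[|{ω | G (X ω) = i ∧ S ω = 0}]))
    -- square-integrability of the oracle signal, and its conditional variance σ_i²
    (hmem2 : MemLp (transportedSignal X S A Y g₁₀ g₀₀ e₁₀ p₀) 2 P)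
    (σi2 : ℝ)
    (hσi2 : σi2 = variance (transportedSignal X S A Y g₁₀ g₀₀ e₁₀ p₀)
      (P[|{ω | G (X ω) = i}])) :
    (∫ ω, (if G (X ω) = i then (1 : ℝ) else 0) *
        (transportedSignal X S A Y g₁₀ g₀₀ e₁₀ p₀ ω -
          τi * (if S ω = 0 then (1 : ℝ) else 0)) ∂P = 0) ∧
    (∫ ω, ((if G (X ω) = i then (1 : ℝ) else 0) *
        (transportedSignal X S A Y g₁₀ g₀₀ e₁₀ p₀ ω -
          τi * (if S ω = 0 then (1 : ℝ) else 0))) ^ 2 ∂P =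
      (σi2 - τi ^ 2 * πg * (1 - πg)) * (P {ω | G (X ω) = i}).toReal) := by
  classical
  set 𝒴 := transportedSignal X S A Y g₁₀ g₀₀ e₁₀ p₀ with h𝒴def
  have hm := hX.comap_le
  -- the group set
  set s : Set Ω := {ω | G (X ω) = i} with hsdef
  have hs_m : MeasurableSet[MeasurableSpace.comap X inferInstance] s :=
    ⟨G ⁻¹' {i}, hG (measurableSet_singleton i), rfl⟩
  have hs : MeasurableSet s := hm s hs_m
  set T : Set Ω := {ω | S ω = 0} with hTdef
  have hT : MeasurableSet T := hS (measurableSet_singleton 0)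
  set t : Set Ω := s ∩ T with htdef
  have ht : MeasurableSet t := hs.inter hT
  -- basic integrabilities
  have hYint : Integrable Y P := hY2.integrable one_le_two
  have h𝒴int : Integrable 𝒴 P := hmem2.integrable one_le_two
  have h𝒴sq : Integrable (fun ω => 𝒴 ω ^ 2) P := hmem2.integrable_sq
  have h𝒴m : AEStronglyMeasurable 𝒴 P := hmem2.aestronglyMeasurable
  have hSbd : ∀ ω, ‖S ω‖ ≤ 1 := by
    intro ω; rcases hSval ω with h | h <;> simp [h]
  have hAbd : ∀ ω, ‖A ω‖ ≤ 1 := by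
    intro ω; rcases hAval ω with h | h <;> simp [h]
  have hSint : Integrable S P :=
    (integrable_const (1 : ℝ)).mono' hS.aestronglyMeasurable (ae_of_all _ hSbd)
  have hSAint : Integrable (fun ω => S ω * A ω) P :=
    (integrable_const (1 : ℝ)).mono' (hS.mul hA).aestronglyMeasurable
      (ae_of_all _ fun ω => by
        calc ‖S ω * A ω‖ = ‖S ω‖ * ‖A ω‖ := norm_mul _ _
          _ ≤ 1 * 1 := mul_le_mul (hSbd ω) (hAbd ω) (norm_nonneg _) zero_le_one
          _ = 1 := by ring)
  have hS𝒴int : Integrable (fun ω => S ω * 𝒴 ω) P :=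
    h𝒴int.bdd_mul hS.aestronglyMeasurable (ae_of_all _ hSbd)
  -- measurability of the indicators Z₁, Z₀
  have hZ₁m : Measurable (fun ω => if S ω = 1 ∧ A ω = 1 then (1 : ℝ) else 0) := by
    refine Measurable.ite ?_ measurable_const measurable_const
    exact (hS (measurableSet_singleton 1)).inter (hA (measurableSet_singleton 1))
  have hZ₀m : Measurable (fun ω => if S ω = 1 ∧ A ω = 0 then (1 : ℝ) else 0) := by
    refine Measurable.ite ?_ measurable_const measurable_const
    exact (hS (measurableSet_singleton 1)).inter (hA (measurableSet_singleton 0))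
  have hZ₁bd : ∀ ω, ‖(if S ω = 1 ∧ A ω = 1 then (1 : ℝ) else 0)‖ ≤ 1 := by
    intro ω; split <;> simp
  have hZ₀bd : ∀ ω, ‖(if S ω = 1 ∧ A ω = 0 then (1 : ℝ) else 0)‖ ≤ 1 := by
    intro ω; split <;> simp
  have hZ₁Yint : Integrable (fun ω => (if S ω = 1 ∧ A ω = 1 then (1 : ℝ) else 0) * Y ω) P :=
    hYint.bdd_mul hZ₁m.aestronglyMeasurable (ae_of_all _ hZ₁bd)
  have hZ₀Yint : Integrable (fun ω => (if S ω = 1 ∧ A ω = 0 then (1 : ℝ) else 0) * Y ω) P :=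
    hYint.bdd_mul hZ₀m.aestronglyMeasurable (ae_of_all _ hZ₀bd)
  have hZ₁int : Integrable (fun ω => if S ω = 1 ∧ A ω = 1 then (1 : ℝ) else 0) P :=
    (integrable_const (1 : ℝ)).mono' hZ₁m.aestronglyMeasurable (ae_of_all _ hZ₁bd)
  have hZ₀int : Integrable (fun ω => if S ω = 1 ∧ A ω = 0 then (1 : ℝ) else 0) P :=
    (integrable_const (1 : ℝ)).mono' hZ₀m.aestronglyMeasurable (ae_of_all _ hZ₀bd)
  -- conditional expectations of Z₁ and Z₀
  have hF2 : P[fun ω => if S ω = 1 ∧ A ω = 1 then (1 : ℝ) else 0 |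
      MeasurableSpace.comap X inferInstance] =ᵐ[P] fun ω => p₀ (X ω) * e₁₀ (X ω) := by
    have hfun : (fun ω => if S ω = 1 ∧ A ω = 1 then (1 : ℝ) else 0) = fun ω => S ω * A ω :=
      funext fun ω => by rcases hSval ω with h | h <;> rcases hAval ω with h' | h' <;>
        simp [h, h']
    rw [hfun]; exact he₁₀
  have hF4 : P[fun ω => if S ω = 1 ∧ A ω = 0 then (1 : ℝ) else 0 |
      MeasurableSpace.comap X inferInstance] =ᵐ[P]
      fun ω => p₀ (X ω) * (1 - e₁₀ (X ω)) := by
    have hfun : (fun ω => if S ω = 1 ∧ A ω = 0 then (1 : ℝ) else 0)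
        = S - fun ω => S ω * A ω := funext fun ω => by
      rcases hSval ω with h | h <;> rcases hAval ω with h' | h' <;>
        simp [h, h']
    rw [hfun]
    refine (condExp_sub hSint hSAint _).trans ?_
    filter_upwards [hp₀, he₁₀] with ω h1 h2
    simp only [Pi.sub_apply, h1, h2]
    ring
  -- the measurable nuisance ratios
  set k₁ : 𝒳 → ℝ := fun x => (1 - p₀ x) / p₀ x / e₁₀ x with hk₁def
  set k₀ : 𝒳 → ℝ := fun x => (1 - p₀ x) / p₀ x / (1 - e₁₀ x) with hk₀def
  have hk₁m : Measurable k₁ := ((measurable_const.sub hp₀m).div hp₀m).div he₁₀m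
  have hk₀m : Measurable k₀ :=
    ((measurable_const.sub hp₀m).div hp₀m).div (measurable_const.sub he₁₀m)
  -- the core pointwise decomposition of S·𝒴
  have hcore : ∀ ω, S ω * 𝒴 ω =
      k₁ (X ω) * ((if S ω = 1 ∧ A ω = 1 then (1 : ℝ) else 0) * Y ω)
      - (k₁ (X ω) * g₁₀ (X ω)) * (if S ω = 1 ∧ A ω = 1 then (1 : ℝ) else 0)
      - k₀ (X ω) * ((if S ω = 1 ∧ A ω = 0 then (1 : ℝ) else 0) * Y ω)
      + (k₀ (X ω) * g₀₀ (X ω)) * (if S ω = 1 ∧ A ω = 0 then (1 : ℝ) else 0) := by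
    intro ω
    have hp := hp₀val (X ω)
    have he := he₁₀val (X ω)
    have h1 : e₁₀ (X ω) ≠ 0 := ne_of_gt he.1
    have h2 : (1 : ℝ) - e₁₀ (X ω) ≠ 0 := ne_of_gt (by linarith [he.2])
    have h3 : p₀ (X ω) ≠ 0 := ne_of_gt hp.1
    rcases hSval ω with h | h <;> rcases hAval ω with h' | h' <;>
      simp only [h𝒴def, transportedSignal, hk₁def, hk₀def, h, h', one_ne_zero, zero_ne_one,
        and_true, and_false, true_and, false_and, if_true, if_false, if_pos, and_self] <;>
      [skip; skip; skip; skip] <;> field_simp <;> ring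
  -- truncation sets
  set B : ℕ → Set 𝒳 := fun n =>
    {x | |k₁ x| ≤ n ∧ |k₁ x * g₁₀ x| ≤ n ∧ |k₀ x| ≤ n ∧ |k₀ x * g₀₀ x| ≤ n} with hBdef
  have hBmeas : ∀ n, MeasurableSet (B n) := by
    intro n
    exact (((measurableSet_le hk₁m.abs measurable_const).inter
      (measurableSet_le (hk₁m.mul hg₁₀m).abs measurable_const)).inter
      ((measurableSet_le hk₀m.abs measurable_const).inter
      (measurableSet_le (hk₀m.mul hg₀₀m).abs measurable_const))).congr (by
        ext x; simp [hBdef]; tauto)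
  set χ : ℕ → 𝒳 → ℝ := fun n => (B n).indicator (fun _ => (1 : ℝ)) with hχdef
  have hχm : ∀ n, Measurable (χ n) := fun n => measurable_const.indicator (hBmeas n)
  have hχbd : ∀ n x, ‖χ n x‖ ≤ 1 := by
    intro n x
    by_cases hx : x ∈ B n <;> simp [hχdef, Set.indicator_apply, hx]
  have hχval : ∀ n x, x ∈ B n → χ n x = 1 := by
    intro n x hx; simp [hχdef, Set.indicator_apply, hx]
  -- X is measurable w.r.t. the comap σ-algebra
  have hXm : Measurable[MeasurableSpace.comap X inferInstance] X := fun u hu => ⟨u, hu, rfl⟩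
  -- key fact: ∫_s S·𝒴 = 0
  have key : ∫ ω in s, S ω * 𝒴 ω ∂P = 0 := by
    have hzero : ∀ n, ∫ ω in s, χ n (X ω) * (S ω * 𝒴 ω) ∂P = 0 := by
      intro n
      -- bounded m-measurable multipliers
      have hψm : ∀ (k : 𝒳 → ℝ), Measurable k →
          StronglyMeasurable[MeasurableSpace.comap X inferInstance]
            (fun ω => (χ n (X ω)) * k (X ω)) := by
        intro k hk
        exact (Measurable.stronglyMeasurable (((hχm n).comp hXm).mul (hk.comp hXm)))
      have hψbd : ∀ (k : 𝒳 → ℝ), (∀ x, x ∈ B n → |k x| ≤ n) →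
          ∃ C, ∀ ω, ‖χ n (X ω) * k (X ω)‖ ≤ C := by
        intro k hkb
        refine ⟨n, fun ω => ?_⟩
        by_cases hx : X ω ∈ B n
        · rw [hχval n _ hx, one_mul]
          exact hkb _ hx
        · simp [hχdef, Set.indicator_apply, hx, Nat.cast_nonneg]
      -- the four pieces
      have e1 : ∫ ω in s, (χ n (X ω) * k₁ (X ω)) *
            ((if S ω = 1 ∧ A ω = 1 then (1 : ℝ) else 0) * Y ω) ∂P
          = ∫ ω in s, (χ n (X ω) * k₁ (X ω)) *
            (p₀ (X ω) * e₁₀ (X ω) * g₁₀ (X ω)) ∂P :=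
        setIntegral_mul_condexp_eq hm P (hψm k₁ hk₁m) (hψbd k₁ fun x hx => hx.1)
          hZ₁Yint hg₁₀ hs_m
      have e2 : ∫ ω in s, (χ n (X ω) * (k₁ (X ω) * g₁₀ (X ω))) *
            (if S ω = 1 ∧ A ω = 1 then (1 : ℝ) else 0) ∂P
          = ∫ ω in s, (χ n (X ω) * (k₁ (X ω) * g₁₀ (X ω))) *
            (p₀ (X ω) * e₁₀ (X ω)) ∂P :=
        setIntegral_mul_condexp_eq hm P (hψm _ (hk₁m.mul hg₁₀m))
          (hψbd _ fun x hx => hx.2.1) hZ₁int hF2 hs_m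
      have e3 : ∫ ω in s, (χ n (X ω) * k₀ (X ω)) *
            ((if S ω = 1 ∧ A ω = 0 then (1 : ℝ) else 0) * Y ω) ∂P
          = ∫ ω in s, (χ n (X ω) * k₀ (X ω)) *
            (p₀ (X ω) * (1 - e₁₀ (X ω)) * g₀₀ (X ω)) ∂P :=
        setIntegral_mul_condexp_eq hm P (hψm k₀ hk₀m) (hψbd k₀ fun x hx => hx.2.2.1)
          hZ₀Yint hg₀₀ hs_m
      have e4 : ∫ ω in s, (χ n (X ω) * (k₀ (X ω) * g₀₀ (X ω))) *
            (if S ω = 1 ∧ A ω = 0 then (1 : ℝ) else 0) ∂P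
          = ∫ ω in s, (χ n (X ω) * (k₀ (X ω) * g₀₀ (X ω))) *
            (p₀ (X ω) * (1 - e₁₀ (X ω))) ∂P :=
        setIntegral_mul_condexp_eq hm P (hψm _ (hk₀m.mul hg₀₀m))
          (hψbd _ fun x hx => hx.2.2.2) hZ₀int hF4 hs_m
      -- integrability of the four pieces (restricted)
      have hi1 : Integrable (fun ω => (χ n (X ω) * k₁ (X ω)) *
          ((if S ω = 1 ∧ A ω = 1 then (1 : ℝ) else 0) * Y ω)) P :=
        hZ₁Yint.bdd_mul (((hχm n).comp hX).mul (hk₁m.comp hX)).aestronglyMeasurable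
          (ae_of_all _ (hψbd k₁ fun x hx => hx.1).choose_spec)
      have hi2 : Integrable (fun ω => (χ n (X ω) * (k₁ (X ω) * g₁₀ (X ω))) *
          (if S ω = 1 ∧ A ω = 1 then (1 : ℝ) else 0)) P :=
        hZ₁int.bdd_mul (((hχm n).comp hX).mul
          ((hk₁m.mul hg₁₀m).comp hX)).aestronglyMeasurable (ae_of_all _ (hψbd _ fun x hx => hx.2.1).choose_spec)
      have hi3 : Integrable (fun ω => (χ n (X ω) * k₀ (X ω)) *
          ((if S ω = 1 ∧ A ω = 0 then (1 : ℝ) else 0) * Y ω)) P :=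
        hZ₀Yint.bdd_mul (((hχm n).comp hX).mul (hk₀m.comp hX)).aestronglyMeasurable
          (ae_of_all _ (hψbd k₀ fun x hx => hx.2.2.1).choose_spec)
      have hi4 : Integrable (fun ω => (χ n (X ω) * (k₀ (X ω) * g₀₀ (X ω))) *
          (if S ω = 1 ∧ A ω = 0 then (1 : ℝ) else 0)) P :=
        hZ₀int.bdd_mul (((hχm n).comp hX).mul
          ((hk₀m.mul hg₀₀m).comp hX)).aestronglyMeasurable (ae_of_all _ (hψbd _ fun x hx => hx.2.2.2).choose_spec)
      calc ∫ ω in s, χ n (X ω) * (S ω * 𝒴 ω) ∂P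
          = ∫ ω in s, ((χ n (X ω) * k₁ (X ω)) *
                ((if S ω = 1 ∧ A ω = 1 then (1 : ℝ) else 0) * Y ω)
              - (χ n (X ω) * (k₁ (X ω) * g₁₀ (X ω))) *
                (if S ω = 1 ∧ A ω = 1 then (1 : ℝ) else 0)
              - (χ n (X ω) * k₀ (X ω)) *
                ((if S ω = 1 ∧ A ω = 0 then (1 : ℝ) else 0) * Y ω)
              + (χ n (X ω) * (k₀ (X ω) * g₀₀ (X ω))) *
                (if S ω = 1 ∧ A ω = 0 then (1 : ℝ) else 0)) ∂P := by
            refine integral_congr_ae (ae_of_all _ fun ω => ?_)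
            simp only [hcore ω]; ring
        _ = (∫ ω in s, (χ n (X ω) * k₁ (X ω)) *
                ((if S ω = 1 ∧ A ω = 1 then (1 : ℝ) else 0) * Y ω) ∂P)
            - (∫ ω in s, (χ n (X ω) * (k₁ (X ω) * g₁₀ (X ω))) *
                (if S ω = 1 ∧ A ω = 1 then (1 : ℝ) else 0) ∂P)
            - (∫ ω in s, (χ n (X ω) * k₀ (X ω)) *
                ((if S ω = 1 ∧ A ω = 0 then (1 : ℝ) else 0) * Y ω) ∂P)
            + ∫ ω in s, (χ n (X ω) * (k₀ (X ω) * g₀₀ (X ω))) *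
                (if S ω = 1 ∧ A ω = 0 then (1 : ℝ) else 0) ∂P := by
            have hi12 : Integrable (fun ω => χ n (X ω) * k₁ (X ω) *
                ((if S ω = 1 ∧ A ω = 1 then (1 : ℝ) else 0) * Y ω)
                - χ n (X ω) * (k₁ (X ω) * g₁₀ (X ω)) *
                  (if S ω = 1 ∧ A ω = 1 then (1 : ℝ) else 0)) (P.restrict s) :=
              hi1.restrict.sub hi2.restrict
            have hi123 : Integrable (fun ω => (χ n (X ω) * k₁ (X ω) *
                ((if S ω = 1 ∧ A ω = 1 then (1 : ℝ) else 0) * Y ω)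
                - χ n (X ω) * (k₁ (X ω) * g₁₀ (X ω)) *
                  (if S ω = 1 ∧ A ω = 1 then (1 : ℝ) else 0))
                - χ n (X ω) * k₀ (X ω) *
                  ((if S ω = 1 ∧ A ω = 0 then (1 : ℝ) else 0) * Y ω)) (P.restrict s) :=
              hi12.sub hi3.restrict
            rw [integral_add hi123 hi4.restrict, integral_sub hi12 hi3.restrict,
              integral_sub hi1.restrict hi2.restrict]
        _ = 0 := by
            rw [e1, e2, e3, e4]
            have c1 : ∫ ω in s, (χ n (X ω) * k₁ (X ω)) *
                  (p₀ (X ω) * e₁₀ (X ω) * g₁₀ (X ω)) ∂P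
                = ∫ ω in s, (χ n (X ω) * (k₁ (X ω) * g₁₀ (X ω))) *
                  (p₀ (X ω) * e₁₀ (X ω)) ∂P :=
              integral_congr_ae (ae_of_all _ fun ω => by ring)
            have c2 : ∫ ω in s, (χ n (X ω) * k₀ (X ω)) *
                  (p₀ (X ω) * (1 - e₁₀ (X ω)) * g₀₀ (X ω)) ∂P
                = ∫ ω in s, (χ n (X ω) * (k₀ (X ω) * g₀₀ (X ω))) *
                  (p₀ (X ω) * (1 - e₁₀ (X ω))) ∂P :=
              integral_congr_ae (ae_of_all _ fun ω => by ring)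
            rw [c1, c2]; ring
    -- pass to the limit
    have hlim : Tendsto (fun n => ∫ ω in s, χ n (X ω) * (S ω * 𝒴 ω) ∂P) atTop
        (𝓝 (∫ ω in s, S ω * 𝒴 ω ∂P)) := by
      refine tendsto_integral_of_dominated_convergence (fun ω => |S ω * 𝒴 ω|)
        (fun n => ((((hχm n).comp hX).aemeasurable.aestronglyMeasurable).mul
          ((hS.aemeasurable.aestronglyMeasurable.mul h𝒴m))).restrict)
        (hS𝒴int.abs.restrict) (fun n => ae_of_all _ fun ω => ?_) (ae_of_all _ fun ω => ?_)
      · calc ‖χ n (X ω) * (S ω * 𝒴 ω)‖ = ‖χ n (X ω)‖ * ‖S ω * 𝒴 ω‖ := norm_mul _ _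
          _ ≤ 1 * ‖S ω * 𝒴 ω‖ := by gcongr; exact hχbd n (X ω)
          _ = |S ω * 𝒴 ω| := by rw [one_mul, Real.norm_eq_abs]
      · -- pointwise convergence
        have hev : ∀ᶠ n in atTop, χ n (X ω) * (S ω * 𝒴 ω) = S ω * 𝒴 ω := by
          set M : ℝ := max (max (|k₁ (X ω)|) (|k₁ (X ω) * g₁₀ (X ω)|))
            (max (|k₀ (X ω)|) (|k₀ (X ω) * g₀₀ (X ω)|)) with hMdef
          filter_upwards [eventually_ge_atTop (Nat.ceil M)] with n hn
          have hMn : M ≤ (n : ℝ) := le_trans (Nat.le_ceil M) (Nat.cast_le.mpr hn)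
          have hmem : X ω ∈ B n := by
            refine ⟨?_, ?_, ?_, ?_⟩ <;>
              · refine le_trans ?_ hMn
                simp [hMdef, le_max_iff, le_refl, true_or, or_true]
          rw [hχval n _ hmem, one_mul]
        exact Tendsto.congr' (hev.mono fun n hn => hn.symm) tendsto_const_nhds
    have h0 : Tendsto (fun n : ℕ => ∫ ω in s, χ n (X ω) * (S ω * 𝒴 ω) ∂P) atTop (𝓝 0) :=
      (tendsto_congr hzero).mpr tendsto_const_nhds
    exact (tendsto_nhds_unique hlim h0)
  -- on {S = 0}, 𝒴 equals the regression contrast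
  have hind : ∀ ω, (1 - S ω) * 𝒴 ω
      = T.indicator (fun ω => g₁₀ (X ω) - g₀₀ (X ω)) ω := by
    intro ω
    rcases hSval ω with h | h
    · have hω : ω ∈ T := h
      rw [Set.indicator_of_mem hω]
      simp only [h𝒴def, transportedSignal, h]
      ring
    · have hω : ω ∉ T := by simp [hTdef, h]
      rw [Set.indicator_of_notMem hω, h]
      ring
  have h1S𝒴int : Integrable (fun ω => (1 - S ω) * 𝒴 ω) P :=
    h𝒴int.bdd_mul (c := 1) (measurable_const.sub hS).aestronglyMeasurable
      (ae_of_all _ fun ω => by rcases hSval ω with h | h <;> simp [h])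
  -- basic scalars
  have hpsfin : P s ≠ ⊤ := measure_ne_top P s
  set psR : ℝ := (P s).toReal with hpsRdef
  have hpsR : 0 < psR := ENNReal.toReal_pos hGi.ne' hpsfin
  set q : ℝ := (P t).toReal with hqdef
  have hπq : πg = q / psR := by
    rw [hπg, cond_apply hs, ENNReal.toReal_mul, ENNReal.toReal_inv]
    rw [inv_mul_eq_div]
  have hq : q = πg * psR := by rw [hπq]; field_simp
  have hq0 : 0 < q := by rw [hq]; exact mul_pos hπgpos hpsR
  have hPt0 : P t ≠ 0 := by
    intro h
    rw [hqdef, h] at hq0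
    simp at hq0
  clear_value psR q
  -- the conditional-expectation integral over t
  have hτq : ∫ ω in t, (g₁₀ (X ω) - g₀₀ (X ω)) ∂P = τi * q := by
    have hset : {ω | G (X ω) = i ∧ S ω = 0} = t := by
      ext ω; simp [htdef, hsdef, hTdef, Set.mem_inter_iff, Set.mem_setOf_eq]
    have hτ' : τi = q⁻¹ * ∫ ω in t, (g₁₀ (X ω) - g₀₀ (X ω)) ∂P := by
      rw [hτi, hset, ProbabilityTheory.cond, integral_smul_measure, smul_eq_mul,
        ENNReal.toReal_inv, hqdef]
    rw [hτ']
    field_simp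
  -- mean of 𝒴 over s
  have hΔt : ∫ ω in s, T.indicator (fun ω => g₁₀ (X ω) - g₀₀ (X ω)) ω ∂P
      = ∫ ω in t, (g₁₀ (X ω) - g₀₀ (X ω)) ∂P := setIntegral_indicator hT
  have hm1 : ∫ ω in s, 𝒴 ω ∂P = τi * q := by
    have hsplit : ∫ ω in s, 𝒴 ω ∂P
        = (∫ ω in s, S ω * 𝒴 ω ∂P) + ∫ ω in s, (1 - S ω) * 𝒴 ω ∂P := by
      rw [← integral_add hS𝒴int.restrict h1S𝒴int.restrict]
      exact integral_congr_ae (ae_of_all _ fun ω => by ring)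
    rw [hsplit, key, zero_add, integral_congr_ae (ae_of_all _ hind), hΔt, hτq]
  -- integral of the S=0 indicator over s
  have hJm : Measurable (fun ω => if S ω = 0 then (1 : ℝ) else 0) :=
    Measurable.ite (hS (measurableSet_singleton 0)) measurable_const measurable_const
  have hJbd : ∀ ω, ‖if S ω = 0 then (1 : ℝ) else 0‖ ≤ 1 := fun ω => by split <;> simp
  have hJint : Integrable (fun ω => if S ω = 0 then (1 : ℝ) else 0) P :=
    (integrable_const (1 : ℝ)).mono' hJm.aestronglyMeasurable (ae_of_all _ hJbd)
  have hJs : ∫ ω in s, (if S ω = 0 then (1 : ℝ) else 0) ∂P = q := by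
    have hfun : ∀ ω, (if S ω = 0 then (1 : ℝ) else 0)
        = T.indicator (fun _ => (1 : ℝ)) ω := by
      intro ω
      by_cases h : S ω = 0
      · rw [if_pos h, Set.indicator_of_mem (by exact h)]
      · rw [if_neg h, Set.indicator_of_notMem (by simp [hTdef, h])]
    rw [integral_congr_ae (ae_of_all _ hfun), setIntegral_indicator hT, setIntegral_const,
      smul_eq_mul, mul_one, hqdef, htdef, measureReal_def]
  have hJ𝒴 : ∫ ω in s, (if S ω = 0 then (1 : ℝ) else 0) * 𝒴 ω ∂P = τi * q := by
    have hfun : ∀ ω, (if S ω = 0 then (1 : ℝ) else 0) * 𝒴 ω = (1 - S ω) * 𝒴 ω := by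
      intro ω; rcases hSval ω with h | h <;> simp [h]
    rw [integral_congr_ae (ae_of_all _ hfun), integral_congr_ae (ae_of_all _ hind), hΔt, hτq]
  have hJ𝒴int : Integrable (fun ω => (if S ω = 0 then (1 : ℝ) else 0) * 𝒴 ω) P :=
    h𝒴int.bdd_mul hJm.aestronglyMeasurable (ae_of_all _ hJbd)
  -- second moment of 𝒴 over s via the conditional variance
  have hcondprob : IsProbabilityMeasure (P[|s]) := cond_isProbabilityMeasure hGi.ne'
  have hmem2c : MemLp 𝒴 2 (P[|s]) := by
    have h1 : MemLp 𝒴 2 (P.restrict s) := hmem2.restrict s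
    have h2 := h1.smul_measure (c := (P s)⁻¹) (by simp [hGi.ne'])
    simpa [ProbabilityTheory.cond] using h2
  have hvar : σi2 = psR⁻¹ * (∫ ω in s, 𝒴 ω ^ 2 ∂P) - (psR⁻¹ * (τi * q)) ^ 2 := by
    rw [hσi2, variance_eq_sub hmem2c]
    simp only [ProbabilityTheory.cond, integral_smul_measure, smul_eq_mul,
      ENNReal.toReal_inv, Pi.pow_apply, hm1, hpsRdef]
  have hsq : ∫ ω in s, 𝒴 ω ^ 2 ∂P = σi2 * psR + (τi * q) ^ 2 / psR := by
    rw [hvar]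
    exact auxField1 psR _ (τi * q) (ne_of_gt hpsR)
  constructor
  · -- first moment
    have hfun : ∀ ω, s.indicator
        (fun ω => 𝒴 ω - τi * if S ω = 0 then (1 : ℝ) else 0) ω
        = (if G (X ω) = i then (1 : ℝ) else 0) *
          (𝒴 ω - τi * if S ω = 0 then (1 : ℝ) else 0) := by
      intro ω
      rw [Set.indicator_apply]
      by_cases h : ω ∈ s
      · rw [if_pos h, if_pos (show G (X ω) = i from h), one_mul]
      · rw [if_neg h, if_neg (show ¬G (X ω) = i from h), zero_mul]
    refine Eq.trans (integral_congr_ae (ae_of_all _ fun ω => (hfun ω).symm)) ?_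
    rw [integral_indicator hs]
    have hint2 : Integrable (fun ω => τi * if S ω = 0 then (1 : ℝ) else 0) (P.restrict s) :=
      (hJint.const_mul τi).restrict
    rw [integral_sub h𝒴int.restrict hint2, integral_const_mul, hm1, hJs]
    ring
  · -- second moment
    have hfun : ∀ ω, s.indicator
        (fun ω => (𝒴 ω - τi * if S ω = 0 then (1 : ℝ) else 0) ^ 2) ω
        = ((if G (X ω) = i then (1 : ℝ) else 0) *
          (𝒴 ω - τi * if S ω = 0 then (1 : ℝ) else 0)) ^ 2 := by
      intro ω
      rw [Set.indicator_apply]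
      by_cases h : ω ∈ s
      · rw [if_pos h, if_pos (show G (X ω) = i from h), one_mul]
      · rw [if_neg h, if_neg (show ¬G (X ω) = i from h), zero_mul]
        norm_num
    refine Eq.trans (integral_congr_ae (ae_of_all _ fun ω => (hfun ω).symm)) ?_
    rw [integral_indicator hs]
    have hpt : ∀ ω, (𝒴 ω - τi * if S ω = 0 then (1 : ℝ) else 0) ^ 2
        = 𝒴 ω ^ 2 - (2 * τi) * ((if S ω = 0 then (1 : ℝ) else 0) * 𝒴 ω)
          + τi ^ 2 * (if S ω = 0 then (1 : ℝ) else 0) := by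
      intro ω; rcases hSval ω with h | h <;> simp [h] <;> ring
    rw [integral_congr_ae (ae_of_all _ hpt)]
    have hint1 : Integrable (fun ω => 𝒴 ω ^ 2
        - (2 * τi) * ((if S ω = 0 then (1 : ℝ) else 0) * 𝒴 ω)) (P.restrict s) :=
      h𝒴sq.restrict.sub ((hJ𝒴int.const_mul (2 * τi)).restrict)
    rw [integral_add hint1 ((hJint.const_mul (τi ^ 2)).restrict),
      integral_sub h𝒴sq.restrict ((hJ𝒴int.const_mul (2 * τi)).restrict),
      integral_const_mul, integral_const_mul, hsq, hJ𝒴, hJs, hq]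
    exact auxField2 σi2 τi πg psR (ne_of_gt hpsR)
end

section
/- In the data-model setting, let η = (g₁, g₀, e₁, p) be a nuisance vector with p, e₁ measurable functions valued in (0,1], p(x) ≥ 1/C̄ and e₁(x) ≥ 1/C̄ for all x (C̄ ≥ 1), set δ_p := p − p₀ and δ_e := e₁ − e₁₀, and define D(X) := e₁₀(X)·δ_p(X) + (1 − p₀(X))·p₀(X)·δ_e(X) + (1 − p₀(X))·δ_p(X)·δ_e(X) and S₂ := (D(X)/(p(X)·e₁(X)·p₀(X)·e₁₀(X)))·S·A·(Y − g₁₀(X)). Assume p₀(x) ≥ ε_p, e₁₀(x) ≥ ε_e (ε_p, ε_e ∈ (0,1)), and E[1{S=1, A=1}·(Y − g₁₀(X))² | σ(X)] ≤ σ̄²·p₀(X)·e₁₀(X) almost surely for some σ̄² < ∞. Then E[S₂²] ≤ (9/4)·(σ̄²·C̄⁴/(ε_p·ε_e))·(√(E[δ_p(X)²]) + √(E[δ_e(X)²]))². -/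
open MeasureTheory ProbabilityTheory Filter Topology

set_option maxHeartbeats 2000000 in
/-- Second-moment bound for the `S₂` term of the error decomposition:
`E[S₂²] ≤ (9/4)·(σ̄²·C̄⁴/(ε_p·ε_e))·(√E[δ_p²] + √E[δ_e²])²`. -/
theorem s2_second_moment_bound
    {Ω : Type*} [MeasurableSpace Ω] (P : Measure Ω) [IsProbabilityMeasure P]
    {𝒳 : Type*} [MeasurableSpace 𝒳]
    (X : Ω → 𝒳) (S A Y : Ω → ℝ)
    (hX : Measurable X) (hS : Measurable S) (hA : Measurable A) (hY : Measurable Y)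
    (hSval : ∀ ω, S ω = 0 ∨ S ω = 1) (hAval : ∀ ω, A ω = 0 ∨ A ω = 1)
    (hY2 : MemLp Y 2 P)
    -- true nuisance functions
    (p₀ e₁₀ g₁₀ g₀₀ : 𝒳 → ℝ)
    (hp₀m : Measurable p₀) (he₁₀m : Measurable e₁₀)
    (hg₁₀m : Measurable g₁₀) (hg₀₀m : Measurable g₀₀)
    (hp₀val : ∀ x, p₀ x ∈ Set.Ioc (0 : ℝ) 1) (he₁₀val : ∀ x, e₁₀ x ∈ Set.Ioo (0 : ℝ) 1)
    (hp₀ : P[S | MeasurableSpace.comap X inferInstance] =ᵐ[P] fun ω => p₀ (X ω))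
    (he₁₀ : P[fun ω => S ω * A ω | MeasurableSpace.comap X inferInstance] =ᵐ[P]
      fun ω => p₀ (X ω) * e₁₀ (X ω))
    (hg₁₀ : P[fun ω => (if S ω = 1 ∧ A ω = 1 then (1 : ℝ) else 0) * Y ω |
        MeasurableSpace.comap X inferInstance] =ᵐ[P]
      fun ω => p₀ (X ω) * e₁₀ (X ω) * g₁₀ (X ω))
    (hg₀₀ : P[fun ω => (if S ω = 1 ∧ A ω = 0 then (1 : ℝ) else 0) * Y ω |
        MeasurableSpace.comap X inferInstance] =ᵐ[P]
      fun ω => p₀ (X ω) * (1 - e₁₀ (X ω)) * g₀₀ (X ω))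
    -- the nuisance estimate components e₁, p with bounds
    (Cbar : ℝ) (hCbar : 1 ≤ Cbar)
    (e₁ p : 𝒳 → ℝ) (he₁m : Measurable e₁) (hpm : Measurable p)
    (he₁val : ∀ x, e₁ x ∈ Set.Ioc (0 : ℝ) 1) (hpval : ∀ x, p x ∈ Set.Ioc (0 : ℝ) 1)
    (hpbound : ∀ x, 1 / Cbar ≤ p x) (he₁bound : ∀ x, 1 / Cbar ≤ e₁ x)
    -- positivity constants
    (εp εe : ℝ) (hεp : εp ∈ Set.Ioo (0 : ℝ) 1) (hεe : εe ∈ Set.Ioo (0 : ℝ) 1)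
    (hp₀bound : ∀ x, εp ≤ p₀ x) (he₁₀bound : ∀ x, εe ≤ e₁₀ x)
    -- conditional second-moment bound of the outcome residual
    (σb2 : ℝ)
    (hmom : ∀ᵐ ω ∂P,
      (P[fun ω' => (if S ω' = 1 ∧ A ω' = 1 then (1 : ℝ) else 0) * (Y ω' - g₁₀ (X ω')) ^ 2 |
        MeasurableSpace.comap X inferInstance]) ω ≤ σb2 * p₀ (X ω) * e₁₀ (X ω)) :
    ∫ ω, (((e₁₀ (X ω) * (p (X ω) - p₀ (X ω)) +
          (1 - p₀ (X ω)) * p₀ (X ω) * (e₁ (X ω) - e₁₀ (X ω)) +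
          (1 - p₀ (X ω)) * (p (X ω) - p₀ (X ω)) * (e₁ (X ω) - e₁₀ (X ω))) /
        (p (X ω) * e₁ (X ω) * p₀ (X ω) * e₁₀ (X ω))) *
        S ω * A ω * (Y ω - g₁₀ (X ω))) ^ 2 ∂P ≤
      (9 / 4) * (σb2 * Cbar ^ 4 / (εp * εe)) *
        (Real.sqrt (∫ ω, (p (X ω) - p₀ (X ω)) ^ 2 ∂P) +
          Real.sqrt (∫ ω, (e₁ (X ω) - e₁₀ (X ω)) ^ 2 ∂P)) ^ 2 := by
  classical
  obtain ⟨hεp0, hεp1⟩ := hεp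
  obtain ⟨hεe0, hεe1⟩ := hεe
  have hCpos : (0:ℝ) < Cbar := lt_of_lt_of_le one_pos hCbar
  have hm : MeasurableSpace.comap X inferInstance ≤ (inferInstance : MeasurableSpace Ω) :=
    hX.comap_le
  haveI hsf : SigmaFinite (P.trim hm) := inferInstance
  have hXm : Measurable[MeasurableSpace.comap X inferInstance] X := fun s hs => ⟨s, hs, rfl⟩
  -- abbreviations
  set φ : 𝒳 → ℝ := fun x =>
    (e₁₀ x * (p x - p₀ x) + (1 - p₀ x) * p₀ x * (e₁ x - e₁₀ x) +
      (1 - p₀ x) * (p x - p₀ x) * (e₁ x - e₁₀ x)) /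
    (p x * e₁ x * p₀ x * e₁₀ x) with hφdef
  set f : Ω → ℝ := fun ω => φ (X ω) ^ 2 with hfdef
  set g : Ω → ℝ := fun ω =>
    (if S ω = 1 ∧ A ω = 1 then (1:ℝ) else 0) * (Y ω - g₁₀ (X ω)) ^ 2 with hgdef
  set K : ℝ := 9 / 4 * (σb2 * Cbar ^ 4 / (εp * εe)) with hKdef
  -- basic measurability
  have hφm : Measurable φ := by
    apply Measurable.div
    · exact ((he₁₀m.mul (hpm.sub hp₀m)).add
        (((measurable_const.sub hp₀m).mul hp₀m).mul (he₁m.sub he₁₀m))).add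
        (((measurable_const.sub hp₀m).mul (hpm.sub hp₀m)).mul (he₁m.sub he₁₀m))
    · exact ((hpm.mul he₁m).mul hp₀m).mul he₁₀m
  have hfm : Measurable f := (hφm.comp hX).pow_const 2
  have hfsm : StronglyMeasurable[MeasurableSpace.comap X inferInstance] f :=
    (Measurable.stronglyMeasurable ((hφm.pow_const 2).comp hXm))
  have hset : MeasurableSet {ω | S ω = 1 ∧ A ω = 1} :=
    (hS (measurableSet_singleton 1)).inter (hA (measurableSet_singleton 1))
  have hindm : Measurable (fun ω => if S ω = 1 ∧ A ω = 1 then (1:ℝ) else 0) :=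
    Measurable.ite hset measurable_const measurable_const
  have hind_nonneg : ∀ ω, (0:ℝ) ≤ (if S ω = 1 ∧ A ω = 1 then (1:ℝ) else 0) := by
    intro ω; split <;> norm_num
  have hind_le : ∀ ω, (if S ω = 1 ∧ A ω = 1 then (1:ℝ) else 0) ≤ 1 := by
    intro ω; split <;> norm_num
  -- integrability helper
  have hint_of_bound : ∀ (u : Ω → ℝ), Measurable u → ∀ (C : ℝ), (∀ ω, |u ω| ≤ C) →
      Integrable u P := by
    intro u hu C hC
    exact memLp_one_iff_integrable.mp
      (MemLp.of_bound hu.aestronglyMeasurable C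
        (Eventually.of_forall fun ω => by simpa [Real.norm_eq_abs] using hC ω))
  -- `g₁₀ (X ·)` is in L².
  set g1 : Ω → ℝ := fun ω => (if S ω = 1 ∧ A ω = 1 then (1:ℝ) else 0) * Y ω with hg1def
  have hg1m : Measurable g1 := hindm.mul hY
  have hg1ℒ2 : MemLp g1 2 P := by
    refine hY2.of_le hg1m.aestronglyMeasurable (Eventually.of_forall fun ω => ?_)
    rw [hg1def]
    simp only [Real.norm_eq_abs, abs_mul]
    calc |if S ω = 1 ∧ A ω = 1 then (1:ℝ) else 0| * |Y ω|
        ≤ 1 * |Y ω| := by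
          apply mul_le_mul_of_nonneg_right _ (abs_nonneg _)
          rw [abs_of_nonneg (hind_nonneg ω)]; exact hind_le ω
      _ = |Y ω| := one_mul _
  have hcondℒ2 : MemLp (P[g1|MeasurableSpace.comap X inferInstance]) 2 P := by
    have hG := hg1ℒ2.coeFn_toLp
    set G : Lp ℝ 2 P := hg1ℒ2.toLp g1 with hGdef
    have h1 : ((condExpL2 ℝ ℝ hm G : lpMeas ℝ ℝ (MeasurableSpace.comap X inferInstance) 2 P) : Ω → ℝ) =ᵐ[P] P[g1|MeasurableSpace.comap X inferInstance] := by
      refine ae_eq_condExp_of_forall_setIntegral_eq hm (hg1ℒ2.integrable one_le_two)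
        (fun s _ _ => ?_) (fun s hs hμs => ?_) ?_
      · exact ((Lp.memLp _).integrable one_le_two).integrableOn
      · rw [integral_condExpL2_eq hm G hs hμs.ne]
        exact setIntegral_congr_ae (hm s hs) (hG.mono fun x hx _ => hx)
      · exact aestronglyMeasurable_condExpL2 hm G
    exact MemLp.ae_eq h1 (Lp.memLp _)
  have hPEg : MemLp (fun ω => p₀ (X ω) * e₁₀ (X ω) * g₁₀ (X ω)) 2 P :=
    MemLp.ae_eq hg₁₀ hcondℒ2
  have hg₁₀ℒ2 : MemLp (fun ω => g₁₀ (X ω)) 2 P := by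
    refine hPEg.of_le_mul (c := (εp * εe)⁻¹) (hg₁₀m.comp hX).aestronglyMeasurable
      (Eventually.of_forall fun ω => ?_)
    have h1 : εp * εe ≤ p₀ (X ω) * e₁₀ (X ω) :=
      mul_le_mul (hp₀bound _) (he₁₀bound _) hεe0.le (hp₀val _).1.le
    have hpe : (0:ℝ) < εp * εe := mul_pos hεp0 hεe0
    simp only [Real.norm_eq_abs, abs_mul, abs_of_pos (hp₀val (X ω)).1,
      abs_of_pos (he₁₀val (X ω)).1]
    calc |g₁₀ (X ω)| = (εp * εe)⁻¹ * (εp * εe * |g₁₀ (X ω)|) := by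
          field_simp
      _ ≤ (εp * εe)⁻¹ * (p₀ (X ω) * e₁₀ (X ω) * |g₁₀ (X ω)|) := by
          apply mul_le_mul_of_nonneg_left _ (by positivity)
          exact mul_le_mul_of_nonneg_right h1 (abs_nonneg _)
  have hres : MemLp (fun ω => Y ω - g₁₀ (X ω)) 2 P := hY2.sub hg₁₀ℒ2
  have hsq_int : Integrable (fun ω => (Y ω - g₁₀ (X ω)) ^ 2) P := by
    have := hres.integrable_sq
    simpa using this
  have hgm : Measurable g := hindm.mul ((hY.sub (hg₁₀m.comp hX)).pow_const 2)
  have hg_nonneg : ∀ ω, 0 ≤ g ω := fun ω =>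
    mul_nonneg (hind_nonneg ω) (sq_nonneg _)
  have hg_int : Integrable g P := by
    refine hsq_int.mono hgm.aestronglyMeasurable (Eventually.of_forall fun ω => ?_)
    rw [hgdef]
    simp only [Real.norm_eq_abs, abs_mul]
    calc |if S ω = 1 ∧ A ω = 1 then (1:ℝ) else 0| * |(Y ω - g₁₀ (X ω)) ^ 2|
        ≤ 1 * |(Y ω - g₁₀ (X ω)) ^ 2| := by
          apply mul_le_mul_of_nonneg_right _ (abs_nonneg _)
          rw [abs_of_nonneg (hind_nonneg ω)]; exact hind_le ω
      _ = |(Y ω - g₁₀ (X ω)) ^ 2| := one_mul _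
  -- pointwise bounds
  have hden_pos : ∀ x, 0 < p x * e₁ x * p₀ x * e₁₀ x := by
    intro x
    have h1 := (hpval x).1; have h2 := (he₁val x).1
    have h3 := (hp₀val x).1; have h4 := (he₁₀val x).1
    positivity
  have habs_p : ∀ x, |p x - p₀ x| ≤ 1 := by
    intro x
    have h1 := (hpval x).1; have h2 := (hpval x).2
    have h3 := (hp₀val x).1; have h4 := (hp₀val x).2
    rw [abs_le]; constructor <;> linarith
  have habs_e : ∀ x, |e₁ x - e₁₀ x| ≤ 1 := by
    intro x
    have h1 := (he₁val x).1; have h2 := (he₁val x).2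
    have h3 := (he₁₀val x).1; have h4 := (he₁₀val x).2
    rw [abs_le]; constructor <;> linarith
  have hnum : ∀ x, |e₁₀ x * (p x - p₀ x) + (1 - p₀ x) * p₀ x * (e₁ x - e₁₀ x) +
      (1 - p₀ x) * (p x - p₀ x) * (e₁ x - e₁₀ x)| ≤
      3 / 2 * (|p x - p₀ x| + |e₁ x - e₁₀ x|) := by
    intro x
    have h0 := abs_add_three (e₁₀ x * (p x - p₀ x)) ((1 - p₀ x) * p₀ x * (e₁ x - e₁₀ x))
      ((1 - p₀ x) * (p x - p₀ x) * (e₁ x - e₁₀ x))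
    simp only [abs_mul] at h0
    have e1 : |e₁₀ x| ≤ 1 := by
      rw [abs_of_pos (he₁₀val x).1]; exact (he₁₀val x).2.le
    have q1 : |1 - p₀ x| ≤ 1 := by
      rw [abs_of_nonneg (by linarith [(hp₀val x).2])]; linarith [(hp₀val x).1]
    have p1 : |p₀ x| ≤ 1 := by
      rw [abs_of_pos (hp₀val x).1]; exact (hp₀val x).2
    have ha0 : (0:ℝ) ≤ |p x - p₀ x| := abs_nonneg _
    have hb0 : (0:ℝ) ≤ |e₁ x - e₁₀ x| := abs_nonneg _
    have he0 : (0:ℝ) ≤ |e₁₀ x| := abs_nonneg _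
    have hq0 : (0:ℝ) ≤ |1 - p₀ x| := abs_nonneg _
    have hp0' : (0:ℝ) ≤ |p₀ x| := abs_nonneg _
    have ha1 := habs_p x
    have hb1 := habs_e x
    have t1 : |e₁₀ x| * |p x - p₀ x| ≤ |p x - p₀ x| := mul_le_of_le_one_left ha0 e1
    have t2 : |1 - p₀ x| * |p₀ x| * |e₁ x - e₁₀ x| ≤ |e₁ x - e₁₀ x| :=
      mul_le_of_le_one_left hb0 (mul_le_one₀ q1 hp0' p1)
    have t3 : |1 - p₀ x| * |p x - p₀ x| * |e₁ x - e₁₀ x| ≤ |p x - p₀ x| * |e₁ x - e₁₀ x| :=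
      mul_le_mul_of_nonneg_right (mul_le_of_le_one_left ha0 q1) hb0
    have t4 : 2 * (|p x - p₀ x| * |e₁ x - e₁₀ x|) ≤ |p x - p₀ x| + |e₁ x - e₁₀ x| := by
      nlinarith [mul_nonneg (sub_nonneg.mpr ha1) hb0, mul_nonneg (sub_nonneg.mpr hb1) ha0]
    linarith [h0, t1, t2, t3, t4]
  have hden1 : ∀ x, p₀ x * e₁₀ x ≤ Cbar ^ 2 * (p x * e₁ x * p₀ x * e₁₀ x) := by
    intro x
    have hc1 : 1 ≤ p x * Cbar := (div_le_iff₀ hCpos).mp (hpbound x)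
    have hc2 : 1 ≤ e₁ x * Cbar := (div_le_iff₀ hCpos).mp (he₁bound x)
    have h3 := (hp₀val x).1; have h4 := (he₁₀val x).1
    have h5 : 1 ≤ Cbar ^ 2 * (p x * e₁ x) := by
      nlinarith [mul_le_mul hc1 hc2 (by norm_num : (0:ℝ) ≤ 1)
        (by positivity : (0:ℝ) ≤ p x * Cbar)]
    have h6 := mul_le_mul_of_nonneg_left h5 (mul_pos h3 h4).le
    nlinarith [h6]
  -- σb2 is nonnegative
  have hpe_int : Integrable (fun ω => σb2 * p₀ (X ω) * e₁₀ (X ω)) P := by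
    refine hint_of_bound _ (((measurable_const.mul hp₀m).mul he₁₀m).comp hX) |σb2| ?_
    intro ω
    simp only [abs_mul]
    calc |σb2| * |p₀ (X ω)| * |e₁₀ (X ω)| ≤ |σb2| * 1 * 1 := by
          apply mul_le_mul _ _ (abs_nonneg _) (by positivity)
          · apply mul_le_mul_of_nonneg_left _ (abs_nonneg _)
            rw [abs_of_pos (hp₀val _).1]; exact (hp₀val _).2
          · rw [abs_of_pos (he₁₀val _).1]; exact (he₁₀val _).2.le
      _ = |σb2| := by ring
  have hσ : 0 ≤ σb2 := by
    by_contra hneg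
    push_neg at hneg
    have h1 : ∫ ω, g ω ∂P = ∫ ω, (P[g|MeasurableSpace.comap X inferInstance]) ω ∂P := (integral_condExp hm).symm
    have h2 : ∫ ω, (P[g|MeasurableSpace.comap X inferInstance]) ω ∂P ≤ ∫ ω, σb2 * p₀ (X ω) * e₁₀ (X ω) ∂P :=
      integral_mono_ae integrable_condExp hpe_int hmom
    have h3 : ∫ ω, σb2 * p₀ (X ω) * e₁₀ (X ω) ∂P ≤ ∫ (_ : Ω), σb2 * (εp * εe) ∂P := by
      refine integral_mono_ae hpe_int (integrable_const _) (Eventually.of_forall fun ω => ?_)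
      show σb2 * p₀ (X ω) * e₁₀ (X ω) ≤ σb2 * (εp * εe)
      have h5 : εp * εe ≤ p₀ (X ω) * e₁₀ (X ω) :=
        mul_le_mul (hp₀bound _) (he₁₀bound _) hεe0.le (hp₀val _).1.le
      nlinarith [mul_le_mul_of_nonpos_left h5 hneg.le]
    have h4 : (0:ℝ) ≤ ∫ ω, g ω ∂P := integral_nonneg hg_nonneg
    have h3c : ∫ (_ : Ω), σb2 * (εp * εe) ∂P = σb2 * (εp * εe) := by
      simp [integral_const]
    rw [h3c] at h3
    have h5 : σb2 * (εp * εe) < 0 := mul_neg_of_neg_of_pos hneg (mul_pos hεp0 hεe0)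
    linarith
  have hK0 : 0 ≤ K := by rw [hKdef]; positivity
  -- key pointwise bound
  have hφ_key : ∀ x, φ x ^ 2 * (σb2 * p₀ x * e₁₀ x) ≤
      K * (|p x - p₀ x| + |e₁ x - e₁₀ x|) ^ 2 := by
    intro x
    have hd := hden_pos x
    have hnum2 : (e₁₀ x * (p x - p₀ x) + (1 - p₀ x) * p₀ x * (e₁ x - e₁₀ x) +
        (1 - p₀ x) * (p x - p₀ x) * (e₁ x - e₁₀ x)) ^ 2 ≤
        9 / 4 * (|p x - p₀ x| + |e₁ x - e₁₀ x|) ^ 2 := by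
      have h := hnum x
      calc (e₁₀ x * (p x - p₀ x) + (1 - p₀ x) * p₀ x * (e₁ x - e₁₀ x) +
        (1 - p₀ x) * (p x - p₀ x) * (e₁ x - e₁₀ x)) ^ 2
          = |e₁₀ x * (p x - p₀ x) + (1 - p₀ x) * p₀ x * (e₁ x - e₁₀ x) +
        (1 - p₀ x) * (p x - p₀ x) * (e₁ x - e₁₀ x)| ^ 2 := (sq_abs _).symm
        _ ≤ (3 / 2 * (|p x - p₀ x| + |e₁ x - e₁₀ x|)) ^ 2 :=
            pow_le_pow_left₀ (abs_nonneg _) h 2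
        _ = 9 / 4 * (|p x - p₀ x| + |e₁ x - e₁₀ x|) ^ 2 := by ring
    have hPE : p₀ x * e₁₀ x * (εp * εe) ≤ Cbar ^ 4 * (p x * e₁ x * p₀ x * e₁₀ x) ^ 2 := by
      have h2 : εp * εe ≤ p₀ x * e₁₀ x :=
        mul_le_mul (hp₀bound _) (he₁₀bound _) hεe0.le (hp₀val _).1.le
      have h3 := hden1 x
      calc p₀ x * e₁₀ x * (εp * εe)
          ≤ p₀ x * e₁₀ x * (p₀ x * e₁₀ x) :=
            mul_le_mul_of_nonneg_left h2 (mul_pos (hp₀val x).1 (he₁₀val x).1).le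
        _ ≤ (Cbar ^ 2 * (p x * e₁ x * p₀ x * e₁₀ x)) *
            (Cbar ^ 2 * (p x * e₁ x * p₀ x * e₁₀ x)) :=
            mul_le_mul h3 h3 (mul_pos (hp₀val x).1 (he₁₀val x).1).le (by positivity)
        _ = Cbar ^ 4 * (p x * e₁ x * p₀ x * e₁₀ x) ^ 2 := by ring
    have hφx : φ x = (e₁₀ x * (p x - p₀ x) + (1 - p₀ x) * p₀ x * (e₁ x - e₁₀ x) +
        (1 - p₀ x) * (p x - p₀ x) * (e₁ x - e₁₀ x)) /
        (p x * e₁ x * p₀ x * e₁₀ x) := by rw [hφdef]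
    rw [hφx, div_pow, div_mul_eq_mul_div, div_le_iff₀ (pow_pos hd 2), hKdef]
    have hrw : 9 / 4 * (σb2 * Cbar ^ 4 / (εp * εe)) *
        (|p x - p₀ x| + |e₁ x - e₁₀ x|) ^ 2 * (p x * e₁ x * p₀ x * e₁₀ x) ^ 2 =
        9 / 4 * σb2 * Cbar ^ 4 * (|p x - p₀ x| + |e₁ x - e₁₀ x|) ^ 2 *
        (p x * e₁ x * p₀ x * e₁₀ x) ^ 2 / (εp * εe) := by ring
    rw [hrw, le_div_iff₀ (mul_pos hεp0 hεe0)]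
    calc (e₁₀ x * (p x - p₀ x) + (1 - p₀ x) * p₀ x * (e₁ x - e₁₀ x) +
          (1 - p₀ x) * (p x - p₀ x) * (e₁ x - e₁₀ x)) ^ 2 *
          (σb2 * p₀ x * e₁₀ x) * (εp * εe)
        = (e₁₀ x * (p x - p₀ x) + (1 - p₀ x) * p₀ x * (e₁ x - e₁₀ x) +
          (1 - p₀ x) * (p x - p₀ x) * (e₁ x - e₁₀ x)) ^ 2 *
          (σb2 * (p₀ x * e₁₀ x * (εp * εe))) := by ring
      _ ≤ 9 / 4 * (|p x - p₀ x| + |e₁ x - e₁₀ x|) ^ 2 *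
          (σb2 * (Cbar ^ 4 * (p x * e₁ x * p₀ x * e₁₀ x) ^ 2)) := by
          apply mul_le_mul hnum2 (mul_le_mul_of_nonneg_left hPE hσ)
            (mul_nonneg hσ (mul_nonneg (mul_nonneg (hp₀val x).1.le (he₁₀val x).1.le)
              (mul_pos hεp0 hεe0).le)) (by positivity)
      _ = 9 / 4 * σb2 * Cbar ^ 4 * (|p x - p₀ x| + |e₁ x - e₁₀ x|) ^ 2 *
          (p x * e₁ x * p₀ x * e₁₀ x) ^ 2 := by ring
  -- bound on f
  have hBx : ∀ x, φ x ^ 2 ≤ 9 * Cbar ^ 4 / (εp * εe) ^ 2 := by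
    intro x
    have hd := hden_pos x
    have hφx : φ x = (e₁₀ x * (p x - p₀ x) + (1 - p₀ x) * p₀ x * (e₁ x - e₁₀ x) +
        (1 - p₀ x) * (p x - p₀ x) * (e₁ x - e₁₀ x)) /
        (p x * e₁ x * p₀ x * e₁₀ x) := by rw [hφdef]
    rw [hφx, div_pow, div_le_div_iff₀ (pow_pos hd 2) (pow_pos (mul_pos hεp0 hεe0) 2)]
    have h9 : (e₁₀ x * (p x - p₀ x) + (1 - p₀ x) * p₀ x * (e₁ x - e₁₀ x) +
        (1 - p₀ x) * (p x - p₀ x) * (e₁ x - e₁₀ x)) ^ 2 ≤ 9 := by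
      have h := hnum x
      have h2 : |e₁₀ x * (p x - p₀ x) + (1 - p₀ x) * p₀ x * (e₁ x - e₁₀ x) +
        (1 - p₀ x) * (p x - p₀ x) * (e₁ x - e₁₀ x)| ≤ 3 :=
        le_trans h (by linarith [habs_p x, habs_e x])
      calc (e₁₀ x * (p x - p₀ x) + (1 - p₀ x) * p₀ x * (e₁ x - e₁₀ x) +
        (1 - p₀ x) * (p x - p₀ x) * (e₁ x - e₁₀ x)) ^ 2
          = |e₁₀ x * (p x - p₀ x) + (1 - p₀ x) * p₀ x * (e₁ x - e₁₀ x) +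
        (1 - p₀ x) * (p x - p₀ x) * (e₁ x - e₁₀ x)| ^ 2 := (sq_abs _).symm
        _ ≤ 3 ^ 2 := pow_le_pow_left₀ (abs_nonneg _) h2 2
        _ = 9 := by norm_num
    have hd2 : (εp * εe) ^ 2 ≤ Cbar ^ 4 * (p x * e₁ x * p₀ x * e₁₀ x) ^ 2 := by
      have h2 : εp * εe ≤ p₀ x * e₁₀ x :=
        mul_le_mul (hp₀bound _) (he₁₀bound _) hεe0.le (hp₀val _).1.le
      have h3 := hden1 x
      have h4 : εp * εe ≤ Cbar ^ 2 * (p x * e₁ x * p₀ x * e₁₀ x) := le_trans h2 h3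
      nlinarith [mul_pos hεp0 hεe0, mul_le_mul h4 h4 (mul_pos hεp0 hεe0).le
        (by positivity : (0:ℝ) ≤ Cbar ^ 2 * (p x * e₁ x * p₀ x * e₁₀ x))]
    calc (e₁₀ x * (p x - p₀ x) + (1 - p₀ x) * p₀ x * (e₁ x - e₁₀ x) +
          (1 - p₀ x) * (p x - p₀ x) * (e₁ x - e₁₀ x)) ^ 2 * (εp * εe) ^ 2
        ≤ 9 * (Cbar ^ 4 * (p x * e₁ x * p₀ x * e₁₀ x) ^ 2) :=
          mul_le_mul h9 hd2 (by positivity) (by norm_num)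
      _ = 9 * Cbar ^ 4 * (p x * e₁ x * p₀ x * e₁₀ x) ^ 2 := by ring
  have hB : ∀ ω, f ω ≤ 9 * Cbar ^ 4 / (εp * εe) ^ 2 := by
    intro ω
    rw [hfdef]
    exact hBx (X ω)
  have hf_nonneg : ∀ ω, 0 ≤ f ω := by
    intro ω; rw [hfdef]; exact sq_nonneg _
  have hfg_int : Integrable (f * g) P := by
    refine (hg_int.const_mul (9 * Cbar ^ 4 / (εp * εe) ^ 2)).mono
      ((hfm.mul hgm).aestronglyMeasurable) (Eventually.of_forall fun ω => ?_)
    simp only [Pi.mul_apply, Real.norm_eq_abs]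
    rw [abs_of_nonneg (mul_nonneg (hf_nonneg ω) (hg_nonneg ω)),
      abs_of_nonneg (mul_nonneg (by positivity) (hg_nonneg ω))]
    exact mul_le_mul_of_nonneg_right (hB ω) (hg_nonneg ω)
  -- pull-out property
  have hpull : P[f * g|MeasurableSpace.comap X inferInstance] =ᵐ[P] f * P[g|MeasurableSpace.comap X inferInstance] :=
    condExp_mul_of_stronglyMeasurable_left hfsm hfg_int hg_int
  have hfE_int : Integrable (fun ω => f ω * (P[g|MeasurableSpace.comap X inferInstance]) ω) P := by
    refine Integrable.bdd_mul (c := 9 * Cbar ^ 4 / (εp * εe) ^ 2)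
      integrable_condExp hfm.aestronglyMeasurable (Eventually.of_forall fun ω => ?_)
    rw [Real.norm_eq_abs, abs_of_nonneg (hf_nonneg ω)]; exact hB ω
  -- the RHS-integrand bound function
  have hbd_int : Integrable (fun ω =>
      K * (|p (X ω) - p₀ (X ω)| + |e₁ (X ω) - e₁₀ (X ω)|) ^ 2) P := by
    refine hint_of_bound _ ?_ (|K| * 4) ?_
    · exact Measurable.const_mul
        ((((hpm.sub hp₀m).abs.add (he₁m.sub he₁₀m).abs).pow_const 2).comp hX) K
    · intro ω
      rw [abs_mul]
      apply mul_le_mul_of_nonneg_left _ (abs_nonneg K)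
      rw [abs_of_nonneg (sq_nonneg _)]
      have ha1 := habs_p (X ω); have hb1 := habs_e (X ω)
      have ha0 : (0:ℝ) ≤ |p (X ω) - p₀ (X ω)| := abs_nonneg _
      have hb0 : (0:ℝ) ≤ |e₁ (X ω) - e₁₀ (X ω)| := abs_nonneg _
      nlinarith
  -- main chain of (in)equalities
  have step1 : ∫ ω, (((e₁₀ (X ω) * (p (X ω) - p₀ (X ω)) +
          (1 - p₀ (X ω)) * p₀ (X ω) * (e₁ (X ω) - e₁₀ (X ω)) +
          (1 - p₀ (X ω)) * (p (X ω) - p₀ (X ω)) * (e₁ (X ω) - e₁₀ (X ω))) /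
        (p (X ω) * e₁ (X ω) * p₀ (X ω) * e₁₀ (X ω))) *
        S ω * A ω * (Y ω - g₁₀ (X ω))) ^ 2 ∂P = ∫ ω, (f * g) ω ∂P := by
    refine integral_congr_ae (Eventually.of_forall fun ω => ?_)
    simp only [Pi.mul_apply, hfdef, hgdef, hφdef]
    rcases hSval ω with h | h <;> rcases hAval ω with h' | h' <;>
      simp [h, h'] <;> ring
  have step2 : ∫ ω, (f * g) ω ∂P = ∫ ω, (P[f * g|MeasurableSpace.comap X inferInstance]) ω ∂P := (integral_condExp hm).symm
  have step3 : ∫ ω, (P[f * g|MeasurableSpace.comap X inferInstance]) ω ∂P = ∫ ω, f ω * (P[g|MeasurableSpace.comap X inferInstance]) ω ∂P :=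
    integral_congr_ae hpull
  have step4 : ∫ ω, f ω * (P[g|MeasurableSpace.comap X inferInstance]) ω ∂P ≤
      ∫ ω, K * (|p (X ω) - p₀ (X ω)| + |e₁ (X ω) - e₁₀ (X ω)|) ^ 2 ∂P := by
    refine integral_mono_ae hfE_int hbd_int ?_
    filter_upwards [hmom] with ω hω
    calc f ω * (P[g|MeasurableSpace.comap X inferInstance]) ω ≤ f ω * (σb2 * p₀ (X ω) * e₁₀ (X ω)) :=
          mul_le_mul_of_nonneg_left hω (hf_nonneg ω)
      _ ≤ K * (|p (X ω) - p₀ (X ω)| + |e₁ (X ω) - e₁₀ (X ω)|) ^ 2 := by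
          have := hφ_key (X ω)
          rw [hfdef]
          exact this
  -- Cauchy–Schwarz / Minkowski
  have hδp2_int : Integrable (fun ω => (p (X ω) - p₀ (X ω)) ^ 2) P := by
    refine hint_of_bound _ (((hpm.sub hp₀m).pow_const 2).comp hX) 1 fun ω => ?_
    rw [abs_of_nonneg (sq_nonneg _)]
    have := habs_p (X ω)
    nlinarith [abs_nonneg (p (X ω) - p₀ (X ω)), sq_abs (p (X ω) - p₀ (X ω))]
  have hδe2_int : Integrable (fun ω => (e₁ (X ω) - e₁₀ (X ω)) ^ 2) P := by
    refine hint_of_bound _ (((he₁m.sub he₁₀m).pow_const 2).comp hX) 1 fun ω => ?_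
    rw [abs_of_nonneg (sq_nonneg _)]
    have := habs_e (X ω)
    nlinarith [abs_nonneg (e₁ (X ω) - e₁₀ (X ω)), sq_abs (e₁ (X ω) - e₁₀ (X ω))]
  have hprod_int : Integrable (fun ω => |p (X ω) - p₀ (X ω)| * |e₁ (X ω) - e₁₀ (X ω)|) P := by
    refine hint_of_bound _ (((hpm.sub hp₀m).abs.mul (he₁m.sub he₁₀m).abs).comp hX) 1 fun ω => ?_
    rw [abs_of_nonneg (mul_nonneg (abs_nonneg _) (abs_nonneg _))]
    calc |p (X ω) - p₀ (X ω)| * |e₁ (X ω) - e₁₀ (X ω)| ≤ 1 * 1 :=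
          mul_le_mul (habs_p _) (habs_e _) (abs_nonneg _) (by norm_num)
      _ = 1 := by norm_num
  have hCS : ∫ ω, |p (X ω) - p₀ (X ω)| * |e₁ (X ω) - e₁₀ (X ω)| ∂P ≤
      Real.sqrt (∫ ω, (p (X ω) - p₀ (X ω)) ^ 2 ∂P) *
      Real.sqrt (∫ ω, (e₁ (X ω) - e₁₀ (X ω)) ^ 2 ∂P) := by
    have hpq : Real.HolderConjugate 2 2 := Real.HolderConjugate.two_two
    have hmemp : MemLp (fun ω => |p (X ω) - p₀ (X ω)|) (ENNReal.ofReal 2) P := by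
      rw [show ENNReal.ofReal 2 = 2 by norm_num]
      refine MemLp.of_bound (((hpm.sub hp₀m).abs.comp hX).aestronglyMeasurable) 1
        (Eventually.of_forall fun ω => ?_)
      rw [Real.norm_eq_abs, abs_abs]; exact habs_p _
    have hmeme : MemLp (fun ω => |e₁ (X ω) - e₁₀ (X ω)|) (ENNReal.ofReal 2) P := by
      rw [show ENNReal.ofReal 2 = 2 by norm_num]
      refine MemLp.of_bound (((he₁m.sub he₁₀m).abs.comp hX).aestronglyMeasurable) 1
        (Eventually.of_forall fun ω => ?_)
      rw [Real.norm_eq_abs, abs_abs]; exact habs_e _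
    have h := integral_mul_le_Lp_mul_Lq_of_nonneg hpq
      (Eventually.of_forall fun ω => abs_nonneg (p (X ω) - p₀ (X ω)))
      (Eventually.of_forall fun ω => abs_nonneg (e₁ (X ω) - e₁₀ (X ω))) hmemp hmeme
    have hr1 : ∫ ω, |p (X ω) - p₀ (X ω)| ^ (2:ℝ) ∂P = ∫ ω, (p (X ω) - p₀ (X ω)) ^ 2 ∂P := by
      refine integral_congr_ae (Eventually.of_forall fun ω => ?_)
      show |p (X ω) - p₀ (X ω)| ^ (2:ℝ) = (p (X ω) - p₀ (X ω)) ^ 2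
      rw [show (2:ℝ) = ((2:ℕ):ℝ) by norm_num, Real.rpow_natCast, sq_abs]
    have hr2 : ∫ ω, |e₁ (X ω) - e₁₀ (X ω)| ^ (2:ℝ) ∂P = ∫ ω, (e₁ (X ω) - e₁₀ (X ω)) ^ 2 ∂P := by
      refine integral_congr_ae (Eventually.of_forall fun ω => ?_)
      show |e₁ (X ω) - e₁₀ (X ω)| ^ (2:ℝ) = (e₁ (X ω) - e₁₀ (X ω)) ^ 2
      rw [show (2:ℝ) = ((2:ℕ):ℝ) by norm_num, Real.rpow_natCast, sq_abs]
    rw [hr1, hr2] at h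
    rw [Real.sqrt_eq_rpow, Real.sqrt_eq_rpow]
    exact h
  have step5 : ∫ ω, K * (|p (X ω) - p₀ (X ω)| + |e₁ (X ω) - e₁₀ (X ω)|) ^ 2 ∂P ≤
      K * (Real.sqrt (∫ ω, (p (X ω) - p₀ (X ω)) ^ 2 ∂P) +
        Real.sqrt (∫ ω, (e₁ (X ω) - e₁₀ (X ω)) ^ 2 ∂P)) ^ 2 := by
    rw [integral_const_mul]
    apply mul_le_mul_of_nonneg_left _ hK0
    have hexp : ∫ ω, (|p (X ω) - p₀ (X ω)| + |e₁ (X ω) - e₁₀ (X ω)|) ^ 2 ∂P =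
        ∫ ω, (p (X ω) - p₀ (X ω)) ^ 2 ∂P +
        2 * ∫ ω, |p (X ω) - p₀ (X ω)| * |e₁ (X ω) - e₁₀ (X ω)| ∂P +
        ∫ ω, (e₁ (X ω) - e₁₀ (X ω)) ^ 2 ∂P := by
      rw [show (∫ ω, (|p (X ω) - p₀ (X ω)| + |e₁ (X ω) - e₁₀ (X ω)|) ^ 2 ∂P) =
          ∫ ω, ((p (X ω) - p₀ (X ω)) ^ 2 +
            2 * (|p (X ω) - p₀ (X ω)| * |e₁ (X ω) - e₁₀ (X ω)|) +
            (e₁ (X ω) - e₁₀ (X ω)) ^ 2) ∂P from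
        integral_congr_ae (Eventually.of_forall fun ω => by
          show (|p (X ω) - p₀ (X ω)| + |e₁ (X ω) - e₁₀ (X ω)|) ^ 2 =
            (p (X ω) - p₀ (X ω)) ^ 2 +
            2 * (|p (X ω) - p₀ (X ω)| * |e₁ (X ω) - e₁₀ (X ω)|) +
            (e₁ (X ω) - e₁₀ (X ω)) ^ 2
          rw [add_sq, sq_abs, sq_abs]; ring)]
      have hprod2 : Integrable (fun ω =>
          2 * (|p (X ω) - p₀ (X ω)| * |e₁ (X ω) - e₁₀ (X ω)|)) P :=
        hprod_int.const_mul 2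
      have hint12 : Integrable (fun ω => (p (X ω) - p₀ (X ω)) ^ 2 +
          2 * (|p (X ω) - p₀ (X ω)| * |e₁ (X ω) - e₁₀ (X ω)|)) P :=
        hδp2_int.add hprod2
      rw [integral_add hint12 hδe2_int, integral_add hδp2_int hprod2, integral_const_mul]
    rw [hexp]
    have ha : (0:ℝ) ≤ ∫ ω, (p (X ω) - p₀ (X ω)) ^ 2 ∂P :=
      integral_nonneg fun ω => sq_nonneg _
    have hb : (0:ℝ) ≤ ∫ ω, (e₁ (X ω) - e₁₀ (X ω)) ^ 2 ∂P :=
      integral_nonneg fun ω => sq_nonneg _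
    nlinarith [Real.sq_sqrt ha, Real.sq_sqrt hb, hCS,
      Real.sqrt_nonneg (∫ ω, (p (X ω) - p₀ (X ω)) ^ 2 ∂P),
      Real.sqrt_nonneg (∫ ω, (e₁ (X ω) - e₁₀ (X ω)) ^ 2 ∂P)]
  calc ∫ ω, (((e₁₀ (X ω) * (p (X ω) - p₀ (X ω)) +
          (1 - p₀ (X ω)) * p₀ (X ω) * (e₁ (X ω) - e₁₀ (X ω)) +
          (1 - p₀ (X ω)) * (p (X ω) - p₀ (X ω)) * (e₁ (X ω) - e₁₀ (X ω))) /
        (p (X ω) * e₁ (X ω) * p₀ (X ω) * e₁₀ (X ω))) *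
        S ω * A ω * (Y ω - g₁₀ (X ω))) ^ 2 ∂P
      = ∫ ω, (f * g) ω ∂P := step1
    _ = ∫ ω, (P[f * g|MeasurableSpace.comap X inferInstance]) ω ∂P := step2
    _ = ∫ ω, f ω * (P[g|MeasurableSpace.comap X inferInstance]) ω ∂P := step3
    _ ≤ ∫ ω, K * (|p (X ω) - p₀ (X ω)| + |e₁ (X ω) - e₁₀ (X ω)|) ^ 2 ∂P := step4
    _ ≤ K * (Real.sqrt (∫ ω, (p (X ω) - p₀ (X ω)) ^ 2 ∂P) +
        Real.sqrt (∫ ω, (e₁ (X ω) - e₁₀ (X ω)) ^ 2 ∂P)) ^ 2 := step5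
    _ = 9 / 4 * (σb2 * Cbar ^ 4 / (εp * εe)) *
        (Real.sqrt (∫ ω, (p (X ω) - p₀ (X ω)) ^ 2 ∂P) +
          Real.sqrt (∫ ω, (e₁ (X ω) - e₁₀ (X ω)) ^ 2 ∂P)) ^ 2 := by rw [hKdef]
end

section
/- In the data-model setting, let η = (g₁, g₀, e₁, p) be a nuisance vector with p, e₁ measurable functions valued in (0,1], p(x) ≥ 1/C̄ and e₁(x) ≥ 1/C̄ for all x (C̄ ≥ 1), and set δ_{g₁} := g₁ − g₁₀, δ_p := p − p₀, δ_e := e₁ − e₁₀, all square-integrable with respect to the law of X; assume g₁ and g₁₀ are square-integrable and Y is square-integrable. Then for any group i, |E[1{G(X) = i}·(𝒴¹(η) − 𝒴¹(η₀))]| ≤ (3/2)·C̄²·√(E[δ_{g₁}(X)²])·(√(E[δ_p(X)²]) + √(E[δ_e(X)²])). -/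
open MeasureTheory ProbabilityTheory Filter Topology

private lemma integral_mul_eq_of_condexp {Ω : Type*} {m0 : MeasurableSpace Ω} {P : Measure Ω}
    [IsProbabilityMeasure P] {m : MeasurableSpace Ω} (hm : m ≤ m0) {f W h : Ω → ℝ}
    (hf : StronglyMeasurable[m] f) (hfW : Integrable (fun ω => f ω * W ω) P)
    (hW : Integrable W P) (hh : P[W|m] =ᵐ[P] h) :
    ∫ ω, f ω * W ω ∂P = ∫ ω, f ω * h ω ∂P := by
  have hfW' : Integrable (f * W) P := hfW
  have h1 := condExp_mul_of_stronglyMeasurable_left hf hfW' hW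
  have h2 : ∫ ω, (P[f * W|m]) ω ∂P = ∫ ω, (f * W) ω ∂P := integral_condExp hm
  calc ∫ ω, f ω * W ω ∂P = ∫ ω, (P[f * W|m]) ω ∂P := h2.symm
    _ = ∫ ω, f ω * h ω ∂P := by
        refine integral_congr_ae ?_
        filter_upwards [h1, hh] with ω h1ω hhω
        simp only [Pi.mul_apply] at h1ω
        rw [h1ω, hhω]

private lemma integrable_abs_mul {Ω : Type*} {m0 : MeasurableSpace Ω} {P : Measure Ω}
    {f g : Ω → ℝ} (hfm : AEStronglyMeasurable f P) (hgm : AEStronglyMeasurable g P)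
    (hf2 : Integrable (fun ω => f ω ^ 2) P) (hg2 : Integrable (fun ω => g ω ^ 2) P) :
    Integrable (fun ω => |f ω| * |g ω|) P := by
  refine Integrable.mono' ((hf2.add hg2).div_const 2) (((hfm.mul hgm).norm).congr (ae_of_all _ fun ω => by simp [Real.norm_eq_abs, abs_mul])) ?_
  refine ae_of_all _ fun ω => ?_
  have h := sq_nonneg (|f ω| - |g ω|)
  have h2 : |f ω|^2 = f ω ^2 := sq_abs _
  have h3 : |g ω|^2 = g ω ^2 := sq_abs _
  rw [Real.norm_eq_abs, abs_mul, abs_abs, abs_abs]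
  simp only [Pi.add_apply]
  nlinarith [abs_nonneg (f ω), abs_nonneg (g ω)]

private lemma integral_abs_mul_le {Ω : Type*} {m0 : MeasurableSpace Ω} {P : Measure Ω}
    {f g : Ω → ℝ} (hfm : AEStronglyMeasurable f P) (hgm : AEStronglyMeasurable g P)
    (hf2 : Integrable (fun ω => f ω ^ 2) P) (hg2 : Integrable (fun ω => g ω ^ 2) P) :
    ∫ ω, |f ω| * |g ω| ∂P ≤
      Real.sqrt (∫ ω, f ω ^ 2 ∂P) * Real.sqrt (∫ ω, g ω ^ 2 ∂P) := by
  set A := Real.sqrt (∫ ω, f ω ^ 2 ∂P) with hA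
  set B := Real.sqrt (∫ ω, g ω ^ 2 ∂P) with hB
  have hIf : 0 ≤ ∫ ω, f ω ^ 2 ∂P := integral_nonneg fun ω => sq_nonneg _
  have hIg : 0 ≤ ∫ ω, g ω ^ 2 ∂P := integral_nonneg fun ω => sq_nonneg _
  have hA2 : A ^ 2 = ∫ ω, f ω ^ 2 ∂P := Real.sq_sqrt hIf
  have hB2 : B ^ 2 = ∫ ω, g ω ^ 2 ∂P := Real.sq_sqrt hIg
  have hAnn : 0 ≤ A := Real.sqrt_nonneg _
  have hBnn : 0 ≤ B := Real.sqrt_nonneg _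
  have hprod := integrable_abs_mul hfm hgm hf2 hg2
  rcases eq_or_lt_of_le hAnn with hA0 | hApos
  · have hf0 : (fun ω => f ω ^ 2) =ᵐ[P] 0 := by
      rw [← integral_eq_zero_iff_of_nonneg (fun ω => sq_nonneg (f ω)) hf2]
      rw [← hA2, ← hA0]; ring
    have : ∫ ω, |f ω| * |g ω| ∂P = 0 := by
      rw [integral_eq_zero_iff_of_nonneg]
      · filter_upwards [hf0] with ω hω
        have : f ω = 0 := by
          have := hω; simp only [Pi.zero_apply] at this
          exact pow_eq_zero_iff (two_ne_zero) |>.mp this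
        simp [this]
      · exact fun ω => mul_nonneg (abs_nonneg _) (abs_nonneg _)
      · exact hprod
    rw [this]; exact mul_nonneg hAnn hBnn
  rcases eq_or_lt_of_le hBnn with hB0 | hBpos
  · have hg0 : (fun ω => g ω ^ 2) =ᵐ[P] 0 := by
      rw [← integral_eq_zero_iff_of_nonneg (fun ω => sq_nonneg (g ω)) hg2]
      rw [← hB2, ← hB0]; ring
    have : ∫ ω, |f ω| * |g ω| ∂P = 0 := by
      rw [integral_eq_zero_iff_of_nonneg]
      · filter_upwards [hg0] with ω hω
        have : g ω = 0 := by
          have := hω; simp only [Pi.zero_apply] at this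
          exact pow_eq_zero_iff (two_ne_zero) |>.mp this
        simp [this]
      · exact fun ω => mul_nonneg (abs_nonneg _) (abs_nonneg _)
      · exact hprod
    rw [this]; exact mul_nonneg hAnn hBnn
  have key : ∫ ω, 2 * A * B * (|f ω| * |g ω|) ∂P ≤ ∫ ω, B^2 * f ω ^2 + A^2 * g ω ^2 ∂P := by
    refine integral_mono ((hprod.const_mul _)) ((hf2.const_mul _).add (hg2.const_mul _)) ?_
    intro ω
    have h := sq_nonneg (B * |f ω| - A * |g ω|)
    have h2 : |f ω|^2 = f ω ^2 := sq_abs _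
    have h3 : |g ω|^2 = g ω ^2 := sq_abs _
    simp only
    nlinarith [abs_nonneg (f ω), abs_nonneg (g ω)]
  rw [integral_const_mul] at key
  rw [integral_add (hf2.const_mul _) (hg2.const_mul _), integral_const_mul,
    integral_const_mul, ← hA2, ← hB2] at key
  have hpos : 0 < 2 * A * B := by positivity
  nlinarith [key]

/-- The partial signal 𝒴¹(η) for the treated potential outcome. -/
noncomputable def partialSignal {Ω 𝒳 : Type*} (X : Ω → 𝒳) (S A Y : Ω → ℝ)
    (g₁ e₁ p : 𝒳 → ℝ) (ω : Ω) : ℝ :=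
  (1 - S ω) * g₁ (X ω) +
    S ω * ((1 - p (X ω)) / p (X ω)) * A ω * (Y ω - g₁ (X ω)) / e₁ (X ω)

set_option maxHeartbeats 1600000 in
/-- Bias bound for the partial signal:
`|E[1{G(X)=i}·(𝒴¹(η) − 𝒴¹(η₀))]| ≤ (3/2)·C̄²·√E[δ_{g₁}²]·(√E[δ_p²] + √E[δ_e²])`. -/
theorem partial_signal_bias_bound
    {Ω : Type*} [MeasurableSpace Ω] (P : Measure Ω) [IsProbabilityMeasure P]
    {𝒳 : Type*} [MeasurableSpace 𝒳]
    (X : Ω → 𝒳) (S A Y : Ω → ℝ)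
    (hX : Measurable X) (hS : Measurable S) (hA : Measurable A) (hY : Measurable Y)
    (hSval : ∀ ω, S ω = 0 ∨ S ω = 1) (hAval : ∀ ω, A ω = 0 ∨ A ω = 1)
    (hY2 : MemLp Y 2 P)
    -- groups
    {d : ℕ} (G : 𝒳 → Fin d) (hG : Measurable G) (i : Fin d)
    -- true nuisance functions
    (p₀ e₁₀ g₁₀ g₀₀ : 𝒳 → ℝ)
    (hp₀m : Measurable p₀) (he₁₀m : Measurable e₁₀)
    (hg₁₀m : Measurable g₁₀) (hg₀₀m : Measurable g₀₀)
    (hp₀val : ∀ x, p₀ x ∈ Set.Ioc (0 : ℝ) 1) (he₁₀val : ∀ x, e₁₀ x ∈ Set.Ioo (0 : ℝ) 1)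
    (hp₀ : P[S | MeasurableSpace.comap X inferInstance] =ᵐ[P] fun ω => p₀ (X ω))
    (he₁₀ : P[fun ω => S ω * A ω | MeasurableSpace.comap X inferInstance] =ᵐ[P]
      fun ω => p₀ (X ω) * e₁₀ (X ω))
    (hg₁₀ : P[fun ω => (if S ω = 1 ∧ A ω = 1 then (1 : ℝ) else 0) * Y ω |
        MeasurableSpace.comap X inferInstance] =ᵐ[P]
      fun ω => p₀ (X ω) * e₁₀ (X ω) * g₁₀ (X ω))
    (hg₀₀ : P[fun ω => (if S ω = 1 ∧ A ω = 0 then (1 : ℝ) else 0) * Y ω |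
        MeasurableSpace.comap X inferInstance] =ᵐ[P]
      fun ω => p₀ (X ω) * (1 - e₁₀ (X ω)) * g₀₀ (X ω))
    -- the nuisance estimate components g₁, e₁, p with bounds
    (Cbar : ℝ) (hCbar : 1 ≤ Cbar)
    (g₁ e₁ p : 𝒳 → ℝ) (hg₁m : Measurable g₁) (he₁m : Measurable e₁) (hpm : Measurable p)
    (he₁val : ∀ x, e₁ x ∈ Set.Ioc (0 : ℝ) 1) (hpval : ∀ x, p x ∈ Set.Ioc (0 : ℝ) 1)
    (hpbound : ∀ x, 1 / Cbar ≤ p x) (he₁bound : ∀ x, 1 / Cbar ≤ e₁ x)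
    -- square-integrability of the errors and the outcome models
    (hδg1 : Integrable (fun ω => (g₁ (X ω) - g₁₀ (X ω)) ^ 2) P)
    (hδp : Integrable (fun ω => (p (X ω) - p₀ (X ω)) ^ 2) P)
    (hδe : Integrable (fun ω => (e₁ (X ω) - e₁₀ (X ω)) ^ 2) P)
    (hg₁2 : Integrable (fun ω => (g₁ (X ω)) ^ 2) P)
    (hg₁₀2 : Integrable (fun ω => (g₁₀ (X ω)) ^ 2) P) :
    |∫ ω, (if G (X ω) = i then (1 : ℝ) else 0) *
        (partialSignal X S A Y g₁ e₁ p ω - partialSignal X S A Y g₁₀ e₁₀ p₀ ω) ∂P| ≤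
      (3 / 2) * Cbar ^ 2 * Real.sqrt (∫ ω, (g₁ (X ω) - g₁₀ (X ω)) ^ 2 ∂P) *
        (Real.sqrt (∫ ω, (p (X ω) - p₀ (X ω)) ^ 2 ∂P) +
          Real.sqrt (∫ ω, (e₁ (X ω) - e₁₀ (X ω)) ^ 2 ∂P)) := by
  classical
  -- trivial RHS nonnegativity
  have hCpos : (0:ℝ) < Cbar := lt_of_lt_of_le one_pos hCbar
  have hRHSnn : 0 ≤ (3 / 2) * Cbar ^ 2 * Real.sqrt (∫ ω, (g₁ (X ω) - g₁₀ (X ω)) ^ 2 ∂P) *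
      (Real.sqrt (∫ ω, (p (X ω) - p₀ (X ω)) ^ 2 ∂P) +
        Real.sqrt (∫ ω, (e₁ (X ω) - e₁₀ (X ω)) ^ 2 ∂P)) := by positivity
  by_cases hInt : Integrable (fun ω => (if G (X ω) = i then (1 : ℝ) else 0) *
      (partialSignal X S A Y g₁ e₁ p ω - partialSignal X S A Y g₁₀ e₁₀ p₀ ω)) P
  swap
  · rw [integral_undef hInt, abs_zero]; exact hRHSnn
  -- setup
  have hm : MeasurableSpace.comap X inferInstance ≤ ‹MeasurableSpace Ω› :=
    measurable_iff_comap_le.mp hX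
  have hXm : @Measurable Ω 𝒳 (MeasurableSpace.comap X inferInstance) inferInstance X :=
    fun s hs => ⟨s, hs, rfl⟩
  have hsm : ∀ {φ : 𝒳 → ℝ}, Measurable φ →
      StronglyMeasurable[MeasurableSpace.comap X inferInstance] (fun ω => φ (X ω)) :=
    fun hφ => (hφ.comp hXm).stronglyMeasurable
  -- basic bounds
  have hS01 : ∀ ω, 0 ≤ S ω ∧ S ω ≤ 1 := fun ω => by rcases hSval ω with h | h <;> simp [h]
  have hSA01 : ∀ ω, 0 ≤ S ω * A ω ∧ S ω * A ω ≤ 1 := fun ω => by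
    rcases hSval ω with h | h <;> rcases hAval ω with h' | h' <;> simp [h, h']
  have hind01 : ∀ ω, |(if G (X ω) = i then (1:ℝ) else 0)| ≤ 1 := fun ω => by
    split <;> simp
  have hcbound : ∀ x, 0 ≤ (1 - p x) / (p x * e₁ x) ∧
      (1 - p x) / (p x * e₁ x) ≤ Cbar ^ 2 - Cbar := by
    intro x
    have h1 := hpval x; have h2 := he₁val x
    have h3 := hpbound x; have h4 := he₁bound x
    have hppos : 0 < p x := h1.1
    have hepos : 0 < e₁ x := h2.1
    have hpe : 0 < p x * e₁ x := mul_pos hppos hepos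
    constructor
    · exact div_nonneg (by linarith [h1.2]) hpe.le
    · rw [div_le_iff₀ hpe]
      have hCinv : 0 < 1 / Cbar := by positivity
      have hmul : (1 / Cbar) * (1 / Cbar) ≤ p x * e₁ x :=
        mul_le_mul h3 h4 hCinv.le hppos.le
      have hCinv2 : (1 / Cbar) * (1 / Cbar) = 1 / Cbar ^ 2 := by
        field_simp
      have hC2 : 1 / Cbar ^ 2 ≤ p x * e₁ x := by rw [← hCinv2]; exact hmul
      have h1p : 1 - p x ≤ 1 - 1 / Cbar := by linarith
      have hnn : 0 ≤ 1 - 1 / Cbar := by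
        rw [sub_nonneg, div_le_one hCpos]; exact hCbar
      calc 1 - p x ≤ 1 - 1 / Cbar := h1p
        _ = (Cbar ^ 2 - Cbar) * (1 / Cbar ^ 2) := by field_simp
        _ ≤ (Cbar ^ 2 - Cbar) * (p x * e₁ x) := by
            refine mul_le_mul_of_nonneg_left hC2 ?_
            nlinarith
  -- measurability on 𝒳
  have hindXm : Measurable (fun x : 𝒳 => if G x = i then (1:ℝ) else 0) :=
    Measurable.ite (hG (measurableSet_singleton i)) measurable_const measurable_const
  have hδgm : Measurable (fun x => g₁ x - g₁₀ x) := hg₁m.sub hg₁₀m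
  have hcm : Measurable (fun x => (1 - p x) / (p x * e₁ x)) :=
    (measurable_const.sub hpm).div (hpm.mul he₁m)
  have hc₀m : Measurable (fun x => (1 - p₀ x) / (p₀ x * e₁₀ x)) :=
    (measurable_const.sub hp₀m).div (hp₀m.mul he₁₀m)
  -- basic integrability
  have hYi : Integrable Y P := hY2.integrable one_le_two
  have hδgXm : AEStronglyMeasurable (fun ω => g₁ (X ω) - g₁₀ (X ω)) P :=
    ((hg₁m.comp hX).sub (hg₁₀m.comp hX)).aestronglyMeasurable
  have hδgXi : Integrable (fun ω => g₁ (X ω) - g₁₀ (X ω)) P :=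
    ((memLp_two_iff_integrable_sq hδgXm).mpr hδg1).integrable one_le_two
  have hg₁Xi : Integrable (fun ω => g₁ (X ω)) P :=
    ((memLp_two_iff_integrable_sq (hg₁m.comp hX).aestronglyMeasurable).mpr hg₁2).integrable
      one_le_two
  have hg₁₀Xi : Integrable (fun ω => g₁₀ (X ω)) P :=
    ((memLp_two_iff_integrable_sq (hg₁₀m.comp hX).aestronglyMeasurable).mpr
      hg₁₀2).integrable one_le_two
  have hSi : Integrable S P := by
    refine Integrable.mono' (integrable_const (1:ℝ)) hS.aestronglyMeasurable
      (ae_of_all _ fun ω => ?_)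
    rw [Real.norm_eq_abs, abs_le]; constructor <;> linarith [(hS01 ω).1, (hS01 ω).2]
  have hSAi : Integrable (fun ω => S ω * A ω) P := by
    refine Integrable.mono' (integrable_const (1:ℝ)) (hS.mul hA).aestronglyMeasurable
      (ae_of_all _ fun ω => ?_)
    rw [Real.norm_eq_abs, abs_le]; constructor <;> linarith [(hSA01 ω).1, (hSA01 ω).2]
  -- bounded-measurable × integrable helper
  have hbm : ∀ (u v : Ω → ℝ) (C : ℝ), Measurable u → (∀ ω, |u ω| ≤ C) →
      Integrable v P → Integrable (fun ω => u ω * v ω) P := by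
    intro u v C hu hC hv
    exact hv.bdd_mul hu.aestronglyMeasurable (ae_of_all _ fun ω => by rw [Real.norm_eq_abs]; exact hC ω)
  have hmc : ∀ (u v : Ω → ℝ), Integrable (fun ω => u ω * v ω) P →
      Integrable (fun ω => v ω * u ω) P := fun u v h =>
    h.congr (ae_of_all _ fun ω => mul_comm _ _)
  -- the indicator form equality
  have hSAfun : (fun ω => S ω * A ω * Y ω) =
      (fun ω => (if S ω = 1 ∧ A ω = 1 then (1:ℝ) else 0) * Y ω) := by
    funext ω
    rcases hSval ω with h | h <;> rcases hAval ω with h' | h' <;>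
      simp [h, h'] <;> norm_num
  have hSAYi : Integrable (fun ω => S ω * A ω * Y ω) P := by
    refine hbm (fun ω => S ω * A ω) Y 1 (hS.mul hA) (fun ω => ?_) hYi
    show |S ω * A ω| ≤ 1
    rw [abs_le]; exact ⟨by linarith [(hSA01 ω).1], (hSA01 ω).2⟩
  -- W functions and their conditional expectations
  have hW1i : Integrable (fun ω => 1 - S ω) P := (integrable_const (1:ℝ)).sub hSi
  have hCE1 : P[fun ω => 1 - S ω|MeasurableSpace.comap X inferInstance] =ᵐ[P] fun ω => 1 - p₀ (X ω) := by
    have hsub : P[fun ω => 1 - S ω|MeasurableSpace.comap X inferInstance] =ᵐ[P]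
        fun ω => (P[fun _ : Ω => (1:ℝ)|MeasurableSpace.comap X inferInstance]) ω - (P[S|MeasurableSpace.comap X inferInstance]) ω :=
      condExp_sub (integrable_const (1:ℝ)) hSi _
    have hone : P[fun _ : Ω => (1:ℝ)|MeasurableSpace.comap X inferInstance] = fun _ => (1:ℝ) :=
      condExp_const (μ := P) hm (1:ℝ)
    filter_upwards [hsub, hp₀] with ω h1 h3
    rw [h1, congrFun hone ω, h3]
  -- generic CE for W(g) = SAY - g(X)·SA
  have hCEW : ∀ (g : 𝒳 → ℝ), Measurable g →
      Integrable (fun ω => g (X ω) * (S ω * A ω)) P →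
      P[fun ω => S ω * A ω * Y ω - g (X ω) * (S ω * A ω)|MeasurableSpace.comap X inferInstance] =ᵐ[P]
        fun ω => p₀ (X ω) * e₁₀ (X ω) * (g₁₀ (X ω) - g (X ω)) := by
    intro g hgm hgSAi
    have hsub : P[fun ω => S ω * A ω * Y ω - g (X ω) * (S ω * A ω)|MeasurableSpace.comap X inferInstance] =ᵐ[P]
        fun ω => (P[fun ω => S ω * A ω * Y ω|MeasurableSpace.comap X inferInstance]) ω -
          (P[fun ω => g (X ω) * (S ω * A ω)|MeasurableSpace.comap X inferInstance]) ω :=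
      condExp_sub hSAYi hgSAi _
    have hpull : P[fun ω => g (X ω) * (S ω * A ω)|MeasurableSpace.comap X inferInstance] =ᵐ[P]
        fun ω => g (X ω) * (P[fun ω => S ω * A ω|MeasurableSpace.comap X inferInstance]) ω :=
      condExp_mul_of_stronglyMeasurable_left (hsm hgm) hgSAi hSAi
    have hY' : P[fun ω => S ω * A ω * Y ω|MeasurableSpace.comap X inferInstance] =ᵐ[P]
        fun ω => p₀ (X ω) * e₁₀ (X ω) * g₁₀ (X ω) := by rw [hSAfun]; exact hg₁₀
    filter_upwards [hsub, hpull, hY', he₁₀] with ω h1 h2 h3 h4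
    rw [h1, h2, h3, h4]; ring
  -- integrability of g(X)·SA for g = g₁, g₁₀
  have hg₁SAi : Integrable (fun ω => g₁ (X ω) * (S ω * A ω)) P := by
    refine hmc (fun ω => S ω * A ω) (fun ω => g₁ (X ω))
      (hbm (fun ω => S ω * A ω) (fun ω => g₁ (X ω)) 1 (hS.mul hA) (fun ω => ?_) hg₁Xi)
    show |S ω * A ω| ≤ 1
    rw [abs_le]; exact ⟨by linarith [(hSA01 ω).1], (hSA01 ω).2⟩
  have hg₁₀SAi : Integrable (fun ω => g₁₀ (X ω) * (S ω * A ω)) P := by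
    refine hmc (fun ω => S ω * A ω) (fun ω => g₁₀ (X ω))
      (hbm (fun ω => S ω * A ω) (fun ω => g₁₀ (X ω)) 1 (hS.mul hA) (fun ω => ?_) hg₁₀Xi)
    show |S ω * A ω| ≤ 1
    rw [abs_le]; exact ⟨by linarith [(hSA01 ω).1], (hSA01 ω).2⟩
  have hW2i : Integrable (fun ω => S ω * A ω * Y ω - g₁ (X ω) * (S ω * A ω)) P :=
    hSAYi.sub hg₁SAi
  have hW3i : Integrable (fun ω => S ω * A ω * Y ω - g₁₀ (X ω) * (S ω * A ω)) P :=
    hSAYi.sub hg₁₀SAi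
  -- pointwise decomposition
  have hpt : ∀ ω, (if G (X ω) = i then (1 : ℝ) else 0) *
      (partialSignal X S A Y g₁ e₁ p ω - partialSignal X S A Y g₁₀ e₁₀ p₀ ω) =
      ((if G (X ω) = i then (1:ℝ) else 0) * (g₁ (X ω) - g₁₀ (X ω))) * (1 - S ω) +
      ((if G (X ω) = i then (1:ℝ) else 0) * ((1 - p (X ω)) / (p (X ω) * e₁ (X ω)))) *
        (S ω * A ω * Y ω - g₁ (X ω) * (S ω * A ω)) -
      ((if G (X ω) = i then (1:ℝ) else 0) * ((1 - p₀ (X ω)) / (p₀ (X ω) * e₁₀ (X ω)))) *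
        (S ω * A ω * Y ω - g₁₀ (X ω) * (S ω * A ω)) := by
    intro ω
    have h1 : p (X ω) ≠ 0 := (hpval (X ω)).1.ne'
    have h2 : e₁ (X ω) ≠ 0 := (he₁val (X ω)).1.ne'
    have h3 : p₀ (X ω) ≠ 0 := (hp₀val (X ω)).1.ne'
    have h4 : e₁₀ (X ω) ≠ 0 := (he₁₀val (X ω)).1.ne'
    have e1 : S ω * ((1 - p (X ω)) / p (X ω)) * A ω * (Y ω - g₁ (X ω)) / e₁ (X ω) =
        ((1 - p (X ω)) / (p (X ω) * e₁ (X ω))) *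
          (S ω * A ω * Y ω - g₁ (X ω) * (S ω * A ω)) := by
      field_simp
    have e2 : S ω * ((1 - p₀ (X ω)) / p₀ (X ω)) * A ω * (Y ω - g₁₀ (X ω)) / e₁₀ (X ω) =
        ((1 - p₀ (X ω)) / (p₀ (X ω) * e₁₀ (X ω))) *
          (S ω * A ω * Y ω - g₁₀ (X ω) * (S ω * A ω)) := by
      field_simp
    unfold partialSignal
    rw [e1, e2]
    ring
  -- integrability of the three pieces
  have hI1 : Integrable (fun ω =>
      ((if G (X ω) = i then (1:ℝ) else 0) * (g₁ (X ω) - g₁₀ (X ω))) * (1 - S ω)) P := by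
    refine (hbm (fun ω => (if G (X ω) = i then (1:ℝ) else 0) * (1 - S ω))
      (fun ω => g₁ (X ω) - g₁₀ (X ω)) 1 ((hindXm.comp hX).mul (measurable_const.sub hS))
      (fun ω => ?_) hδgXi).congr (ae_of_all _ fun ω => by ring)
    rw [abs_mul]
    have h1 := hind01 ω
    have h2 : |1 - S ω| ≤ 1 := by rw [abs_le]; constructor <;> linarith [(hS01 ω).1, (hS01 ω).2]
    calc |(if G (X ω) = i then (1:ℝ) else 0)| * |1 - S ω| ≤ 1 * 1 :=
      mul_le_mul h1 h2 (abs_nonneg _) one_pos.le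
      _ = 1 := one_mul 1
  have hI2 : Integrable (fun ω =>
      ((if G (X ω) = i then (1:ℝ) else 0) * ((1 - p (X ω)) / (p (X ω) * e₁ (X ω)))) *
        (S ω * A ω * Y ω - g₁ (X ω) * (S ω * A ω))) P := by
    refine hbm _ _ (Cbar ^ 2) ((hindXm.comp hX).mul (hcm.comp hX)) (fun ω => ?_) hW2i
    rw [abs_mul]
    have h1 := hind01 ω
    have h2 := hcbound (X ω)
    have h3 : |(1 - p (X ω)) / (p (X ω) * e₁ (X ω))| ≤ Cbar ^ 2 := by
      rw [abs_of_nonneg h2.1]; nlinarith [h2.2, hCpos]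
    calc |(if G (X ω) = i then (1:ℝ) else 0)| * |(1 - p (X ω)) / (p (X ω) * e₁ (X ω))| ≤
        1 * Cbar ^ 2 := mul_le_mul h1 h3 (abs_nonneg _) one_pos.le
      _ = Cbar ^ 2 := one_mul _
  have hI3 : Integrable (fun ω =>
      ((if G (X ω) = i then (1:ℝ) else 0) * ((1 - p₀ (X ω)) / (p₀ (X ω) * e₁₀ (X ω)))) *
        (S ω * A ω * Y ω - g₁₀ (X ω) * (S ω * A ω))) P := by
    refine ((hI1.add hI2).sub hInt).congr (ae_of_all _ fun ω => ?_)
    simp only [Pi.add_apply, Pi.sub_apply]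
    rw [hpt ω]; ring
  -- compute the three integrals via conditional expectation
  have hE1 : ∫ ω, ((if G (X ω) = i then (1:ℝ) else 0) * (g₁ (X ω) - g₁₀ (X ω))) * (1 - S ω) ∂P =
      ∫ ω, ((if G (X ω) = i then (1:ℝ) else 0) * (g₁ (X ω) - g₁₀ (X ω))) * (1 - p₀ (X ω)) ∂P :=
    integral_mul_eq_of_condexp hm (hsm (hindXm.mul hδgm)) hI1 hW1i hCE1
  have hE2 : ∫ ω, ((if G (X ω) = i then (1:ℝ) else 0) *
        ((1 - p (X ω)) / (p (X ω) * e₁ (X ω)))) *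
        (S ω * A ω * Y ω - g₁ (X ω) * (S ω * A ω)) ∂P =
      ∫ ω, ((if G (X ω) = i then (1:ℝ) else 0) * ((1 - p (X ω)) / (p (X ω) * e₁ (X ω)))) *
        (p₀ (X ω) * e₁₀ (X ω) * (g₁₀ (X ω) - g₁ (X ω))) ∂P :=
    integral_mul_eq_of_condexp hm (hsm (hindXm.mul hcm)) hI2 hW2i (hCEW g₁ hg₁m hg₁SAi)
  have hE3 : ∫ ω, ((if G (X ω) = i then (1:ℝ) else 0) *
        ((1 - p₀ (X ω)) / (p₀ (X ω) * e₁₀ (X ω)))) *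
        (S ω * A ω * Y ω - g₁₀ (X ω) * (S ω * A ω)) ∂P = 0 := by
    refine (integral_mul_eq_of_condexp hm (hsm (hindXm.mul hc₀m)) hI3 hW3i
      (hCEW g₁₀ hg₁₀m hg₁₀SAi)).trans ?_
    have : ∀ ω, ((if G (X ω) = i then (1:ℝ) else 0) *
        ((1 - p₀ (X ω)) / (p₀ (X ω) * e₁₀ (X ω)))) *
        (p₀ (X ω) * e₁₀ (X ω) * (g₁₀ (X ω) - g₁₀ (X ω))) = 0 := fun ω => by ring
    simp only [Pi.mul_apply, this, integral_zero]
  -- integrability of the two target integrands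
  have hJ1 : Integrable (fun ω =>
      ((if G (X ω) = i then (1:ℝ) else 0) * (g₁ (X ω) - g₁₀ (X ω))) * (1 - p₀ (X ω))) P := by
    refine (hbm (fun ω => (if G (X ω) = i then (1:ℝ) else 0) * (1 - p₀ (X ω)))
      (fun ω => g₁ (X ω) - g₁₀ (X ω)) 1 ((hindXm.comp hX).mul
        (measurable_const.sub (hp₀m.comp hX))) (fun ω => ?_) hδgXi).congr
      (ae_of_all _ fun ω => by ring)
    rw [abs_mul]
    have h1 := hind01 ω
    have h2 : |1 - p₀ (X ω)| ≤ 1 := by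
      rw [abs_le]; have := hp₀val (X ω); constructor <;>
        [linarith [this.2]; linarith [this.1]]
    calc |(if G (X ω) = i then (1:ℝ) else 0)| * |1 - p₀ (X ω)| ≤ 1 * 1 :=
      mul_le_mul h1 h2 (abs_nonneg _) one_pos.le
      _ = 1 := one_mul 1
  have hJ2 : Integrable (fun ω =>
      ((if G (X ω) = i then (1:ℝ) else 0) * ((1 - p (X ω)) / (p (X ω) * e₁ (X ω)))) *
        (p₀ (X ω) * e₁₀ (X ω) * (g₁₀ (X ω) - g₁ (X ω)))) P := by
    refine (hbm (fun ω => -((if G (X ω) = i then (1:ℝ) else 0) *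
        ((1 - p (X ω)) / (p (X ω) * e₁ (X ω))) * (p₀ (X ω) * e₁₀ (X ω))))
      (fun ω => g₁ (X ω) - g₁₀ (X ω)) (Cbar ^ 2)
      (((hindXm.comp hX).mul (hcm.comp hX)).mul ((hp₀m.comp hX).mul (he₁₀m.comp hX))).neg
      (fun ω => ?_) hδgXi).congr (ae_of_all _ fun ω => by ring)
    rw [abs_neg, abs_mul, abs_mul]
    have h1 := hind01 ω
    have h2 := hcbound (X ω)
    have hp0 := hp₀val (X ω); have he0 := he₁₀val (X ω)
    have h3 : |(1 - p (X ω)) / (p (X ω) * e₁ (X ω))| ≤ Cbar ^ 2 := by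
      rw [abs_of_nonneg h2.1]; nlinarith [h2.2, hCpos]
    have h4 : |p₀ (X ω) * e₁₀ (X ω)| ≤ 1 := by
      rw [abs_of_nonneg (mul_nonneg hp0.1.le he0.1.le)]
      nlinarith [hp0.1, hp0.2, he0.1, he0.2]
    calc |(if G (X ω) = i then (1:ℝ) else 0)| * |(1 - p (X ω)) / (p (X ω) * e₁ (X ω))| *
        |p₀ (X ω) * e₁₀ (X ω)| ≤ (1 * Cbar ^ 2) * 1 := by
          refine mul_le_mul (mul_le_mul h1 h3 (abs_nonneg _) one_pos.le) h4 (abs_nonneg _) ?_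
          positivity
      _ = Cbar ^ 2 := by ring
  -- combine
  have hmain : ∫ ω, (if G (X ω) = i then (1 : ℝ) else 0) *
      (partialSignal X S A Y g₁ e₁ p ω - partialSignal X S A Y g₁₀ e₁₀ p₀ ω) ∂P =
      ∫ ω, ((if G (X ω) = i then (1:ℝ) else 0) * (g₁ (X ω) - g₁₀ (X ω))) *
        ((1 - p₀ (X ω)) - (1 - p (X ω)) / (p (X ω) * e₁ (X ω)) *
          (p₀ (X ω) * e₁₀ (X ω))) ∂P := by
    rw [show (fun ω => (if G (X ω) = i then (1 : ℝ) else 0) *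
        (partialSignal X S A Y g₁ e₁ p ω - partialSignal X S A Y g₁₀ e₁₀ p₀ ω)) = _ from
      funext hpt]
    have hI12 : Integrable (fun ω =>
        ((if G (X ω) = i then (1:ℝ) else 0) * (g₁ (X ω) - g₁₀ (X ω))) * (1 - S ω) +
        ((if G (X ω) = i then (1:ℝ) else 0) * ((1 - p (X ω)) / (p (X ω) * e₁ (X ω)))) *
          (S ω * A ω * Y ω - g₁ (X ω) * (S ω * A ω))) P := hI1.add hI2
    rw [integral_sub hI12 hI3, integral_add hI1 hI2, hE1, hE2, hE3, sub_zero,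
      ← integral_add hJ1 hJ2]
    refine integral_congr_ae (ae_of_all _ fun ω => ?_)
    simp only [Pi.add_apply]
    ring
  rw [hmain]
  -- key pointwise bound on D
  have hD : ∀ x, |(1 - p₀ x) - (1 - p x) / (p x * e₁ x) * (p₀ x * e₁₀ x)| ≤
      3 / 2 * Cbar ^ 2 * (|p x - p₀ x| + |e₁ x - e₁₀ x|) := by
    intro x
    have h1 := hpval x; have h2 := he₁val x
    have hp0 := hp₀val x; have he0 := he₁₀val x
    have hpe : 0 < p x * e₁ x := mul_pos h1.1 h2.1
    have hc := hcbound x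
    have hident : (1 - p₀ x) - (1 - p x) / (p x * e₁ x) * (p₀ x * e₁₀ x) =
        (p x - p₀ x) + (1 - p x) / (p x * e₁ x) *
          ((p x - p₀ x) * e₁ x + p₀ x * (e₁ x - e₁₀ x)) := by
      have hp' := h1.1.ne'; have he' := h2.1.ne'
      field_simp
      ring
    rw [hident]
    have habs1 : |(p x - p₀ x) * e₁ x + p₀ x * (e₁ x - e₁₀ x)| ≤
        |p x - p₀ x| + |e₁ x - e₁₀ x| := by
      calc |(p x - p₀ x) * e₁ x + p₀ x * (e₁ x - e₁₀ x)| ≤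
          |(p x - p₀ x) * e₁ x| + |p₀ x * (e₁ x - e₁₀ x)| := abs_add_le _ _
        _ = |p x - p₀ x| * |e₁ x| + |p₀ x| * |e₁ x - e₁₀ x| := by rw [abs_mul, abs_mul]
        _ ≤ |p x - p₀ x| * 1 + 1 * |e₁ x - e₁₀ x| := by
            refine add_le_add (mul_le_mul_of_nonneg_left ?_ (abs_nonneg _))
              (mul_le_mul_of_nonneg_right ?_ (abs_nonneg _))
            · rw [abs_of_pos h2.1]; exact h2.2
            · rw [abs_of_pos hp0.1]; exact hp0.2
        _ = |p x - p₀ x| + |e₁ x - e₁₀ x| := by ring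
    calc |(p x - p₀ x) + (1 - p x) / (p x * e₁ x) *
          ((p x - p₀ x) * e₁ x + p₀ x * (e₁ x - e₁₀ x))| ≤
        |p x - p₀ x| + |(1 - p x) / (p x * e₁ x)| *
          |(p x - p₀ x) * e₁ x + p₀ x * (e₁ x - e₁₀ x)| := by
          rw [← abs_mul]; exact abs_add_le _ _
      _ ≤ |p x - p₀ x| + (Cbar ^ 2 - Cbar) * (|p x - p₀ x| + |e₁ x - e₁₀ x|) := by
          refine add_le_add_right (mul_le_mul ?_ habs1 (abs_nonneg _) ?_) _
          · rw [abs_of_nonneg hc.1]; exact hc.2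
          · nlinarith [hCbar]
      _ ≤ 3 / 2 * Cbar ^ 2 * (|p x - p₀ x| + |e₁ x - e₁₀ x|) := by
          have h5 : |p x - p₀ x| ≤ |p x - p₀ x| + |e₁ x - e₁₀ x| := by
            linarith [abs_nonneg (e₁ x - e₁₀ x)]
          have h6 : (1:ℝ) ≤ 1 / 2 * Cbar ^ 2 + Cbar := by nlinarith [sq_nonneg (Cbar - 1)]
          have h7 : |p x - p₀ x| ≤ (1 / 2 * Cbar ^ 2 + Cbar) *
              (|p x - p₀ x| + |e₁ x - e₁₀ x|) := by
            calc |p x - p₀ x| ≤ |p x - p₀ x| + |e₁ x - e₁₀ x| := h5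
              _ = 1 * (|p x - p₀ x| + |e₁ x - e₁₀ x|) := (one_mul _).symm
              _ ≤ (1 / 2 * Cbar ^ 2 + Cbar) * (|p x - p₀ x| + |e₁ x - e₁₀ x|) :=
                mul_le_mul_of_nonneg_right h6
                  (by positivity)
          nlinarith [h7]
  -- measurability for CS
  have hδpXm : AEStronglyMeasurable (fun ω => p (X ω) - p₀ (X ω)) P :=
    ((hpm.comp hX).sub (hp₀m.comp hX)).aestronglyMeasurable
  have hδeXm : AEStronglyMeasurable (fun ω => e₁ (X ω) - e₁₀ (X ω)) P :=
    ((he₁m.comp hX).sub (he₁₀m.comp hX)).aestronglyMeasurable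
  have hgp := integrable_abs_mul hδgXm hδpXm hδg1 hδp
  have hge := integrable_abs_mul hδgXm hδeXm hδg1 hδe
  have hCSp := integral_abs_mul_le hδgXm hδpXm hδg1 hδp
  have hCSe := integral_abs_mul_le hδgXm hδeXm hδg1 hδe
  -- final bound
  have hIntD : Integrable (fun ω =>
      ((if G (X ω) = i then (1:ℝ) else 0) * (g₁ (X ω) - g₁₀ (X ω))) *
        ((1 - p₀ (X ω)) - (1 - p (X ω)) / (p (X ω) * e₁ (X ω)) *
          (p₀ (X ω) * e₁₀ (X ω)))) P := by
    refine (hJ1.add hJ2).congr (ae_of_all _ fun ω => ?_)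
    simp only [Pi.add_apply]
    ring
  have hbound1 : |∫ ω, ((if G (X ω) = i then (1:ℝ) else 0) * (g₁ (X ω) - g₁₀ (X ω))) *
        ((1 - p₀ (X ω)) - (1 - p (X ω)) / (p (X ω) * e₁ (X ω)) *
          (p₀ (X ω) * e₁₀ (X ω))) ∂P| ≤
      ∫ ω, 3 / 2 * Cbar ^ 2 * (|g₁ (X ω) - g₁₀ (X ω)| * |p (X ω) - p₀ (X ω)| +
        |g₁ (X ω) - g₁₀ (X ω)| * |e₁ (X ω) - e₁₀ (X ω)|) ∂P := by
    calc |∫ ω, ((if G (X ω) = i then (1:ℝ) else 0) * (g₁ (X ω) - g₁₀ (X ω))) *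
        ((1 - p₀ (X ω)) - (1 - p (X ω)) / (p (X ω) * e₁ (X ω)) *
          (p₀ (X ω) * e₁₀ (X ω))) ∂P| ≤
        ∫ ω, |((if G (X ω) = i then (1:ℝ) else 0) * (g₁ (X ω) - g₁₀ (X ω))) *
        ((1 - p₀ (X ω)) - (1 - p (X ω)) / (p (X ω) * e₁ (X ω)) *
          (p₀ (X ω) * e₁₀ (X ω)))| ∂P := by
          simpa [Real.norm_eq_abs] using norm_integral_le_integral_norm
            (μ := P) (fun ω => ((if G (X ω) = i then (1:ℝ) else 0) * (g₁ (X ω) - g₁₀ (X ω))) *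
              ((1 - p₀ (X ω)) - (1 - p (X ω)) / (p (X ω) * e₁ (X ω)) *
                (p₀ (X ω) * e₁₀ (X ω))))
      _ ≤ ∫ ω, 3 / 2 * Cbar ^ 2 * (|g₁ (X ω) - g₁₀ (X ω)| * |p (X ω) - p₀ (X ω)| +
        |g₁ (X ω) - g₁₀ (X ω)| * |e₁ (X ω) - e₁₀ (X ω)|) ∂P := by
          refine integral_mono hIntD.abs (((hgp.add hge).const_mul (3 / 2 * Cbar ^ 2)).congr
            (ae_of_all _ fun ω => by simp only [Pi.add_apply])) ?_
          intro ω
          simp only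
          rw [abs_mul, abs_mul]
          have h1 := hind01 (ω)
          have h2 := hD (X ω)
          have h3 : |(if G (X ω) = i then (1:ℝ) else 0)| * |g₁ (X ω) - g₁₀ (X ω)| ≤
              |g₁ (X ω) - g₁₀ (X ω)| := by
            nlinarith [abs_nonneg (g₁ (X ω) - g₁₀ (X ω)), abs_nonneg
              (if G (X ω) = i then (1:ℝ) else 0)]
          calc |(if G (X ω) = i then (1:ℝ) else 0)| * |g₁ (X ω) - g₁₀ (X ω)| *
              |(1 - p₀ (X ω)) - (1 - p (X ω)) / (p (X ω) * e₁ (X ω)) *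
                (p₀ (X ω) * e₁₀ (X ω))| ≤
              |g₁ (X ω) - g₁₀ (X ω)| * (3 / 2 * Cbar ^ 2 *
                (|p (X ω) - p₀ (X ω)| + |e₁ (X ω) - e₁₀ (X ω)|)) := by
                refine mul_le_mul h3 h2 (abs_nonneg _) (abs_nonneg _)
            _ = 3 / 2 * Cbar ^ 2 * (|g₁ (X ω) - g₁₀ (X ω)| * |p (X ω) - p₀ (X ω)| +
                |g₁ (X ω) - g₁₀ (X ω)| * |e₁ (X ω) - e₁₀ (X ω)|) := by ring
  have hsplit : ∫ ω, 3 / 2 * Cbar ^ 2 * (|g₁ (X ω) - g₁₀ (X ω)| * |p (X ω) - p₀ (X ω)| +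
        |g₁ (X ω) - g₁₀ (X ω)| * |e₁ (X ω) - e₁₀ (X ω)|) ∂P =
      3 / 2 * Cbar ^ 2 * ((∫ ω, |g₁ (X ω) - g₁₀ (X ω)| * |p (X ω) - p₀ (X ω)| ∂P) +
        ∫ ω, |g₁ (X ω) - g₁₀ (X ω)| * |e₁ (X ω) - e₁₀ (X ω)| ∂P) := by
    rw [integral_const_mul, integral_add hgp hge]
  refine hbound1.trans ?_
  rw [hsplit]
  have hfinal : (∫ ω, |g₁ (X ω) - g₁₀ (X ω)| * |p (X ω) - p₀ (X ω)| ∂P) +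
      ∫ ω, |g₁ (X ω) - g₁₀ (X ω)| * |e₁ (X ω) - e₁₀ (X ω)| ∂P ≤
      Real.sqrt (∫ ω, (g₁ (X ω) - g₁₀ (X ω)) ^ 2 ∂P) *
        (Real.sqrt (∫ ω, (p (X ω) - p₀ (X ω)) ^ 2 ∂P) +
          Real.sqrt (∫ ω, (e₁ (X ω) - e₁₀ (X ω)) ^ 2 ∂P)) := by
    rw [mul_add]
    exact add_le_add hCSp hCSe
  calc 3 / 2 * Cbar ^ 2 * ((∫ ω, |g₁ (X ω) - g₁₀ (X ω)| * |p (X ω) - p₀ (X ω)| ∂P) +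
        ∫ ω, |g₁ (X ω) - g₁₀ (X ω)| * |e₁ (X ω) - e₁₀ (X ω)| ∂P) ≤
      3 / 2 * Cbar ^ 2 * (Real.sqrt (∫ ω, (g₁ (X ω) - g₁₀ (X ω)) ^ 2 ∂P) *
        (Real.sqrt (∫ ω, (p (X ω) - p₀ (X ω)) ^ 2 ∂P) +
          Real.sqrt (∫ ω, (e₁ (X ω) - e₁₀ (X ω)) ^ 2 ∂P))) := by
        refine mul_le_mul_of_nonneg_left hfinal ?_
        positivity
    _ = (3 / 2) * Cbar ^ 2 * Real.sqrt (∫ ω, (g₁ (X ω) - g₁₀ (X ω)) ^ 2 ∂P) *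
        (Real.sqrt (∫ ω, (p (X ω) - p₀ (X ω)) ^ 2 ∂P) +
          Real.sqrt (∫ ω, (e₁ (X ω) - e₁₀ (X ω)) ^ 2 ∂P)) := by ring
end

section
/- In the data-model setting, let η = (g₁, g₀, e₁, p) be a nuisance vector with p, e₁ measurable functions valued in (0,1], p(x) ≥ 1/C̄ and e₁(x) ≥ 1/C̄ for all x (C̄ ≥ 1), set δ_{g₁} := g₁ − g₁₀, δ_p := p − p₀, δ_e := e₁ − e₁₀, all square-integrable with respect to the law of X. Assume p₀(x) ≥ ε_p and e₁₀(x) ≥ ε_e for constants ε_p, ε_e ∈ (0,1), and E[1{S=1, A=1}·(Y − g₁₀(X))² | σ(X)] ≤ σ̄²·p₀(X)·e₁₀(X) almost surely for some σ̄² < ∞. Then for any group i, E[(1{G(X) = i}·(𝒴¹(η) − 𝒴¹(η₀)))²] ≤ C·(√(E[δ_{g₁}(X)²]) + √(E[δ_p(X)²]) + √(E[δ_e(X)²]))², where C := max((3·C̄² + √2)²/(ε_p·ε_e), (9/4)·σ̄²·C̄⁴/(ε_p·ε_e)). -/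
open MeasureTheory ProbabilityTheory Filter Topology

lemma memLp_two_condexp_aux {α : Type*} {m m0 : MeasurableSpace α} (hm : m ≤ m0)
    (μ : Measure α) [IsFiniteMeasure μ] {f : α → ℝ} (hf : MemLp f 2 μ) :
    MemLp (μ[f|m]) 2 μ := by
  have hfint : Integrable f μ := hf.integrable one_le_two
  set fL : Lp ℝ 2 μ := hf.toLp f with hfL
  set g := (condExpL2 ℝ ℝ hm fL : lpMeas ℝ ℝ m 2 μ) with hg
  have hgmem : MemLp ((g : Lp ℝ 2 μ) : α → ℝ) 2 μ := Lp.memLp _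
  have heq : ((g : Lp ℝ 2 μ) : α → ℝ) =ᵐ[μ] μ[f|m] := by
    refine ae_eq_condExp_of_forall_setIntegral_eq hm hfint
      (fun s hs hμs => (hgmem.integrable one_le_two).integrableOn)
      (fun s hs hμs => ?_) (lpMeas.aestronglyMeasurable g)
    calc ∫ x in s, ((g : Lp ℝ 2 μ) : α → ℝ) x ∂μ = ∫ x in s, fL x ∂μ :=
          integral_condExpL2_eq hm fL hs hμs.ne
      _ = ∫ x in s, f x ∂μ :=
          integral_congr_ae (ae_restrict_of_ae (hf.coeFn_toLp))
  exact hgmem.ae_eq heq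

lemma integrable_mul_of_sq_aux {α : Type*} [MeasurableSpace α] {μ : Measure α} {u v : α → ℝ}
    (hu : AEStronglyMeasurable u μ) (hv : AEStronglyMeasurable v μ)
    (hu2 : Integrable (fun x => u x ^ 2) μ) (hv2 : Integrable (fun x => v x ^ 2) μ) :
    Integrable (fun x => u x * v x) μ := by
  refine Integrable.mono ((hu2.add hv2).const_mul (1/2)) (hu.mul hv) ?_
  filter_upwards with x
  simp only [Pi.add_apply, Real.norm_eq_abs, abs_mul]
  rw [abs_of_nonneg (by positivity : (0:ℝ) ≤ u x ^ 2 + v x ^ 2),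
    abs_of_nonneg (by norm_num : (0:ℝ) ≤ (1:ℝ)/2)]
  nlinarith [abs_nonneg (u x), abs_nonneg (v x), sq_abs (u x), sq_abs (v x),
    sq_nonneg (|u x| - |v x|)]

lemma integral_mul_le_sqrt_aux {α : Type*} [MeasurableSpace α] {μ : Measure α} {u v : α → ℝ}
    (hu : AEStronglyMeasurable u μ) (hv : AEStronglyMeasurable v μ)
    (hu2 : Integrable (fun x => u x ^ 2) μ) (hv2 : Integrable (fun x => v x ^ 2) μ) :
    ∫ x, u x * v x ∂μ ≤ Real.sqrt (∫ x, u x ^ 2 ∂μ) * Real.sqrt (∫ x, v x ^ 2 ∂μ) := by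
  have huv : Integrable (fun x => u x * v x) μ := integrable_mul_of_sq_aux hu hv hu2 hv2
  have humem : MemLp u 2 μ := (memLp_two_iff_integrable_sq hu).mpr hu2
  have hvmem : MemLp v 2 μ := (memLp_two_iff_integrable_sq hv).mpr hv2
  have h2 : (2:ℝ).HolderConjugate 2 := by constructor <;> norm_num
  have key := integral_mul_le_Lp_mul_Lq_of_nonneg (μ := μ) h2
      (Eventually.of_forall fun x => abs_nonneg (u x))
      (Eventually.of_forall fun x => abs_nonneg (v x))
      (by rw [show ENNReal.ofReal 2 = 2 by norm_num]; exact humem.abs)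
      (by rw [show ENNReal.ofReal 2 = 2 by norm_num]; exact hvmem.abs)
  have habs : ∫ x, u x * v x ∂μ ≤ ∫ x, |u x| * |v x| ∂μ := by
    refine integral_mono_ae huv (by simpa [abs_mul] using huv.abs) ?_
    filter_upwards with x
    rw [← abs_mul]
    exact le_abs_self _
  refine habs.trans ?_
  have e1 : ∀ w : α → ℝ, (∫ x, |w x| ^ (2:ℝ) ∂μ) = ∫ x, w x ^ 2 ∂μ := by
    intro w; refine integral_congr_ae (Eventually.of_forall fun x => ?_)
    simp [Real.rpow_natCast, sq_abs]
  calc ∫ x, |u x| * |v x| ∂μ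
      ≤ (∫ x, |u x| ^ (2:ℝ) ∂μ) ^ ((1:ℝ)/2) * (∫ x, |v x| ^ (2:ℝ) ∂μ) ^ ((1:ℝ)/2) := key
    _ = Real.sqrt (∫ x, u x ^ 2 ∂μ) * Real.sqrt (∫ x, v x ^ 2 ∂μ) := by
        rw [e1 u, e1 v, ← Real.sqrt_eq_rpow, ← Real.sqrt_eq_rpow]

set_option maxHeartbeats 1000000 in
lemma key_alg {Cbar εp εe pp p₀ e₁ e₁₀ : ℝ} (hC : 1 ≤ Cbar)
    (hp1 : pp ≤ 1) (hpb : 1/Cbar ≤ pp) (he1 : e₁ ≤ 1) (heb : 1/Cbar ≤ e₁)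
    (hp₀l : εp ≤ p₀) (hp₀u : p₀ ≤ 1) (he₀l : εe ≤ e₁₀) (he₀u : e₁₀ ≤ 1)
    (hεp : 0 < εp) (hεe : 0 < εe) :
    ((1 - pp)/(pp * e₁) - (1 - p₀)/(p₀ * e₁₀))^2 * (p₀ * e₁₀) ≤
      Cbar^4/(εp*εe) * (|pp - p₀| + |e₁ - e₁₀|)^2 := by
  have hC0 : (0:ℝ) < Cbar := lt_of_lt_of_le one_pos hC
  have hpp : 0 < pp := lt_of_lt_of_le (by positivity) hpb
  have he₁ : 0 < e₁ := lt_of_lt_of_le (by positivity) heb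
  have hp₀ : 0 < p₀ := lt_of_lt_of_le hεp hp₀l
  have he₁₀ : 0 < e₁₀ := lt_of_lt_of_le hεe he₀l
  have h1 : 1 ≤ pp * Cbar := by
    have := (div_le_iff₀ hC0).mp hpb; linarith
  have h2 : 1 ≤ e₁ * Cbar := by
    have := (div_le_iff₀ hC0).mp heb; linarith
  have q1 : 1 ≤ (pp*Cbar)^2 := by nlinarith
  have q2 : 1 ≤ (e₁*Cbar)^2 := by nlinarith
  set A := (p₀ - pp)/(pp*p₀*e₁) with hA
  set B := (1-p₀)*(e₁₀-e₁)/(p₀*e₁*e₁₀) with hB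
  have hAB : (1 - pp)/(pp * e₁) - (1 - p₀)/(p₀ * e₁₀) = A + B := by
    rw [hA, hB]; field_simp; ring
  set K := Cbar^2/Real.sqrt (εp*εe) with hK
  have hKnn : 0 ≤ K := by positivity
  have hK2 : K^2 = Cbar^4/(εp*εe) := by
    rw [hK, div_pow, Real.sq_sqrt (by positivity)]; ring_nf
  have hA2 : A^2*(p₀*e₁₀) ≤ K^2 * (pp-p₀)^2 := by
    rw [hK2]
    have e1 : A^2*(p₀*e₁₀) = (pp-p₀)^2 * e₁₀ / (pp^2*p₀*e₁^2) := by
      rw [hA]; field_simp; ring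
    have e2 : Cbar^4/(εp*εe) * (pp-p₀)^2 = Cbar^4*(pp-p₀)^2/(εp*εe) := by ring
    rw [e1, e2, div_le_div_iff₀ (by positivity) (by positivity)]
    have key : e₁₀*(εp*εe) ≤ Cbar^4*(pp^2*p₀*e₁^2) := by
      have w1 : p₀ ≤ (e₁*Cbar)^2*p₀ := le_mul_of_one_le_left hp₀.le q2
      have w2 : (e₁*Cbar)^2*p₀ ≤ (pp*Cbar)^2*((e₁*Cbar)^2*p₀) :=
        le_mul_of_one_le_left (by positivity) q1
      have w3 : (pp*Cbar)^2*((e₁*Cbar)^2*p₀) = Cbar^4*(pp^2*p₀*e₁^2) := by ring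
      have k2 : e₁₀*(εp*εe) ≤ εp := by
        nlinarith [mul_le_one₀ he₀u hεe.le (le_trans he₀l he₀u)]
      linarith
    have h := mul_le_mul_of_nonneg_left key (sq_nonneg (pp-p₀))
    ring_nf at h ⊢
    linarith
  have hB2 : B^2*(p₀*e₁₀) ≤ K^2 * (e₁-e₁₀)^2 := by
    rw [hK2]
    have e1 : B^2*(p₀*e₁₀) = (e₁-e₁₀)^2 * (1-p₀)^2 / (p₀*e₁^2*e₁₀) := by
      rw [hB]; field_simp; ring
    have e2 : Cbar^4/(εp*εe) * (e₁-e₁₀)^2 = Cbar^4*(e₁-e₁₀)^2/(εp*εe) := by ring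
    rw [e1, e2, div_le_div_iff₀ (by positivity) (by positivity)]
    have key : (1-p₀)^2*(εp*εe) ≤ Cbar^4*(p₀*e₁^2*e₁₀) := by
      have w0 : εp*εe ≤ p₀*e₁₀ := mul_le_mul hp₀l he₀l hεe.le hp₀.le
      have w1 : p₀*e₁₀ ≤ Cbar^2*(p₀*e₁₀) :=
        le_mul_of_one_le_left (by positivity) (by nlinarith)
      have w2 : Cbar^2*(p₀*e₁₀) ≤ (e₁*Cbar)^2*(Cbar^2*(p₀*e₁₀)) :=
        le_mul_of_one_le_left (by positivity) q2
      have w3 : (e₁*Cbar)^2*(Cbar^2*(p₀*e₁₀)) = Cbar^4*(p₀*e₁^2*e₁₀) := by ring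
      have k2 : (1-p₀)^2*(εp*εe) ≤ εp*εe :=
        mul_le_of_le_one_left (by positivity) (by nlinarith)
      linarith
    have h := mul_le_mul_of_nonneg_left key (sq_nonneg (e₁-e₁₀))
    ring_nf at h ⊢
    linarith
  set s := Real.sqrt (p₀*e₁₀) with hs
  have hsnn : 0 ≤ s := Real.sqrt_nonneg _
  have hs2 : s^2 = p₀*e₁₀ := Real.sq_sqrt (by positivity)
  have hAs : |A| * s ≤ K * |pp-p₀| := by
    refine le_of_pow_le_pow_left₀ two_ne_zero (by positivity) ?_
    calc (|A| * s)^2 = A^2*(p₀*e₁₀) := by rw [mul_pow, sq_abs, hs2]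
      _ ≤ K^2*(pp-p₀)^2 := hA2
      _ = (K * |pp-p₀|)^2 := by rw [mul_pow, sq_abs]
  have hBs : |B| * s ≤ K * |e₁-e₁₀| := by
    refine le_of_pow_le_pow_left₀ two_ne_zero (by positivity) ?_
    calc (|B| * s)^2 = B^2*(p₀*e₁₀) := by rw [mul_pow, sq_abs, hs2]
      _ ≤ K^2*(e₁-e₁₀)^2 := hB2
      _ = (K * |e₁-e₁₀|)^2 := by rw [mul_pow, sq_abs]
  calc ((1 - pp)/(pp * e₁) - (1 - p₀)/(p₀ * e₁₀))^2 * (p₀ * e₁₀)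
      = ((A+B)*s)^2 := by rw [hAB, mul_pow, hs2]
    _ = (|(A+B)*s|)^2 := (sq_abs _).symm
    _ ≤ (|A| * s + |B| * s)^2 := by
        apply pow_le_pow_left₀ (abs_nonneg _)
        rw [abs_mul, abs_of_nonneg hsnn, ← add_mul]
        exact mul_le_mul_of_nonneg_right (abs_add_le _ _) hsnn
    _ ≤ (K * |pp-p₀| + K * |e₁-e₁₀|)^2 := by
        apply pow_le_pow_left₀ (by positivity)
        exact add_le_add hAs hBs
    _ = K^2 * (|pp-p₀| + |e₁-e₁₀|)^2 := by ring
    _ = Cbar^4/(εp*εe) * (|pp - p₀| + |e₁ - e₁₀|)^2 := by rw [hK2]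


lemma partialSignal_diff_eq {Ω 𝒳 : Type*} (X : Ω → 𝒳) (S A Y : Ω → ℝ)
    (g₁ e₁ p g₁₀ e₁₀ p₀ : 𝒳 → ℝ) (c : ℝ) (ω : Ω)
    (h1 : p (X ω) ≠ 0) (h2 : e₁ (X ω) ≠ 0) (h3 : p₀ (X ω) ≠ 0) (h4 : e₁₀ (X ω) ≠ 0) :
    c * (partialSignal X S A Y g₁ e₁ p ω - partialSignal X S A Y g₁₀ e₁₀ p₀ ω)
      = (c * ((1 - S ω) - S ω * A ω * ((1 - p (X ω))/(p (X ω) * e₁ (X ω))))) *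
          (g₁ (X ω) - g₁₀ (X ω)) +
        ((c * (S ω * A ω)) * (((1 - p (X ω))/(p (X ω) * e₁ (X ω))) -
          ((1 - p₀ (X ω))/(p₀ (X ω) * e₁₀ (X ω))))) * (Y ω - g₁₀ (X ω)) := by
  simp only [partialSignal]
  field_simp
  ring

set_option maxHeartbeats 2000000 in
/-- Mean-squared-error bound for the partial signal:
`E[(1{G(X)=i}·(𝒴¹(η) − 𝒴¹(η₀)))²] ≤ C·(√E[δ_{g₁}²] + √E[δ_p²] + √E[δ_e²])²`,
with `C = max((3C̄² + √2)²/(ε_p·ε_e), (9/4)·σ̄²·C̄⁴/(ε_p·ε_e))`. -/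
theorem partial_signal_mse_bound
    {Ω : Type*} [MeasurableSpace Ω] (P : Measure Ω) [IsProbabilityMeasure P]
    {𝒳 : Type*} [MeasurableSpace 𝒳]
    (X : Ω → 𝒳) (S A Y : Ω → ℝ)
    (hX : Measurable X) (hS : Measurable S) (hA : Measurable A) (hY : Measurable Y)
    (hSval : ∀ ω, S ω = 0 ∨ S ω = 1) (hAval : ∀ ω, A ω = 0 ∨ A ω = 1)
    (hY2 : MemLp Y 2 P)
    -- groups
    {d : ℕ} (G : 𝒳 → Fin d) (hG : Measurable G) (i : Fin d)
    -- true nuisance functions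
    (p₀ e₁₀ g₁₀ g₀₀ : 𝒳 → ℝ)
    (hp₀m : Measurable p₀) (he₁₀m : Measurable e₁₀)
    (hg₁₀m : Measurable g₁₀) (hg₀₀m : Measurable g₀₀)
    (hp₀val : ∀ x, p₀ x ∈ Set.Ioc (0 : ℝ) 1) (he₁₀val : ∀ x, e₁₀ x ∈ Set.Ioo (0 : ℝ) 1)
    (hp₀ : P[S | MeasurableSpace.comap X inferInstance] =ᵐ[P] fun ω => p₀ (X ω))
    (he₁₀ : P[fun ω => S ω * A ω | MeasurableSpace.comap X inferInstance] =ᵐ[P]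
      fun ω => p₀ (X ω) * e₁₀ (X ω))
    (hg₁₀ : P[fun ω => (if S ω = 1 ∧ A ω = 1 then (1 : ℝ) else 0) * Y ω |
        MeasurableSpace.comap X inferInstance] =ᵐ[P]
      fun ω => p₀ (X ω) * e₁₀ (X ω) * g₁₀ (X ω))
    (hg₀₀ : P[fun ω => (if S ω = 1 ∧ A ω = 0 then (1 : ℝ) else 0) * Y ω |
        MeasurableSpace.comap X inferInstance] =ᵐ[P]
      fun ω => p₀ (X ω) * (1 - e₁₀ (X ω)) * g₀₀ (X ω))
    -- the nuisance estimate components g₁, e₁, p with bounds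
    (Cbar : ℝ) (hCbar : 1 ≤ Cbar)
    (g₁ e₁ p : 𝒳 → ℝ) (hg₁m : Measurable g₁) (he₁m : Measurable e₁) (hpm : Measurable p)
    (he₁val : ∀ x, e₁ x ∈ Set.Ioc (0 : ℝ) 1) (hpval : ∀ x, p x ∈ Set.Ioc (0 : ℝ) 1)
    (hpbound : ∀ x, 1 / Cbar ≤ p x) (he₁bound : ∀ x, 1 / Cbar ≤ e₁ x)
    -- square-integrability of the errors
    (hδg1 : Integrable (fun ω => (g₁ (X ω) - g₁₀ (X ω)) ^ 2) P)
    (hδp : Integrable (fun ω => (p (X ω) - p₀ (X ω)) ^ 2) P)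
    (hδe : Integrable (fun ω => (e₁ (X ω) - e₁₀ (X ω)) ^ 2) P)
    -- positivity constants
    (εp εe : ℝ) (hεp : εp ∈ Set.Ioo (0 : ℝ) 1) (hεe : εe ∈ Set.Ioo (0 : ℝ) 1)
    (hp₀bound : ∀ x, εp ≤ p₀ x) (he₁₀bound : ∀ x, εe ≤ e₁₀ x)
    -- conditional second-moment bound of the outcome residual
    (σb2 : ℝ)
    (hmom : ∀ᵐ ω ∂P,
      (P[fun ω' => (if S ω' = 1 ∧ A ω' = 1 then (1 : ℝ) else 0) * (Y ω' - g₁₀ (X ω')) ^ 2 |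
        MeasurableSpace.comap X inferInstance]) ω ≤ σb2 * p₀ (X ω) * e₁₀ (X ω)) :
    ∫ ω, ((if G (X ω) = i then (1 : ℝ) else 0) *
        (partialSignal X S A Y g₁ e₁ p ω - partialSignal X S A Y g₁₀ e₁₀ p₀ ω)) ^ 2 ∂P ≤
      max ((3 * Cbar ^ 2 + Real.sqrt 2) ^ 2 / (εp * εe))
          ((9 / 4) * σb2 * Cbar ^ 4 / (εp * εe)) *
        (Real.sqrt (∫ ω, (g₁ (X ω) - g₁₀ (X ω)) ^ 2 ∂P) +
          Real.sqrt (∫ ω, (p (X ω) - p₀ (X ω)) ^ 2 ∂P) +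
          Real.sqrt (∫ ω, (e₁ (X ω) - e₁₀ (X ω)) ^ 2 ∂P)) ^ 2 := by
  obtain ⟨hεp0, hεp1⟩ := hεp
  obtain ⟨hεe0, hεe1⟩ := hεe
  have hC0 : (0:ℝ) < Cbar := lt_of_lt_of_le one_pos hCbar
  have hm : MeasurableSpace.comap X inferInstance ≤ ‹MeasurableSpace Ω› := hX.comap_le
  haveI : SigmaFinite (P.trim hm) := by
    have : IsFiniteMeasure (P.trim hm) := isFiniteMeasure_trim hm
    infer_instance
  -- the functions
  set f : 𝒳 → ℝ := fun x => (1 - p x)/(p x * e₁ x) with hfdef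
  set f0 : 𝒳 → ℝ := fun x => (1 - p₀ x)/(p₀ x * e₁₀ x) with hf0def
  set U : Ω → ℝ := fun ω => ((if G (X ω) = i then (1:ℝ) else 0) *
      ((1 - S ω) - S ω * A ω * f (X ω))) * (g₁ (X ω) - g₁₀ (X ω)) with hUdef
  set V : Ω → ℝ := fun ω => (((if G (X ω) = i then (1:ℝ) else 0) * (S ω * A ω)) *
      (f (X ω) - f0 (X ω))) * (Y ω - g₁₀ (X ω)) with hVdef
  set Z : Ω → ℝ := fun ω =>
      (if S ω = 1 ∧ A ω = 1 then (1:ℝ) else 0) * (Y ω - g₁₀ (X ω)) ^ 2 with hZdef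
  set w : 𝒳 → ℝ := fun x => (if G x = i then (1:ℝ) else 0) * (f x - f0 x)^2 with hwdef
  -- basic positivity
  have hppos : ∀ x, 0 < p x := fun x => (hpval x).1
  have he₁pos : ∀ x, 0 < e₁ x := fun x => (he₁val x).1
  have hp₀pos : ∀ x, 0 < p₀ x := fun x => (hp₀val x).1
  have he₁₀pos : ∀ x, 0 < e₁₀ x := fun x => (he₁₀val x).1
  -- pointwise identity
  have hUV : ∀ ω, (if G (X ω) = i then (1 : ℝ) else 0) *
      (partialSignal X S A Y g₁ e₁ p ω - partialSignal X S A Y g₁₀ e₁₀ p₀ ω)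
      = U ω + V ω := fun ω =>
    partialSignal_diff_eq X S A Y g₁ e₁ p g₁₀ e₁₀ p₀ _ ω
      (hppos (X ω)).ne' (he₁pos (X ω)).ne' (hp₀pos (X ω)).ne' (he₁₀pos (X ω)).ne'
  -- measurability
  have hsetG : MeasurableSet {ω | G (X ω) = i} := (hG.comp hX) (measurableSet_singleton i)
  have hχm : Measurable (fun ω => (if G (X ω) = i then (1:ℝ) else 0)) :=
    Measurable.ite hsetG measurable_const measurable_const
  have hfm : Measurable f := (measurable_const.sub hpm).div (hpm.mul he₁m)
  have hf0m : Measurable f0 := (measurable_const.sub hp₀m).div (hp₀m.mul he₁₀m)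
  have hsetSA : MeasurableSet {ω | S ω = 1 ∧ A ω = 1} := by
    have : {ω | S ω = 1 ∧ A ω = 1} = {ω | S ω = 1} ∩ {ω | A ω = 1} := rfl
    rw [this]
    exact (hS (measurableSet_singleton 1)).inter (hA (measurableSet_singleton 1))
  have hUm : Measurable U := by
    apply Measurable.mul
    · exact hχm.mul ((measurable_const.sub hS).sub ((hS.mul hA).mul (hfm.comp hX)))
    · exact (hg₁m.comp hX).sub (hg₁₀m.comp hX)
  have hVm : Measurable V := by
    apply Measurable.mul
    · exact ((hχm.mul (hS.mul hA))).mul ((hfm.comp hX).sub (hf0m.comp hX))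
    · exact hY.sub (hg₁₀m.comp hX)
  have hZm : Measurable Z :=
    (Measurable.ite hsetSA measurable_const measurable_const).mul
      ((hY.sub (hg₁₀m.comp hX)).pow_const 2)
  have hwm : Measurable w :=
    (Measurable.ite (hG (measurableSet_singleton i)) measurable_const measurable_const).mul
      ((hfm.sub hf0m).pow_const 2)
  -- range bounds for f and f0
  have hfr : ∀ x, 0 ≤ f x ∧ f x ≤ Cbar^2 := by
    intro x
    have h1 : 1 ≤ p x * Cbar := by
      have := (div_le_iff₀ hC0).mp (hpbound x); linarith
    have h2 : 1 ≤ e₁ x * Cbar := by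
      have := (div_le_iff₀ hC0).mp (he₁bound x); linarith
    constructor
    · exact div_nonneg (by linarith [(hpval x).2]) (mul_pos (hppos x) (he₁pos x)).le
    · rw [hfdef]
      rw [div_le_iff₀ (mul_pos (hppos x) (he₁pos x))]
      nlinarith [(hpval x).2, (hpval x).1, (he₁val x).1]
  have hf0r : ∀ x, 0 ≤ f0 x ∧ f0 x ≤ (εp*εe)⁻¹ := by
    intro x
    constructor
    · exact div_nonneg (by linarith [(hp₀val x).2]) (mul_pos (hp₀pos x) (he₁₀pos x)).le
    · rw [hf0def]
      rw [div_le_iff₀ (mul_pos (hp₀pos x) (he₁₀pos x))]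
      have h5 : εp*εe ≤ p₀ x * e₁₀ x :=
        mul_le_mul (hp₀bound x) (he₁₀bound x) hεe0.le (hp₀pos x).le
      have h6 := mul_le_mul_of_nonneg_left h5
        (inv_nonneg.mpr (mul_pos hεp0 hεe0).le)
      rw [inv_mul_cancel₀ (mul_pos hεp0 hεe0).ne'] at h6
      calc 1 - p₀ x ≤ 1 := by linarith [(hp₀val x).1]
        _ ≤ (εp*εe)⁻¹ * (p₀ x * e₁₀ x) := h6
  -- bound on U
  have hUb : ∀ ω, U ω^2 ≤ Cbar^4 * (g₁ (X ω) - g₁₀ (X ω))^2 := by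
    intro ω
    have hcoef : |(if G (X ω) = i then (1:ℝ) else 0) *
        ((1 - S ω) - S ω * A ω * f (X ω))| ≤ Cbar^2 := by
      rw [abs_mul]
      have hc1 : |(if G (X ω) = i then (1:ℝ) else 0)| ≤ 1 := by
        split <;> simp
      have hc2 : |(1 - S ω) - S ω * A ω * f (X ω)| ≤ Cbar^2 := by
        have hf := hfr (X ω)
        rcases hSval ω with h | h
        · rw [h, show (1:ℝ) - 0 - 0 * A ω * f (X ω) = 1 from by ring, abs_one]
          nlinarith
        · rw [h]
          rcases hAval ω with h' | h'
          · rw [h', show (1:ℝ) - 1 - 1 * 0 * f (X ω) = 0 from by ring, abs_zero]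
            positivity
          · rw [h', show (1:ℝ) - 1 - 1 * 1 * f (X ω) = -(f (X ω)) from by ring, abs_neg,
              abs_of_nonneg hf.1]
            exact hf.2
      calc |(if G (X ω) = i then (1:ℝ) else 0)| * |(1 - S ω) - S ω * A ω * f (X ω)|
          ≤ 1 * (Cbar^2) := mul_le_mul hc1 hc2 (abs_nonneg _) zero_le_one
        _ = Cbar^2 := one_mul _
    have he : U ω^2 = ((if G (X ω) = i then (1:ℝ) else 0) *
        ((1 - S ω) - S ω * A ω * f (X ω)))^2 * (g₁ (X ω) - g₁₀ (X ω))^2 := by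
      simp only [hUdef]; ring
    rw [he]
    have hsq : ((if G (X ω) = i then (1:ℝ) else 0) *
        ((1 - S ω) - S ω * A ω * f (X ω)))^2 ≤ Cbar^4 := by
      rw [← sq_abs]
      calc |(if G (X ω) = i then (1:ℝ) else 0) * ((1 - S ω) - S ω * A ω * f (X ω))|^2
          ≤ (Cbar^2)^2 := pow_le_pow_left₀ (abs_nonneg _) hcoef 2
        _ = Cbar^4 := by ring
    exact mul_le_mul_of_nonneg_right hsq (sq_nonneg _)
  -- V² = w(X) * Z
  have hV2eq : ∀ ω, V ω^2 = w (X ω) * Z ω := by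
    intro ω
    simp only [hVdef, hwdef, hZdef]
    rcases hSval ω with h | h
    · have hne : ¬(S ω = 1 ∧ A ω = 1) := by
        rintro ⟨h1, -⟩; rw [h] at h1; norm_num at h1
      rw [if_neg hne, h]
      ring
    · rcases hAval ω with h' | h'
      · have hne : ¬(S ω = 1 ∧ A ω = 1) := by
          rintro ⟨-, h1⟩; rw [h'] at h1; norm_num at h1
        rw [if_neg hne, h, h']
        ring
      · rw [h, h', if_pos (show (1:ℝ) = 1 ∧ (1:ℝ) = 1 from ⟨rfl, rfl⟩)]
        by_cases hg : G (X ω) = i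
        · rw [if_pos hg]; ring
        · rw [if_neg hg]; ring
  -- integrability of U², Z, V²
  have hU2int : Integrable (fun ω => U ω^2) P := by
    refine Integrable.mono (hδg1.const_mul (Cbar^4)) (hUm.pow_const 2).aestronglyMeasurable ?_
    filter_upwards with ω
    rw [Real.norm_eq_abs, Real.norm_eq_abs, abs_of_nonneg (sq_nonneg _),
      abs_of_nonneg (by positivity : (0:ℝ) ≤ Cbar^4 * (g₁ (X ω) - g₁₀ (X ω))^2)]
    exact hUb ω
  have hZint : Integrable Z P := by
    have hWm : Measurable (fun ω => (if S ω = 1 ∧ A ω = 1 then (1:ℝ) else 0) * Y ω) :=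
      (Measurable.ite hsetSA measurable_const measurable_const).mul hY
    have hW2 : MemLp (fun ω => (if S ω = 1 ∧ A ω = 1 then (1:ℝ) else 0) * Y ω) 2 P := by
      refine MemLp.of_le hY2 hWm.aestronglyMeasurable ?_
      filter_upwards with ω
      rw [Real.norm_eq_abs, Real.norm_eq_abs, abs_mul]
      have h1 : |(if S ω = 1 ∧ A ω = 1 then (1:ℝ) else 0)| ≤ 1 := by split <;> simp
      exact mul_le_of_le_one_left (abs_nonneg _) h1
    have hcond2 : MemLp (P[fun ω => (if S ω = 1 ∧ A ω = 1 then (1:ℝ) else 0) * Y ω |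
        MeasurableSpace.comap X inferInstance]) 2 P := memLp_two_condexp_aux hm P hW2
    have hpeg : MemLp (fun ω => p₀ (X ω) * e₁₀ (X ω) * g₁₀ (X ω)) 2 P := hcond2.ae_eq hg₁₀
    have hg10X2 : MemLp (fun ω => g₁₀ (X ω)) 2 P := by
      refine MemLp.of_le_mul (c := (εp*εe)⁻¹) hpeg (hg₁₀m.comp hX).aestronglyMeasurable ?_
      filter_upwards with ω
      rw [Real.norm_eq_abs, Real.norm_eq_abs, abs_mul, abs_mul,
        abs_of_nonneg (hp₀pos (X ω)).le, abs_of_nonneg (he₁₀pos (X ω)).le]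
      have key : εp * εe * |g₁₀ (X ω)| ≤ p₀ (X ω) * e₁₀ (X ω) * |g₁₀ (X ω)| := by
        apply mul_le_mul_of_nonneg_right _ (abs_nonneg _)
        exact mul_le_mul (hp₀bound (X ω)) (he₁₀bound (X ω)) hεe0.le (hp₀pos (X ω)).le
      calc |g₁₀ (X ω)| = (εp*εe)⁻¹ * (εp * εe * |g₁₀ (X ω)|) := by
            rw [← mul_assoc, inv_mul_cancel₀ (mul_pos hεp0 hεe0).ne', one_mul]
        _ ≤ (εp*εe)⁻¹ * (p₀ (X ω) * e₁₀ (X ω) * |g₁₀ (X ω)|) :=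
            mul_le_mul_of_nonneg_left key (inv_nonneg.mpr (mul_pos hεp0 hεe0).le)
    have hYg2 : MemLp (fun ω => Y ω - g₁₀ (X ω)) 2 P := hY2.sub hg10X2
    have hYgsq : Integrable (fun ω => (Y ω - g₁₀ (X ω))^2) P := hYg2.integrable_sq
    refine Integrable.mono hYgsq hZm.aestronglyMeasurable ?_
    filter_upwards with ω
    simp only [hZdef]
    rw [Real.norm_eq_abs, Real.norm_eq_abs, abs_mul,
      abs_of_nonneg (sq_nonneg (Y ω - g₁₀ (X ω)))]
    have h1 : |(if S ω = 1 ∧ A ω = 1 then (1:ℝ) else 0)| ≤ 1 := by split <;> simp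
    exact mul_le_of_le_one_left (sq_nonneg _) h1
  -- bound on w
  have hM2 : ∀ x, 0 ≤ w x ∧ w x ≤ (Cbar^2 + (εp*εe)⁻¹)^2 := by
    intro x
    have hf := hfr x
    have hf0 := hf0r x
    have habs : |f x - f0 x| ≤ Cbar^2 + (εp*εe)⁻¹ := by
      rw [abs_sub_le_iff]
      constructor <;> nlinarith [hf.1, hf.2, hf0.1, hf0.2]
    have hsq : (f x - f0 x)^2 ≤ (Cbar^2 + (εp*εe)⁻¹)^2 := by
      rw [← sq_abs]
      exact pow_le_pow_left₀ (abs_nonneg _) habs 2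
    constructor
    · simp only [hwdef]
      split
      · simpa using sq_nonneg (f x - f0 x)
      · simp
    · simp only [hwdef]
      split
      · simpa using hsq
      · simp only [zero_mul]
        positivity
  have hwXZint : Integrable ((fun ω => w (X ω)) * Z) P := by
    refine Integrable.bdd_mul (c := (Cbar^2 + (εp*εe)⁻¹)^2) hZint
      (hwm.comp hX).aestronglyMeasurable ?_
    filter_upwards with ω
    rw [Real.norm_eq_abs, abs_of_nonneg (hM2 (X ω)).1]
    exact (hM2 (X ω)).2
  have hZnn : ∀ ω, 0 ≤ Z ω := by
    intro ω
    simp only [hZdef]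
    split
    · simpa using sq_nonneg (Y ω - g₁₀ (X ω))
    · simp
  have hV2int : Integrable (fun ω => V ω^2) P := by
    refine Integrable.mono (hZint.const_mul ((Cbar^2 + (εp*εe)⁻¹)^2))
      (hVm.pow_const 2).aestronglyMeasurable ?_
    filter_upwards with ω
    rw [Real.norm_eq_abs, Real.norm_eq_abs, abs_of_nonneg (sq_nonneg _),
      abs_of_nonneg (by positivity : (0:ℝ) ≤ (Cbar^2 + (εp*εe)⁻¹)^2 * Z ω), hV2eq ω]
    exact mul_le_mul_of_nonneg_right (hM2 (X ω)).2 (hZnn ω)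
  -- σb2 is nonneg
  have hσnn : 0 ≤ σb2 := by
    have hcnn : 0 ≤ᵐ[P] P[Z | MeasurableSpace.comap X inferInstance] :=
      condExp_nonneg (Eventually.of_forall hZnn)
    haveI : (MeasureTheory.ae P).NeBot := ae_neBot.mpr (IsProbabilityMeasure.ne_zero P)
    obtain ⟨ω, h1, h2⟩ := (hcnn.and hmom).exists
    have h3 : 0 ≤ σb2 * p₀ (X ω) * e₁₀ (X ω) := le_trans h1 h2
    by_contra hneg
    push_neg at hneg
    nlinarith [mul_pos (hp₀pos (X ω)) (he₁₀pos (X ω)), h3]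
  -- integrals
  set b := ∫ ω, (p (X ω) - p₀ (X ω)) ^ 2 ∂P with hbdef
  set cc := ∫ ω, (e₁ (X ω) - e₁₀ (X ω)) ^ 2 ∂P with hcdef
  set a := ∫ ω, (g₁ (X ω) - g₁₀ (X ω)) ^ 2 ∂P with hadef
  have hann : 0 ≤ a := integral_nonneg (fun ω => sq_nonneg _)
  have hbnn : 0 ≤ b := integral_nonneg (fun ω => sq_nonneg _)
  have hcnn : 0 ≤ cc := integral_nonneg (fun ω => sq_nonneg _)
  -- ∫ (|δp|+|δe|)² ≤ (√b+√cc)²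
  have hsum2int : Integrable (fun ω => (|p (X ω) - p₀ (X ω)| + |e₁ (X ω) - e₁₀ (X ω)|)^2) P := by
    refine Integrable.mono ((hδp.add hδe).const_mul 2)
      (((((hpm.comp hX).sub (hp₀m.comp hX)).abs.add
        (((he₁m.comp hX).sub (he₁₀m.comp hX)).abs)).pow_const 2).aestronglyMeasurable) ?_
    filter_upwards with ω
    simp only [Pi.add_apply, Real.norm_eq_abs]
    rw [abs_of_nonneg (by positivity : (0:ℝ) ≤
        (|p (X ω) - p₀ (X ω)| + |e₁ (X ω) - e₁₀ (X ω)|)^2),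
      abs_of_nonneg (by positivity : (0:ℝ) ≤
        2 * ((p (X ω) - p₀ (X ω))^2 + (e₁ (X ω) - e₁₀ (X ω))^2))]
    nlinarith [sq_abs (p (X ω) - p₀ (X ω)), sq_abs (e₁ (X ω) - e₁₀ (X ω)),
      sq_nonneg (|p (X ω) - p₀ (X ω)| - |e₁ (X ω) - e₁₀ (X ω)|)]
  have habc : ∫ ω, (|p (X ω) - p₀ (X ω)| + |e₁ (X ω) - e₁₀ (X ω)|)^2 ∂P ≤
      (Real.sqrt b + Real.sqrt cc)^2 := by
    have hpabs : Integrable (fun ω => |p (X ω) - p₀ (X ω)|^2) P := by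
      refine hδp.congr ?_
      filter_upwards with ω
      rw [sq_abs]
    have heabs : Integrable (fun ω => |e₁ (X ω) - e₁₀ (X ω)|^2) P := by
      refine hδe.congr ?_
      filter_upwards with ω
      rw [sq_abs]
    have hum : AEStronglyMeasurable (fun ω => |p (X ω) - p₀ (X ω)|) P :=
      (((hpm.comp hX).sub (hp₀m.comp hX)).abs).aestronglyMeasurable
    have hvm : AEStronglyMeasurable (fun ω => |e₁ (X ω) - e₁₀ (X ω)|) P :=
      (((he₁m.comp hX).sub (he₁₀m.comp hX)).abs).aestronglyMeasurable
    have hcross : Integrable (fun ω => |p (X ω) - p₀ (X ω)| * |e₁ (X ω) - e₁₀ (X ω)|) P :=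
      integrable_mul_of_sq_aux hum hvm hpabs heabs
    have hCS2 : ∫ ω, |p (X ω) - p₀ (X ω)| * |e₁ (X ω) - e₁₀ (X ω)| ∂P ≤
        Real.sqrt b * Real.sqrt cc := by
      have h0 := integral_mul_le_sqrt_aux hum hvm hpabs heabs
      have e2 : (∫ ω, |p (X ω) - p₀ (X ω)|^2 ∂P) = b := by
        rw [hbdef]
        apply integral_congr_ae
        filter_upwards with ω
        rw [sq_abs]
      have e3 : (∫ ω, |e₁ (X ω) - e₁₀ (X ω)|^2 ∂P) = cc := by
        rw [hcdef]
        apply integral_congr_ae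
        filter_upwards with ω
        rw [sq_abs]
      rw [e2, e3] at h0
      exact h0
    have hexp : ∫ ω, (|p (X ω) - p₀ (X ω)| + |e₁ (X ω) - e₁₀ (X ω)|)^2 ∂P =
        b + (2 * (∫ ω, |p (X ω) - p₀ (X ω)| * |e₁ (X ω) - e₁₀ (X ω)| ∂P) + cc) := by
      calc ∫ ω, (|p (X ω) - p₀ (X ω)| + |e₁ (X ω) - e₁₀ (X ω)|)^2 ∂P
          = ∫ ω, ((p (X ω) - p₀ (X ω))^2 +
              (2 * (|p (X ω) - p₀ (X ω)| * |e₁ (X ω) - e₁₀ (X ω)|) +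
              (e₁ (X ω) - e₁₀ (X ω))^2)) ∂P := by
            apply integral_congr_ae
            filter_upwards with ω
            nlinarith [sq_abs (p (X ω) - p₀ (X ω)), sq_abs (e₁ (X ω) - e₁₀ (X ω))]
        _ = b + (2 * (∫ ω, |p (X ω) - p₀ (X ω)| * |e₁ (X ω) - e₁₀ (X ω)| ∂P) + cc) := by
            have i1 : Integrable (fun ω =>
                2 * (|p (X ω) - p₀ (X ω)| * |e₁ (X ω) - e₁₀ (X ω)|)) P :=
              hcross.const_mul 2
            have i2 : Integrable (fun ω =>
                2 * (|p (X ω) - p₀ (X ω)| * |e₁ (X ω) - e₁₀ (X ω)|) +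
                (e₁ (X ω) - e₁₀ (X ω))^2) P := i1.add hδe
            rw [integral_add hδp i2, integral_add i1 hδe, integral_const_mul]
    rw [hexp]
    have hb2 : Real.sqrt b ^ 2 = b := Real.sq_sqrt hbnn
    have hc2 : Real.sqrt cc ^ 2 = cc := Real.sq_sqrt hcnn
    nlinarith [hCS2]
  -- shared integrability
  have hmid_int : Integrable (fun ω => w (X ω) * (σb2 * p₀ (X ω) * e₁₀ (X ω))) P := by
    refine (integrable_const ((Cbar^2 + (εp*εe)⁻¹)^2 * |σb2|)).mono'
      ((hwm.comp hX).mul ((measurable_const.mul (hp₀m.comp hX)).mul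
        (he₁₀m.comp hX))).aestronglyMeasurable ?_
    filter_upwards with ω
    rw [Real.norm_eq_abs, abs_mul]
    have h1 : |w (X ω)| ≤ (Cbar^2 + (εp*εe)⁻¹)^2 := by
      rw [abs_of_nonneg (hM2 (X ω)).1]; exact (hM2 (X ω)).2
    have h2 : |σb2 * p₀ (X ω) * e₁₀ (X ω)| ≤ |σb2| := by
      rw [abs_mul, abs_mul, abs_of_nonneg (hp₀pos (X ω)).le,
        abs_of_nonneg (he₁₀pos (X ω)).le]
      have w1 : 0 ≤ |σb2| * p₀ (X ω) * (1 - e₁₀ (X ω)) := by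
        apply mul_nonneg (mul_nonneg (abs_nonneg _) (hp₀pos (X ω)).le)
        linarith [(he₁₀val (X ω)).2]
      have w2 : 0 ≤ |σb2| * (1 - p₀ (X ω)) := by
        apply mul_nonneg (abs_nonneg _)
        linarith [(hp₀val (X ω)).2]
      nlinarith [w1, w2]
    exact mul_le_mul h1 h2 (abs_nonneg _) (by positivity)
  have hIV : ∫ ω, V ω^2 ∂P ≤ σb2 * (Cbar^4/(εp*εe)) * (Real.sqrt b + Real.sqrt cc)^2 := by
    have hwX_sm : StronglyMeasurable[MeasurableSpace.comap X inferInstance]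
        (fun ω => w (X ω)) := by
      have hXm : Measurable[MeasurableSpace.comap X inferInstance] X :=
        Measurable.of_comap_le le_rfl
      exact (hwm.comp hXm).stronglyMeasurable
    have hpull := condExp_mul_of_stronglyMeasurable_left (m := MeasurableSpace.comap X inferInstance)
      hwX_sm hwXZint hZint
    have hmono1 : ∫ ω, w (X ω) * (P[Z | MeasurableSpace.comap X inferInstance]) ω ∂P ≤
        ∫ ω, w (X ω) * (σb2 * p₀ (X ω) * e₁₀ (X ω)) ∂P := by
      refine integral_mono_ae ?_ hmid_int ?_
      · refine Integrable.bdd_mul (c := (Cbar^2 + (εp*εe)⁻¹)^2) integrable_condExp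
          (hwm.comp hX).aestronglyMeasurable ?_
        filter_upwards with ω
        rw [Real.norm_eq_abs, abs_of_nonneg (hM2 (X ω)).1]
        exact (hM2 (X ω)).2
      · filter_upwards [hmom] with ω h
        exact mul_le_mul_of_nonneg_left h (hM2 (X ω)).1
    have hmono2 : ∫ ω, w (X ω) * (σb2 * p₀ (X ω) * e₁₀ (X ω)) ∂P ≤
        ∫ ω, σb2 * (Cbar^4/(εp*εe)) *
          ((|p (X ω) - p₀ (X ω)| + |e₁ (X ω) - e₁₀ (X ω)|)^2) ∂P := by
      refine integral_mono_ae hmid_int (hsum2int.const_mul _) ?_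
      filter_upwards with ω
      have hk := key_alg (pp := p (X ω)) (p₀ := p₀ (X ω)) (e₁ := e₁ (X ω))
        (e₁₀ := e₁₀ (X ω)) hCbar (hpval (X ω)).2 (hpbound (X ω)) (he₁val (X ω)).2
        (he₁bound (X ω)) (hp₀bound (X ω)) (hp₀val (X ω)).2 (he₁₀bound (X ω))
        (he₁₀val (X ω)).2.le hεp0 hεe0
    
      have hk' : (f (X ω) - f0 (X ω))^2 * (p₀ (X ω) * e₁₀ (X ω)) ≤
          Cbar^4/(εp*εe) * (|p (X ω) - p₀ (X ω)| + |e₁ (X ω) - e₁₀ (X ω)|)^2 := by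
        simp only [hfdef, hf0def]
        exact hk
      have hw_le : w (X ω) * (p₀ (X ω) * e₁₀ (X ω)) ≤
          (f (X ω) - f0 (X ω))^2 * (p₀ (X ω) * e₁₀ (X ω)) := by
        apply mul_le_mul_of_nonneg_right _
          (mul_pos (hp₀pos (X ω)) (he₁₀pos (X ω))).le
        simp only [hwdef]
        split
        · simp
        · simpa using sq_nonneg (f (X ω) - f0 (X ω))
      calc w (X ω) * (σb2 * p₀ (X ω) * e₁₀ (X ω))
          = σb2 * (w (X ω) * (p₀ (X ω) * e₁₀ (X ω))) := by ring
        _ ≤ σb2 * ((f (X ω) - f0 (X ω))^2 * (p₀ (X ω) * e₁₀ (X ω))) :=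
            mul_le_mul_of_nonneg_left hw_le hσnn
        _ ≤ σb2 * (Cbar^4/(εp*εe) *
            (|p (X ω) - p₀ (X ω)| + |e₁ (X ω) - e₁₀ (X ω)|)^2) :=
            mul_le_mul_of_nonneg_left hk' hσnn
        _ = σb2 * (Cbar^4/(εp*εe)) *
            ((|p (X ω) - p₀ (X ω)| + |e₁ (X ω) - e₁₀ (X ω)|)^2) := by ring
    calc ∫ ω, V ω^2 ∂P
        = ∫ ω, ((fun ω' => w (X ω')) * Z) ω ∂P := by
          apply integral_congr_ae
          filter_upwards with ω
          rw [hV2eq ω]; rfl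
      _ = ∫ ω, (P[(fun ω' => w (X ω')) * Z | MeasurableSpace.comap X inferInstance]) ω ∂P :=
          (integral_condExp hm).symm
      _ = ∫ ω, w (X ω) * (P[Z | MeasurableSpace.comap X inferInstance]) ω ∂P := by
          apply integral_congr_ae
          filter_upwards [hpull] with ω h
          rw [h]; rfl
      _ ≤ ∫ ω, w (X ω) * (σb2 * p₀ (X ω) * e₁₀ (X ω)) ∂P := hmono1
      _ ≤ ∫ ω, σb2 * (Cbar^4/(εp*εe)) *
            ((|p (X ω) - p₀ (X ω)| + |e₁ (X ω) - e₁₀ (X ω)|)^2) ∂P := hmono2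
      _ = σb2 * (Cbar^4/(εp*εe)) *
            ∫ ω, (|p (X ω) - p₀ (X ω)| + |e₁ (X ω) - e₁₀ (X ω)|)^2 ∂P := by
          rw [integral_const_mul]
      _ ≤ σb2 * (Cbar^4/(εp*εe)) * (Real.sqrt b + Real.sqrt cc)^2 := by
          apply mul_le_mul_of_nonneg_left habc
          positivity
  -- the U² integral bound
  have hIU : ∫ ω, U ω^2 ∂P ≤ Cbar^4 * a := by
    calc ∫ ω, U ω^2 ∂P ≤ ∫ ω, Cbar^4 * (g₁ (X ω) - g₁₀ (X ω))^2 ∂P :=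
          integral_mono hU2int (hδg1.const_mul _) hUb
      _ = Cbar^4 * a := by rw [integral_const_mul]
  -- expansion of the main integral
  have hUVint : Integrable (fun ω => U ω * V ω) P :=
    integrable_mul_of_sq_aux hUm.aestronglyMeasurable hVm.aestronglyMeasurable hU2int hV2int
  have hmain_eq : ∫ ω, ((if G (X ω) = i then (1 : ℝ) else 0) *
      (partialSignal X S A Y g₁ e₁ p ω - partialSignal X S A Y g₁₀ e₁₀ p₀ ω)) ^ 2 ∂P =
      (∫ ω, U ω^2 ∂P) + (2 * ∫ ω, U ω * V ω ∂P + ∫ ω, V ω^2 ∂P) := by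
    calc ∫ ω, ((if G (X ω) = i then (1 : ℝ) else 0) *
        (partialSignal X S A Y g₁ e₁ p ω - partialSignal X S A Y g₁₀ e₁₀ p₀ ω)) ^ 2 ∂P
        = ∫ ω, (U ω^2 + (2 * (U ω * V ω) + V ω^2)) ∂P := by
          apply integral_congr_ae
          filter_upwards with ω
          rw [hUV ω]; ring
      _ = (∫ ω, U ω^2 ∂P) + (2 * ∫ ω, U ω * V ω ∂P + ∫ ω, V ω^2 ∂P) := by
          have i1 : Integrable (fun ω => 2 * (U ω * V ω)) P := hUVint.const_mul 2
          have i2 : Integrable (fun ω => 2 * (U ω * V ω) + V ω^2) P := i1.add hV2int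
          rw [integral_add hU2int i2, integral_add i1 hV2int, integral_const_mul]
  have hCS : ∫ ω, U ω * V ω ∂P ≤
      Real.sqrt (∫ ω, U ω^2 ∂P) * Real.sqrt (∫ ω, V ω^2 ∂P) :=
    integral_mul_le_sqrt_aux hUm.aestronglyMeasurable hVm.aestronglyMeasurable hU2int hV2int
  -- final numeric assembly
  set Cmax := max ((3 * Cbar ^ 2 + Real.sqrt 2) ^ 2 / (εp * εe))
      ((9 / 4) * σb2 * Cbar ^ 4 / (εp * εe)) with hCmaxdef
  have hCmaxnn : 0 ≤ Cmax :=
    le_trans (div_nonneg (sq_nonneg _) (mul_pos hεp0 hεe0).le) (le_max_left _ _)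
  set s := Real.sqrt Cmax with hsdef
  have hs2 : s^2 = Cmax := Real.sq_sqrt hCmaxnn
  have hsnn : 0 ≤ s := Real.sqrt_nonneg _
  have hεpe1 : εp * εe ≤ 1 := by nlinarith
  have hs1 : Cbar^2 ≤ s := by
    rw [hsdef, show Cbar^2 = Real.sqrt ((Cbar^2)^2) from (Real.sqrt_sq (by positivity)).symm]
    apply Real.sqrt_le_sqrt
    refine le_trans ?_ (le_max_left _ _)
    rw [le_div_iff₀ (mul_pos hεp0 hεe0)]
    have h7 : (Cbar^2)^2 * (εp*εe) ≤ (Cbar^2)^2 :=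
      mul_le_of_le_one_right (by positivity) hεpe1
    nlinarith [Real.sqrt_nonneg 2, sq_nonneg Cbar]
  have hsV : Real.sqrt (σb2 * (Cbar^4/(εp*εe))) ≤ s := by
    rw [hsdef]
    apply Real.sqrt_le_sqrt
    refine le_trans ?_ (le_max_right _ _)
    have e4 : σb2 * (Cbar^4/(εp*εe)) = σb2 * Cbar^4/(εp*εe) := by ring
    rw [e4, div_le_div_iff₀ (mul_pos hεp0 hεe0) (mul_pos hεp0 hεe0)]
    nlinarith [mul_nonneg (mul_nonneg hσnn (pow_pos hC0 4).le) (mul_pos hεp0 hεe0).le]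
  have hsqU : Real.sqrt (∫ ω, U ω^2 ∂P) ≤ s * Real.sqrt a := by
    calc Real.sqrt (∫ ω, U ω^2 ∂P) ≤ Real.sqrt (Cbar^4 * a) := Real.sqrt_le_sqrt hIU
      _ = Cbar^2 * Real.sqrt a := by
          rw [Real.sqrt_mul (by positivity) a,
            show Cbar^4 = (Cbar^2)^2 from by ring, Real.sqrt_sq (by positivity)]
      _ ≤ s * Real.sqrt a := mul_le_mul_of_nonneg_right hs1 (Real.sqrt_nonneg a)
  have hsqV : Real.sqrt (∫ ω, V ω^2 ∂P) ≤ s * (Real.sqrt b + Real.sqrt cc) := by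
    calc Real.sqrt (∫ ω, V ω^2 ∂P)
        ≤ Real.sqrt (σb2 * (Cbar^4/(εp*εe)) * (Real.sqrt b + Real.sqrt cc)^2) :=
          Real.sqrt_le_sqrt hIV
      _ = Real.sqrt (σb2 * (Cbar^4/(εp*εe))) * (Real.sqrt b + Real.sqrt cc) := by
          rw [Real.sqrt_mul (by positivity) ((Real.sqrt b + Real.sqrt cc)^2),
            Real.sqrt_sq (by positivity)]
      _ ≤ s * (Real.sqrt b + Real.sqrt cc) :=
          mul_le_mul_of_nonneg_right hsV (by positivity)
  have hInn : 0 ≤ ∫ ω, U ω^2 ∂P := integral_nonneg (fun ω => sq_nonneg _)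
  have hInn' : 0 ≤ ∫ ω, V ω^2 ∂P := integral_nonneg (fun ω => sq_nonneg _)
  have hfinal : (∫ ω, U ω^2 ∂P) + (2 * ∫ ω, U ω * V ω ∂P + ∫ ω, V ω^2 ∂P) ≤
      (Real.sqrt (∫ ω, U ω^2 ∂P) + Real.sqrt (∫ ω, V ω^2 ∂P))^2 := by
    have h1 : Real.sqrt (∫ ω, U ω^2 ∂P)^2 = ∫ ω, U ω^2 ∂P := Real.sq_sqrt hInn
    have h2 : Real.sqrt (∫ ω, V ω^2 ∂P)^2 = ∫ ω, V ω^2 ∂P := Real.sq_sqrt hInn'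
    nlinarith [hCS]
  rw [hmain_eq]
  calc (∫ ω, U ω^2 ∂P) + (2 * ∫ ω, U ω * V ω ∂P + ∫ ω, V ω^2 ∂P)
      ≤ (Real.sqrt (∫ ω, U ω^2 ∂P) + Real.sqrt (∫ ω, V ω^2 ∂P))^2 := hfinal
    _ ≤ (s * Real.sqrt a + s * (Real.sqrt b + Real.sqrt cc))^2 := by
        apply pow_le_pow_left₀ (by positivity)
        exact add_le_add hsqU hsqV
    _ = s^2 * (Real.sqrt a + (Real.sqrt b + Real.sqrt cc))^2 := by ring
    _ = Cmax * (Real.sqrt a + Real.sqrt b + Real.sqrt cc)^2 := by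
        rw [hs2]; ring
end
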